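/- arXiv:1408.3137 — 10 statements merged into one kernel-verified Lean document; each statement's English description precedes it below -/
import Mathlib

section
/- Let k ≥ 3 and n ≥ 2. Let G1 be the subgraph of K_k^n whose edges are: all pairs {u,w} with u ∈ V_1, w ∈ V_2 except the single pair {v_1^1, v_2^1}, together with all pairs joining each vertex of V_3 ∪ ... ∪ V_k to both v_1^1 and v_2^1. Then G1 is a K_3-saturated subgraph of K_k^n and the number of edges of G1 equals 2kn + n^2 − 4n − 1. -/
/-!
Every edge of `G1` joins `V_1` to `V_2`, or joins some vertex of `V_3 ∪ ⋯ ∪ V_k` to one of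
`a = v_1^1`, `b = v_2^1`; as `a` and `b` are not adjacent, `G1` has no triangle. Any missing edge
of `K_k^n` closes a triangle through a common neighbour: through a vertex of `V_3` for the pair
`{a, b}`, through `b` or `a` for a pair meeting `V_3 ∪ ⋯ ∪ V_k`. Writing `G1 = fromRel R` for an
asymmetric `R`, the edges of `G1` are in bijection with the pairs in `R`, of which there are
`(n² - 1) + 2n(k - 2)`.
-/

open SimpleGraph

/-- The complete balanced `k`-partite graph with partite sets `V_i = {i} × Fin n`. -/
def multipartite (k n : ℕ) : SimpleGraph (Fin k × Fin n) where
  Adj u w := u.1 ≠ w.1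
  symm := ⟨fun _ _ h => h.symm⟩
  loopless := ⟨fun _ h => h rfl⟩

/-- `J` is a `K_t`-saturated subgraph of `G`. -/
def IsSatIn {V : Type*} (t : ℕ) (J G : SimpleGraph V) : Prop :=
  J ≤ G ∧ J.CliqueFree t ∧
    ∀ u w : V, G.Adj u w → ¬ J.Adj u w →
      ¬ (J ⊔ SimpleGraph.fromEdgeSet {s(u, w)}).CliqueFree t

lemma ncard_edgeSet_fromRel_of_asymm {V : Type*} (R : V → V → Prop)
    (hR : ∀ u w, R u w → ¬ R w u) :
    (fromRel R).edgeSet.ncard = {p : V × V | R p.1 p.2}.ncard := by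
  have hne : ∀ u w, R u w → u ≠ w := by
    rintro u w h rfl
    exact hR u u h h
  have himage : (fromRel R).edgeSet = (fun p : V × V => s(p.1, p.2)) '' {p | R p.1 p.2} := by
    ext e
    induction e using Sym2.ind with
    | _ u w =>
      simp only [mem_edgeSet, fromRel_adj, Set.mem_image, Set.mem_ofPred_eq, Prod.exists,
        Sym2.eq_iff]
      constructor
      · rintro ⟨-, h | h⟩
        exacts [⟨u, w, h, .inl ⟨rfl, rfl⟩⟩, ⟨w, u, h, .inr ⟨rfl, rfl⟩⟩]
      · rintro ⟨a, b, h, ⟨rfl, rfl⟩ | ⟨rfl, rfl⟩⟩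
        exacts [⟨hne _ _ h, .inl h⟩, ⟨(hne _ _ h).symm, .inr h⟩]
  rw [himage, Set.InjOn.ncard_image]
  rintro ⟨a, b⟩ hab ⟨c, d⟩ hcd heq
  rcases Sym2.eq_iff.mp heq with ⟨rfl, rfl⟩ | ⟨rfl, rfl⟩
  · rfl
  · exact absurd hcd (hR _ _ hab)

lemma not_cliqueFree_three_sup_edge_of_adj {V : Type*} {G : SimpleGraph V} {u w x : V}
    (huw : u ≠ w) (hu : G.Adj x u) (hw : G.Adj x w) : ¬ (G ⊔ edge u w).CliqueFree 3 := by
  classical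
  exact fun h => h {x, u, w} <| is3Clique_triple_iff.mpr
    ⟨.inl hu, .inl hw, .inr ((edge_adj ..).mpr ⟨.inl ⟨rfl, rfl⟩, huw⟩)⟩

namespace ConstructionOne

variable {k n : ℕ}

/-- Each edge of `G1` is listed once, oriented from `V_1` to `V_2` or from `V_3 ∪ ⋯ ∪ V_k` to
`{a, b}`; classes are `0`-indexed, so `V_i` is `{i - 1} × Fin n`. -/
def Rel (k n : ℕ) (u w : Fin k × Fin n) : Prop :=
  ((u.1 : ℕ) = 0 ∧ (w.1 : ℕ) = 1 ∧ ¬((u.2 : ℕ) = 0 ∧ (w.2 : ℕ) = 0)) ∨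
    (2 ≤ (u.1 : ℕ) ∧ ((w.1 : ℕ) = 0 ∨ (w.1 : ℕ) = 1) ∧ (w.2 : ℕ) = 0)

abbrev graph (k n : ℕ) : SimpleGraph (Fin k × Fin n) := fromRel (Rel k n)

lemma rel_asymm {u w : Fin k × Fin n} (h : Rel k n u w) : ¬ Rel k n w u := by
  unfold Rel at *
  omega

lemma graph_adj {u w : Fin k × Fin n} : (graph k n).Adj u w ↔ Rel k n u w ∨ Rel k n w u := by
  refine fromRel_adj _ u w |>.trans ⟨And.right, fun h => ⟨?_, h⟩⟩
  rintro rfl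
  exact h.elim (fun h => rel_asymm h h) fun h => rel_asymm h h

lemma graph_le_multipartite : graph k n ≤ multipartite k n := by
  intro u w h
  change u.1 ≠ w.1
  rw [graph_adj] at h
  rw [Ne, ← Fin.val_inj]
  unfold Rel at h
  omega

lemma graph_cliqueFree_three : (graph k n).CliqueFree 3 := by
  intro s hs
  obtain ⟨a, b, c, hab, hac, hbc, -⟩ := is3Clique_iff.mp hs
  rw [graph_adj] at hab hac hbc
  unfold Rel at hab hac hbc
  omega

lemma exists_adj_adj_of_not_adj (hk : 3 ≤ k) {u w : Fin k × Fin n}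
    (hG : (multipartite k n).Adj u w) (hJ : ¬ (graph k n).Adj u w) :
    ∃ x, (graph k n).Adj x u ∧ (graph k n).Adj x w := by
  have huw : (u.1 : ℕ) ≠ w.1 := fun h => hG (Fin.val_injective h)
  rw [graph_adj] at hJ
  simp only [graph_adj]
  unfold Rel at hJ ⊢
  have hn : 0 < n := u.2.pos
  by_cases hu : (u.1 : ℕ) < 2 <;> by_cases hw : (w.1 : ℕ) < 2
  · exact ⟨(⟨2, hk⟩, ⟨0, hn⟩), by simp only [true_and, and_true]; omega⟩
  · exact ⟨(⟨1 - u.1, by omega⟩, ⟨0, hn⟩), by simp only [true_and, and_true]; omega⟩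
  · exact ⟨(⟨1 - w.1, by omega⟩, ⟨0, hn⟩), by simp only [true_and, and_true]; omega⟩
  · exact ⟨(⟨0, by omega⟩, ⟨0, hn⟩), by simp only [true_and, and_true, true_or]; omega⟩

theorem isSatIn_graph (hk : 3 ≤ k) : IsSatIn 3 (graph k n) (multipartite k n) := by
  refine ⟨graph_le_multipartite, graph_cliqueFree_three, fun u w hG hJ => ?_⟩
  obtain ⟨x, hxu, hxw⟩ := exists_adj_adj_of_not_adj hk hG hJ
  exact not_cliqueFree_three_sup_edge_of_adj hG.ne hxu hxw

lemma ncard_setOf_rel (hk : 2 ≤ k) (hn : 1 ≤ n) :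
    {p : (Fin k × Fin n) × (Fin k × Fin n) | Rel k n p.1 p.2}.ncard =
      n ^ 2 - 1 + 2 * (k - 2) * n := by
  classical
  set a : Fin k × Fin n := (⟨0, by omega⟩, ⟨0, hn⟩)
  set b : Fin k × Fin n := (⟨1, hk⟩, ⟨0, hn⟩)
  set bipartite : Finset ((Fin k × Fin n) × (Fin k × Fin n)) :=
    (({a.1} ×ˢ Finset.univ) ×ˢ ({b.1} ×ˢ Finset.univ)).erase (a, b)
  set pendant : Finset ((Fin k × Fin n) × (Fin k × Fin n)) :=
    (Finset.Ioi b.1 ×ˢ Finset.univ) ×ˢ {a, b}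
  have hset : {p : (Fin k × Fin n) × (Fin k × Fin n) | Rel k n p.1 p.2} =
      ↑(bipartite ∪ pendant) := by
    ext p
    simp only [Set.mem_ofPred_eq, Finset.coe_union, Set.mem_union, Finset.mem_coe,
      Finset.mem_erase, Finset.mem_product, Finset.mem_singleton, Finset.mem_univ,
      Finset.mem_Ioi, Finset.mem_insert, and_true, ne_eq, Prod.ext_iff, Fin.ext_iff, Fin.lt_def,
      Rel, a, b, bipartite, pendant]
    omega
  have hdisj : Disjoint bipartite pendant := by
    refine Finset.disjoint_left.mpr fun p h1 h2 => ?_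
    simp only [Finset.mem_erase, Finset.mem_product, Finset.mem_singleton, Finset.mem_Ioi,
      Fin.ext_iff, Fin.lt_def, a, b, bipartite, pendant] at h1 h2
    omega
  have hbipartite : bipartite.card = n ^ 2 - 1 := by
    rw [Finset.card_erase_of_mem (by simp), Finset.card_product, Finset.card_product,
      Finset.card_product]
    simp [sq]
  have hpendant : pendant.card = 2 * (k - 2) * n := by
    rw [Finset.card_product, Finset.card_product, Finset.card_pair (by simp [a, b, Prod.ext_iff])]
    simp only [b, Fin.card_Ioi, Finset.card_univ, Fintype.card_fin]
    rw [Nat.sub_sub]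
    ring
  rw [hset, Set.ncard_coe_finset, Finset.card_union_of_disjoint hdisj, hbipartite, hpendant]

lemma ncard_edgeSet_graph (hk : 2 ≤ k) (hn : 1 ≤ n) :
    (graph k n).edgeSet.ncard = n ^ 2 - 1 + 2 * (k - 2) * n :=
  (ncard_edgeSet_fromRel_of_asymm _ fun _ _ => rel_asymm).trans (ncard_setOf_rel hk hn)

end ConstructionOne

/-- Construction 1: all edges between `V_1` and `V_2` except `{v_1^1, v_2^1}`,
plus all edges joining each vertex of `V_3 ∪ ⋯ ∪ V_k` to both `v_1^1` and `v_2^1`. -/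
theorem stmt_0 (k n : ℕ) (hk : 3 ≤ k) (hn : 2 ≤ n)
    (G1 : SimpleGraph (Fin k × Fin n))
    (hG1 : G1 = SimpleGraph.fromRel (fun u w =>
      ((u.1 : ℕ) = 0 ∧ (w.1 : ℕ) = 1 ∧ ¬((u.2 : ℕ) = 0 ∧ (w.2 : ℕ) = 0)) ∨
      (2 ≤ (u.1 : ℕ) ∧ ((w.1 : ℕ) = 0 ∨ (w.1 : ℕ) = 1) ∧ (w.2 : ℕ) = 0))) :
    IsSatIn 3 G1 (multipartite k n) ∧
      (G1.edgeSet.ncard : ℤ) = 2 * k * n + (n : ℤ) ^ 2 - 4 * n - 1 := by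
  change G1 = ConstructionOne.graph k n at hG1
  subst hG1
  refine ⟨ConstructionOne.isSatIn_graph hk, ?_⟩
  have hn2 : 1 ≤ n ^ 2 := Nat.one_le_pow _ _ (by omega)
  rw [ConstructionOne.ncard_edgeSet_graph (by omega) (by omega)]
  push_cast [hn2, show 2 ≤ k by omega]
  ring
end

section
/- Let k ≥ 3 and n ≥ 2. Let G2 be the subgraph of K_k^n whose edges are: all pairs joining each vertex of V_1 ∖ {v_1^1} to v_2^1 and v_3^1, all pairs joining each vertex of V_2 ∖ {v_2^1} to v_1^1 and v_3^1, all pairs joining each vertex of V_3 ∖ {v_3^1} to v_1^1 and v_2^1, together with all pairs joining each vertex of V_4 ∪ ... ∪ V_k to v_1^1, v_2^1 and v_3^1. Then G2 is a K_3-saturated subgraph of K_k^n and the number of edges of G2 equals 3kn − 3n − 6. -/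
/-
The graph is the part of `K_k^n` between the three vertices `v_i^1` (`i ≤ 3`) and the remaining
vertices, so it is bipartite and hence triangle-free. An edge of `K_k^n` that it misses joins two
vertices on the same side; some `V_i` with `i ≤ 3` contains neither endpoint, and the vertex of
`V_i` on the other side (`v_i^1` or `v_i^2`) is a common neighbour. Counting edges from the three
hubs, each of degree `(k - 1) n - 2`, gives `3kn - 3n - 6`.
-/

open SimpleGraph

open Finset

namespace SimpleGraph

variable {V : Type*} {G : SimpleGraph V}

theorem isSatIn_three_between_compl {s : Set V}
    (h : ∀ u w, G.Adj u w → (u ∈ s ↔ w ∈ s) →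
      ∃ x, (x ∈ s ↔ u ∉ s) ∧ G.Adj u x ∧ G.Adj w x) :
    IsSatIn 3 (G.between s sᶜ) G := by
  refine ⟨between_le, (between_isBipartite disjoint_compl_right).cliqueFree (by norm_num), ?_⟩
  intro u w huw hnotAdj hfree
  have hside : u ∈ s ↔ w ∈ s := by
    by_contra hside
    exact hnotAdj ⟨huw, by simp only [Set.mem_compl_iff]; tauto⟩
  obtain ⟨x, hx, hux, hwx⟩ := h u w huw hside
  classical
  refine hfree {u, w, x} (is3Clique_triple_iff.mpr ⟨?_, ?_, ?_⟩)
  · exact Or.inr ⟨Set.mem_singleton _, huw.ne⟩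
  · exact Or.inl ⟨hux, by simp only [Set.mem_compl_iff]; tauto⟩
  · exact Or.inl ⟨hwx, by simp only [Set.mem_compl_iff]; tauto⟩

variable [Fintype V] [DecidableEq V] [DecidableRel G.Adj] {s : Finset V} {v : V}

lemma neighborFinset_between_compl (hv : v ∈ s) :
    (G.between s sᶜ).neighborFinset v = G.neighborFinset v \ s := by
  ext w
  simp [between_adj, hv]

lemma degree_between_compl (hv : v ∈ s) :
    (G.between s sᶜ).degree v = G.degree v - #(s ∩ G.neighborFinset v) := by
  rw [← card_neighborFinset_eq_degree, neighborFinset_between_compl hv, card_sdiff,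
    card_neighborFinset_eq_degree]

lemma card_edgeFinset_between_compl :
    #(G.between s sᶜ).edgeFinset = ∑ v ∈ s, (G.between s sᶜ).degree v :=
  (isBipartiteWith_sum_degrees_eq_card_edges (t := sᶜ)
    (by simpa using between_isBipartiteWith disjoint_compl_right)).symm

end SimpleGraph

section Construction

variable {k n : ℕ}

instance : DecidableRel (multipartite k n).Adj := fun u w => inferInstanceAs (Decidable (u.1 ≠ w.1))

@[simp]
lemma multipartite_adj {u w : Fin k × Fin n} : (multipartite k n).Adj u w ↔ u.1 ≠ w.1 := Iff.rfl

lemma multipartite_neighborFinset (v : Fin k × Fin n) :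
    (multipartite k n).neighborFinset v = (univ.erase v.1) ×ˢ univ := by
  ext w
  simp [ne_comm]

lemma multipartite_degree (v : Fin k × Fin n) : (multipartite k n).degree v = (k - 1) * n := by
  rw [← card_neighborFinset_eq_degree, multipartite_neighborFinset, card_product,
    card_erase_of_mem (mem_univ _), card_univ, card_univ, Fintype.card_fin, Fintype.card_fin]

lemma exists_val_le_two_ne_ne (hk : 3 ≤ k) (a b : Fin k) :
    ∃ c : Fin k, (c : ℕ) ≤ 2 ∧ c ≠ a ∧ c ≠ b := by
  by_contra! h
  have h0 := h ⟨0, by omega⟩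
  have h1 := h ⟨1, by omega⟩
  have h2 := h ⟨2, by omega⟩
  simp [Fin.ext_iff] at h0 h1 h2
  omega

/-- The vertices `v_1^1, v_2^1, v_3^1` (parts and positions are indexed from `0`). -/
def hubs (k n : ℕ) : Finset (Fin k × Fin n) := {v | (v.1 : ℕ) ≤ 2 ∧ (v.2 : ℕ) = 0}

lemma mem_hubs {v : Fin k × Fin n} : v ∈ hubs k n ↔ (v.1 : ℕ) ≤ 2 ∧ (v.2 : ℕ) = 0 := by
  simp [hubs]

lemma card_hubs (hk : 3 ≤ k) (hn : 1 ≤ n) : #(hubs k n) = 3 := by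
  have hhubs : hubs k n =
      ({c : Fin k | (c : ℕ) < 3} : Finset _) ×ˢ ({b : Fin n | (b : ℕ) < 1} : Finset _) := by
    ext v
    simp [mem_hubs, Nat.lt_succ_iff]
  rw [hhubs, card_product, Fin.card_filter_val_lt, Fin.card_filter_val_lt,
    min_eq_right hk, min_eq_right hn]

lemma hubs_inter_neighborFinset {v : Fin k × Fin n} (hv : v ∈ hubs k n) :
    hubs k n ∩ (multipartite k n).neighborFinset v = (hubs k n).erase v := by
  ext w
  rw [mem_hubs] at hv
  simp only [mem_inter, mem_erase, mem_hubs, mem_neighborFinset, multipartite_adj, ne_eq,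
    Prod.ext_iff, Fin.ext_iff]
  omega

lemma degree_between_hubs (hk : 3 ≤ k) (hn : 1 ≤ n) {v : Fin k × Fin n} (hv : v ∈ hubs k n) :
    ((multipartite k n).between (hubs k n) (hubs k n)ᶜ).degree v = (k - 1) * n - 2 := by
  rw [degree_between_compl hv, multipartite_degree, hubs_inter_neighborFinset hv,
    card_erase_of_mem hv, card_hubs hk hn]

lemma exists_common_multipartite_neighbor (hk : 3 ≤ k) (hn : 2 ≤ n) (u w : Fin k × Fin n) :
    ∃ x, (x ∈ hubs k n ↔ u ∉ hubs k n) ∧ (multipartite k n).Adj u x ∧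
      (multipartite k n).Adj w x := by
  obtain ⟨c, hc, hcu, hcw⟩ := exists_val_le_two_ne_ne hk u.1 w.1
  by_cases hu : u ∈ hubs k n
  · exact ⟨(c, ⟨1, hn⟩), by simp [mem_hubs, hu], hcu.symm, hcw.symm⟩
  · exact ⟨(c, ⟨0, by omega⟩), by simp [mem_hubs, hc, hu], hcu.symm, hcw.symm⟩

lemma fromRel_eq_between : SimpleGraph.fromRel (fun u w : Fin k × Fin n =>
      (u.1 : ℕ) ≤ 2 ∧ (u.2 : ℕ) = 0 ∧
        (((w.1 : ℕ) ≤ 2 ∧ u.1 ≠ w.1 ∧ (w.2 : ℕ) ≠ 0) ∨ 3 ≤ (w.1 : ℕ))) =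
    (multipartite k n).between (hubs k n) (hubs k n)ᶜ := by
  ext u w
  simp only [fromRel_adj, between_adj, multipartite_adj, Set.mem_compl_iff, mem_coe,
    mem_hubs, ne_eq, Prod.ext_iff, Fin.ext_iff]
  omega

end Construction

/-- Construction 2: join `V_1 ∖ {v_1^1}` to `v_2^1` and `v_3^1`, `V_2 ∖ {v_2^1}` to `v_1^1`
and `v_3^1`, `V_3 ∖ {v_3^1}` to `v_1^1` and `v_2^1`, and each vertex of `V_4 ∪ ⋯ ∪ V_k`
to `v_1^1`, `v_2^1` and `v_3^1`. -/
theorem stmt_1 (k n : ℕ) (hk : 3 ≤ k) (hn : 2 ≤ n)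
    (G2 : SimpleGraph (Fin k × Fin n))
    (hG2 : G2 = SimpleGraph.fromRel (fun u w =>
      (u.1 : ℕ) ≤ 2 ∧ (u.2 : ℕ) = 0 ∧
        (((w.1 : ℕ) ≤ 2 ∧ u.1 ≠ w.1 ∧ (w.2 : ℕ) ≠ 0) ∨ 3 ≤ (w.1 : ℕ)))) :
    IsSatIn 3 G2 (multipartite k n) ∧
      (G2.edgeSet.ncard : ℤ) = 3 * k * n - 3 * n - 6 := by
  rw [hG2, fromRel_eq_between]
  refine ⟨isSatIn_three_between_compl fun u w _ _ => ?_, ?_⟩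
  · exact exists_common_multipartite_neighbor hk hn u w
  · rw [← coe_edgeFinset, Set.ncard_coe_finset, card_edgeFinset_between_compl,
      sum_congr rfl fun v hv => degree_between_hubs hk (by omega) hv, sum_const,
      card_hubs hk (by omega), smul_eq_mul]
    have hdeg : 2 ≤ (k - 1) * n := by simpa using Nat.mul_le_mul (show 1 ≤ k - 1 by omega) hn
    push_cast [hdeg, Nat.one_le_of_lt hk]
    ring
end

section
/- Let k ≥ 3 and n ≥ 100, and let G be a K_3-saturated subgraph of K_k^n with minimum degree at least 3 and with fewer than 3kn − 3n edges. Then G does not contain four pairwise nonadjacent vertices u_1, u_2, u_3, u_4, each of degree at most 5 in G, whose open neighborhoods in G are pairwise disjoint. -/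
open SimpleGraph

/-!
If `G` is `K_3`-saturated in `H`, every `H`-neighbour `v` of `u` is a `G`-neighbour of `u` or has a
common `G`-neighbour `w` with `u`; hence `N_H(u)` is covered by the sets `{w} ∪ (N_G(w) \ {u})`,
`w ∈ N_G(u)`, and `∑_{w ∈ N_G(u)} deg w ≥ deg_H u = (k - 1) n`. Four vertices with disjoint
neighbourhoods of size at most `5` thus give at most `20` vertices of total degree at least
`4 (k - 1) n`, while the other `kn - 20` vertices have degree at least `3`. So
`2 e(G) ≥ 7kn - 4n - 60`, which is at least `6kn - 6n` as soon as `n ≥ 20`.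
-/

open Finset

namespace SimpleGraph

variable {V : Type*} {G : SimpleGraph V}

theorem CliqueFree.exists_adj_adj_of_not_cliqueFree_sup_edge (hG : G.CliqueFree 3) {u w : V}
    (h : ¬(G ⊔ edge u w).CliqueFree 3) : ∃ x, G.Adj u x ∧ G.Adj w x := by
  classical
  obtain ⟨t, ht⟩ := not_forall_not.1 h
  have hu := hG.mem_of_sup_edge_isNClique ht
  have hw := hG.mem_of_sup_edge_isNClique (edge_comm u w ▸ ht)
  obtain ⟨x, hx, hxw⟩ : ∃ x ∈ t.erase u, x ≠ w :=
    exists_mem_ne (by rw [card_erase_of_mem hu, ht.card_eq]; norm_num) w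
  obtain ⟨hxu, hxt⟩ := mem_erase.1 hx
  refine ⟨x, ?_, ?_⟩
  · simpa [edge_adj, hxu, hxw, hxu.symm] using ht.1 hu hxt hxu.symm
  · simpa [edge_adj, hxu, hxw, hxw.symm] using ht.1 hw hxt hxw.symm

theorem sum_sum_degree_add_mul_le_two_mul_card_edgeFinset [Fintype V] [DecidableEq V]
    [DecidableRel G.Adj] {ι : Type*} [Fintype ι] {u : ι → V}
    (hdisj : Pairwise fun i j => Disjoint (G.neighborSet (u i)) (G.neighborSet (u j))) {δ : ℕ}
    (hδ : ∀ v, δ ≤ G.degree v) :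
    ∑ i, ∑ w ∈ G.neighborFinset (u i), G.degree w +
      δ * (Fintype.card V - ∑ i, G.degree (u i)) ≤ 2 * #G.edgeFinset := by
  set S := univ.biUnion fun i => G.neighborFinset (u i)
  have hdisj' : (↑(univ : Finset ι) : Set ι).PairwiseDisjoint fun i => G.neighborFinset (u i) :=
    fun i _ j _ hij => Set.disjoint_toFinset.2 (hdisj hij)
  have hS : #S = ∑ i, G.degree (u i) := card_biUnion hdisj'
  have hSc : δ * #Sᶜ ≤ ∑ w ∈ Sᶜ, G.degree w := by
    simpa [mul_comm] using card_nsmul_le_sum Sᶜ (fun w => G.degree w) δ fun w _ => hδ w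
  calc ∑ i, ∑ w ∈ G.neighborFinset (u i), G.degree w +
        δ * (Fintype.card V - ∑ i, G.degree (u i))
      = ∑ w ∈ S, G.degree w + δ * #Sᶜ := by
        rw [sum_biUnion hdisj', card_compl, hS]
    _ ≤ ∑ w ∈ S, G.degree w + ∑ w ∈ Sᶜ, G.degree w := by gcongr
    _ = 2 * #G.edgeFinset := by
        rw [sum_add_sum_compl, sum_degrees_eq_twice_card_edges]

end SimpleGraph

namespace IsSatIn

variable {V : Type*} {G H : SimpleGraph V}

theorem exists_adj_adj (h : IsSatIn 3 G H) {u v : V} (huv : H.Adj u v) (hG : ¬G.Adj u v) :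
    ∃ x, G.Adj u x ∧ G.Adj v x :=
  h.2.1.exists_adj_adj_of_not_cliqueFree_sup_edge (h.2.2 u v huv hG)

theorem degree_le_sum_degree [Fintype V] [DecidableEq V] [DecidableRel G.Adj]
    [DecidableRel H.Adj] (h : IsSatIn 3 G H) (u : V) :
    H.degree u ≤ ∑ w ∈ G.neighborFinset u, G.degree w := by
  have hcover : H.neighborFinset u ⊆
      (G.neighborFinset u).biUnion fun w => insert w ((G.neighborFinset w).erase u) := by
    intro v hv
    rw [mem_neighborFinset] at hv
    simp only [mem_biUnion, mem_insert, mem_erase, mem_neighborFinset]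
    by_cases huv : G.Adj u v
    · exact ⟨v, huv, Or.inl rfl⟩
    · obtain ⟨x, hux, hvx⟩ := h.exists_adj_adj hv huv
      exact ⟨x, hux, Or.inr ⟨hv.ne.symm, hvx.symm⟩⟩
  calc H.degree u ≤ _ := card_le_card hcover
    _ ≤ _ := card_biUnion_le
    _ ≤ ∑ w ∈ G.neighborFinset u, G.degree w := by
      refine sum_le_sum fun w hw => (card_insert_le _ _).trans ?_
      have huw : u ∈ G.neighborFinset w := by simpa [adj_comm] using hw
      rw [card_erase_add_one huw, card_neighborFinset_eq_degree]

end IsSatIn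

theorem degree_multipartite (k n : ℕ) [DecidableRel (multipartite k n).Adj] (v : Fin k × Fin n) :
    (multipartite k n).degree v = (k - 1) * n := by
  have hnbr : (multipartite k n).neighborFinset v = (univ.erase v.1) ×ˢ univ := by
    ext w
    rw [mem_neighborFinset]
    simp [multipartite, eq_comm]
  rw [← card_neighborFinset_eq_degree, hnbr, card_product, card_erase_of_mem (mem_univ _)]
  simp

theorem stmt_7_general (k n : ℕ) (hn : 100 ≤ n)
    (G : SimpleGraph (Fin k × Fin n))
    (hsat : IsSatIn 3 G (multipartite k n))
    (hdeg : ∀ v, 3 ≤ (G.neighborSet v).ncard)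
    (hcard : (G.edgeSet.ncard : ℤ) < 3 * (k : ℤ) * n - 3 * n) :
    ¬ ∃ u : Fin 4 → Fin k × Fin n, Function.Injective u ∧
        (∀ i j, i ≠ j → ¬ G.Adj (u i) (u j)) ∧
        (∀ i, (G.neighborSet (u i)).ncard ≤ 5) ∧
        (∀ i j, i ≠ j → Disjoint (G.neighborSet (u i)) (G.neighborSet (u j))) := by
  classical
  rintro ⟨u, -, -, hsmall, hdisj⟩
  simp only [Set.ncard_eq_toFinset_card', Set.toFinset_card, card_neighborSet_eq_degree]
    at hdeg hsmall
  have hcount := sum_sum_degree_add_mul_le_two_mul_card_edgeFinset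
    (fun i j hij => hdisj i j hij) hdeg
  have hlarge : ∑ _i : Fin 4, (k - 1) * n ≤ ∑ i, ∑ w ∈ G.neighborFinset (u i), G.degree w :=
    sum_le_sum fun i _ => degree_multipartite k n (u i) ▸ hsat.degree_le_sum_degree (u i)
  have hsmall : ∑ i, G.degree (u i) ≤ ∑ _i : Fin 4, 5 := sum_le_sum fun i _ => hsmall i
  simp only [sum_const, card_univ, Fintype.card_prod, Fintype.card_fin, smul_eq_mul,
    Nat.sub_one_mul] at hlarge hsmall hcount
  rw [← coe_edgeFinset, Set.ncard_coe_finset,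
    show 3 * (k : ℤ) * n = ((3 * (k * n) : ℕ) : ℤ) by push_cast; ring] at hcard
  generalize k * n = m at *
  omega

/-- A `K_3`-saturated subgraph of `K_k^n` with minimum degree at least `3` and fewer than
`3kn − 3n` edges contains no four pairwise nonadjacent vertices of degree at most `5`
with pairwise disjoint neighborhoods. -/
theorem stmt_7 (k n : ℕ) (hk : 3 ≤ k) (hn : 100 ≤ n)
    (G : SimpleGraph (Fin k × Fin n))
    (hsat : IsSatIn 3 G (multipartite k n))
    (hdeg : ∀ v, 3 ≤ (G.neighborSet v).ncard)
    (hcard : (G.edgeSet.ncard : ℤ) < 3 * (k : ℤ) * n - 3 * n) :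
    ¬ ∃ u : Fin 4 → Fin k × Fin n, Function.Injective u ∧
        (∀ i j, i ≠ j → ¬ G.Adj (u i) (u j)) ∧
        (∀ i, (G.neighborSet (u i)).ncard ≤ 5) ∧
        (∀ i j, i ≠ j → Disjoint (G.neighborSet (u i)) (G.neighborSet (u j))) :=
  stmt_7_general k n hn G hsat hdeg hcard
end

section
/- For all n ≥ 2, every K_3-saturated subgraph of the complete balanced tripartite graph K_3^n has at least 6n − 6 edges. -/
open SimpleGraph

/-!
Fix distinct parts `V_i, V_j, V_k` and let `w(v)` be the number of neighbours in `V_j` of a vertex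
`v ∉ V_j`. Saturation gives `n ≤ w(v) + ∑ w(u)` over the neighbours `u ∈ V_k` of `v ∈ V_i` (each
vertex of `V_j` is a neighbour of `v` or of such a `u`), and `K₃`-freeness gives `w(u) + w(v) ≤ n`
for adjacent `u, v`. Give each vertex of `V_i ∪ V_k` the charge `2 w(v) + (n - 2) deg(v)`, degrees
taken between `V_i` and `V_k`. Every vertex has charge at least `2n - 2`, except pendant vertices
of weight below `n / 2`, whose deficit their unique neighbour pays out of its surplus, and, for
`n = 3`, vertices of weight `0`, which call for a separate count. Hence
`2n(n - 1) ≤ e(V_i, V_j) + e(V_k, V_j) + (n - 2) e(V_i, V_k)` for `n ≥ 3`, and adding three such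
inequalities gives `6n(n - 1) ≤ n e(G)`. For `n = 2` it suffices that every degree is at least `2`.
-/

open Finset

open scoped Classical

/-- The data read off three distinct parts `V_i, V_j, V_k` of a `K₃`-saturated subgraph of `K₃ⁿ`
(see `satPair`): `adj` is the adjacency between `V_i` and `V_k`, and `wl`, `wr` count the neighbours
in `V_j` of the vertices of `V_i` and of `V_k`. -/
structure SatPair (n : ℕ) where
  adj : Fin n → Fin n → Prop
  wl : Fin n → ℕ
  wr : Fin n → ℕ
  le_wl_add_sum : ∀ a, n ≤ wl a + ∑ c ∈ {c | adj a c}, wr c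
  le_wr_add_sum : ∀ c, n ≤ wr c + ∑ a ∈ {a | adj a c}, wl a
  wl_add_wr_le : ∀ a c, adj a c → wl a + wr c ≤ n
  adj_of_wl_eq_zero : ∀ a, wl a = 0 → ∀ c, adj a c
  adj_of_wr_eq_zero : ∀ c, wr c = 0 → ∀ a, adj a c

noncomputable section

namespace SatPair

variable {n : ℕ} (W : SatPair n) {a c : Fin n}

def swap : SatPair n where
  adj c a := W.adj a c
  wl := W.wr
  wr := W.wl
  le_wl_add_sum := W.le_wr_add_sum
  le_wr_add_sum := W.le_wl_add_sum
  wl_add_wr_le c a h := (add_comm _ _).trans_le (W.wl_add_wr_le a c h)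
  adj_of_wl_eq_zero := W.adj_of_wr_eq_zero
  adj_of_wr_eq_zero := W.adj_of_wl_eq_zero

def degL (a : Fin n) : ℕ := #{c | W.adj a c}

def numAdj : ℕ := ∑ a, W.degL a

theorem numAdj_swap : W.swap.numAdj = W.numAdj :=
  (sum_card_bipartiteAbove_eq_sum_card_bipartiteBelow (r := W.adj)).symm

def IsPendant (a : Fin n) : Prop := W.degL a = 1 ∧ 2 * W.wl a < n

def charge (a : Fin n) : ℤ := 2 * W.wl a + (n - 2) * W.degL a

def deficit (a : Fin n) : ℤ := if W.IsPendant a then n - 2 * W.wl a else 0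

theorem degL_eq_of_wl_eq_zero (h : W.wl a = 0) : W.degL a = n := by
  simp [degL, W.adj_of_wl_eq_zero a h]

theorem le_wl_of_degL_eq_zero (h : W.degL a = 0) : n ≤ W.wl a := by
  simpa [card_eq_zero.1 h] using W.le_wl_add_sum a

theorem wl_ne_zero_of_degL_eq_one (hn : n ≠ 1) (h : W.degL a = 1) : W.wl a ≠ 0 :=
  fun h0 => hn ((W.degL_eq_of_wl_eq_zero h0).symm.trans h)

theorem exists_adj_of_degL_pos (h : 0 < W.degL a) : ∃ c, W.adj a c := by
  obtain ⟨c, hc⟩ := card_pos.1 h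
  exact ⟨c, (mem_filter.1 hc).2⟩

theorem eq_of_degL_eq_one {c' : Fin n} (h : W.degL a = 1) (hc : W.adj a c) (hc' : W.adj a c') :
    c = c' :=
  card_le_one.1 h.le c (mem_filter.2 ⟨mem_univ c, hc⟩) c' (mem_filter.2 ⟨mem_univ c', hc'⟩)

theorem le_wl_of_forall_adj_wr_eq_zero (h : ∀ c, W.adj a c → W.wr c = 0) : n ≤ W.wl a := by
  simpa [sum_eq_zero fun c hc => h c (mem_filter.1 hc).2] using W.le_wl_add_sum a

theorem wl_add_wr_eq_of_degL_eq_one (h : W.degL a = 1) (hac : W.adj a c) :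
    W.wl a + W.wr c = n := by
  obtain ⟨c', hN⟩ := card_eq_one.1 h
  obtain rfl : c = c' := mem_singleton.1 (hN ▸ mem_filter.2 ⟨mem_univ c, hac⟩)
  have := W.le_wl_add_sum a
  rw [hN, sum_singleton] at this
  exact le_antisymm (W.wl_add_wr_le a c hac) this

theorem two_le_wl_add_degL (hn : 2 ≤ n) (a : Fin n) : 2 ≤ W.wl a + W.degL a := by
  have h0 := W.degL_eq_of_wl_eq_zero (a := a)
  have h1 := W.le_wl_of_degL_eq_zero (a := a)
  omega

theorem two_mul_le_sum_wl_add_numAdj (hn : 2 ≤ n) : 2 * n ≤ ∑ a, W.wl a + W.numAdj := by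
  simpa [numAdj, ← sum_add_distrib, mul_comm] using
    card_nsmul_le_sum univ _ 2 fun a _ => W.two_le_wl_add_degL hn a

theorem two_mul_sub_two_le_charge_add_deficit (hn : 2 ≤ n) (ha : 4 ≤ n ∨ W.wl a ≠ 0) :
    2 * n - 2 ≤ W.charge a + W.deficit a := by
  have h0 := W.degL_eq_of_wl_eq_zero (a := a)
  have h1 := W.le_wl_of_degL_eq_zero (a := a)
  have hn' : (2 : ℤ) ≤ n := by exact_mod_cast hn
  unfold charge deficit IsPendant
  split_ifs with hp
  · rw [hp.1]
    push_cast
    linarith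
  · rcases Nat.eq_zero_or_pos (W.wl a) with hw | hw
    · have h4 : (4 : ℤ) ≤ n := by exact_mod_cast ha.resolve_right (not_not.2 hw)
      rw [h0 hw, hw]
      push_cast
      nlinarith
    · rcases lt_trichotomy (W.degL a) 1 with hd | hd | hd
      · have : (n : ℤ) ≤ W.wl a := by exact_mod_cast h1 (by omega)
        rw [show W.degL a = 0 by omega]
        push_cast
        linarith
      · have : (n : ℤ) ≤ 2 * W.wl a := by exact_mod_cast (show n ≤ 2 * W.wl a by omega)
        rw [hd]
        push_cast
        linarith
      · have hw' : (1 : ℤ) ≤ W.wl a := by exact_mod_cast hw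
        have hd' : (2 : ℤ) ≤ W.degL a := by exact_mod_cast hd
        nlinarith

theorem sum_swap_deficit_eq (a : Fin n) :
    ∑ c ∈ {c | W.adj a c}, W.swap.deficit c =
      #{c | W.adj a c ∧ W.swap.IsPendant c} * (2 * W.wl a - n : ℤ) := by
  rw [← nsmul_eq_mul, ← sum_const, ← filter_filter, sum_filter W.swap.IsPendant]
  refine sum_congr rfl fun c hc => ?_
  unfold deficit
  split_ifs with hp
  · have : W.wr c + W.wl a = n := W.swap.wl_add_wr_eq_of_degL_eq_one hp.1 (mem_filter.1 hc).2
    change (n : ℤ) - 2 * W.wr c = 2 * W.wl a - n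
    omega
  · rfl

theorem sum_sum_swap_deficit :
    ∑ a, ∑ c ∈ {c | W.adj a c}, W.swap.deficit c = ∑ c, W.swap.deficit c := by
  refine (sum_sum_bipartiteAbove_eq_sum_sum_bipartiteBelow W.adj _).trans
    (sum_congr rfl fun c _ => ?_)
  rw [sum_const]
  by_cases hc : W.swap.IsPendant c
  · rw [show #(bipartiteBelow W.adj univ c) = 1 from hc.1, one_smul]
  · simp [deficit, hc]

theorem charge_add_deficit_ge (hn : 3 ≤ n) (ha : 4 ≤ n ∨ W.wl a ≠ 0) :
    2 * n - 2 + ∑ c ∈ {c | W.adj a c}, W.swap.deficit c ≤ W.charge a + W.deficit a := by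
  rw [sum_swap_deficit_eq]
  rcases Nat.eq_zero_or_pos #{c | W.adj a c ∧ W.swap.IsPendant c} with hk | hk
  · simpa [hk] using W.two_mul_sub_two_le_charge_add_deficit (by omega) ha
  obtain ⟨c, hc⟩ := card_pos.1 hk
  obtain ⟨hac, hpc⟩ := (mem_filter.1 hc).2
  have hsum : W.wr c + W.wl a = n := W.swap.wl_add_wr_eq_of_degL_eq_one hpc.1 hac
  have hwr : W.wr c ≠ 0 := W.swap.wl_ne_zero_of_degL_eq_one (by omega) hpc.1
  have hpc2 : 2 * W.wr c < n := hpc.2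
  have hnp : ¬ W.IsPendant a := fun h => by have := h.2; omega
  have hkd : #{c | W.adj a c ∧ W.swap.IsPendant c} ≤ W.degL a := by
    rw [← filter_filter]; exact card_le_card (filter_subset _ _)
  rw [deficit, if_neg hnp, add_zero, charge]
  have hsum' : (W.wr c : ℤ) + W.wl a = n := by exact_mod_cast hsum
  have hwr' : (1 : ℤ) ≤ W.wr c := by exact_mod_cast Nat.one_le_iff_ne_zero.2 hwr
  have hk' : (1 : ℤ) ≤ #{c | W.adj a c ∧ W.swap.IsPendant c} := by exact_mod_cast hk
  have hkd' : (#{c | W.adj a c ∧ W.swap.IsPendant c} : ℤ) ≤ W.degL a := by exact_mod_cast hkd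
  have hn' : (3 : ℤ) ≤ n := by exact_mod_cast hn
  -- every pendant neighbour has weight `β = wr c`, and the claim is
  -- `(n - 2) (deg a - k) + 2 (k - 1) (β - 1) ≥ 0` for the number `k` of them
  nlinarith [mul_le_mul_of_nonneg_left hkd' (by linarith : (0 : ℤ) ≤ n - 2),
    mul_nonneg (sub_nonneg.2 hk') (sub_nonneg.2 hwr')]

theorem sum_charge_add_sum_deficit_ge (hn : 3 ≤ n) (h : ∀ a, 4 ≤ n ∨ W.wl a ≠ 0) :
    n * (2 * n - 2) + ∑ c, W.swap.deficit c ≤ ∑ a, W.charge a + ∑ a, W.deficit a := by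
  have := sum_le_sum fun a (_ : a ∈ univ) => W.charge_add_deficit_ge hn (h a)
  rwa [sum_add_distrib, sum_add_distrib, sum_const, card_univ, Fintype.card_fin, nsmul_eq_mul,
    sum_sum_swap_deficit] at this

theorem sum_charge : ∑ a, W.charge a = 2 * ∑ a, (W.wl a : ℤ) + (n - 2) * W.numAdj := by
  simp [charge, numAdj, sum_add_distrib, mul_sum]

theorem two_mul_mul_sub_one_le_of_forall_ne_zero (hn : 3 ≤ n) (hl : ∀ a, 4 ≤ n ∨ W.wl a ≠ 0)
    (hr : ∀ c, 4 ≤ n ∨ W.wr c ≠ 0) :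
    2 * n * (n - 1) ≤ ((∑ a, W.wl a + ∑ c, W.wr c : ℕ) : ℤ) + (n - 2) * W.numAdj := by
  have hL := W.sum_charge_add_sum_deficit_ge hn hl
  have hR : n * (2 * n - 2) + ∑ a, W.deficit a ≤
      2 * ∑ c, (W.wr c : ℤ) + (n - 2) * W.numAdj + ∑ c, W.swap.deficit c := by
    have := W.swap.sum_charge_add_sum_deficit_ge hn hr
    rw [sum_charge, numAdj_swap] at this
    exact this
  rw [sum_charge] at hL
  push_cast
  linarith

theorem le_sum_wl_of_wr_eq_zero (h : W.wr c = 0) : n ≤ ∑ a, W.wl a := by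
  simpa [h, W.adj_of_wr_eq_zero c h] using W.le_wr_add_sum c

theorem three_le_wl_add_degL (W : SatPair 3) (a : Fin 3) :
    3 ≤ W.wl a + W.degL a + if W.IsPendant a then 1 else 0 := by
  have h0 := W.degL_eq_of_wl_eq_zero (a := a)
  have h1 := W.le_wl_of_degL_eq_zero (a := a)
  have h2 := W.wl_ne_zero_of_degL_eq_one (a := a) (by norm_num)
  unfold IsPendant
  split_ifs <;> omega

theorem wl_eq_two_of_adj_pendant (W : SatPair 3) {a c : Fin 3} (hc : W.swap.IsPendant c)
    (hac : W.adj a c) : W.wl a = 2 := by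
  have hsum : W.wr c + W.wl a = 3 := W.swap.wl_add_wr_eq_of_degL_eq_one hc.1 hac
  have hwr : W.wr c ≠ 0 := W.swap.wl_ne_zero_of_degL_eq_one (by norm_num) hc.1
  have hwr' : 2 * W.wr c < 3 := hc.2
  omega

theorem four_le_sum_wl_of_isPendant (W : SatPair 3) {c : Fin 3} (hc : W.swap.IsPendant c) :
    4 ≤ ∑ a, W.wl a := by
  obtain ⟨ν, hν⟩ := W.swap.exists_adj_of_degL_pos (hc.1 ▸ one_pos)
  rw [← add_sum_erase _ _ (mem_univ ν), W.wl_eq_two_of_adj_pendant hc hν]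
  -- a vertex of weight `0` is adjacent to `c`, hence equal to `ν`
  have hpos : ∀ a ∈ univ.erase ν, 1 ≤ W.wl a := fun a ha => Nat.one_le_iff_ne_zero.2 fun h =>
    (mem_erase.1 ha).1 (W.swap.eq_of_degL_eq_one hc.1 (W.adj_of_wl_eq_zero a h c) hν)
  have : #(univ.erase ν) • 1 ≤ ∑ a ∈ univ.erase ν, W.wl a := card_nsmul_le_sum _ _ 1 hpos
  simp only [mem_univ, card_erase_of_mem, card_univ, Fintype.card_fin, smul_eq_mul] at this
  omega

theorem five_le_sum_wl_of_two_pendants (W : SatPair 3) {c₀ c₁ c₂ : Fin 3} (h₀ : W.wr c₀ = 0)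
    (hc₁ : W.swap.IsPendant c₁) (hc₂ : W.swap.IsPendant c₂) (h₁₂ : c₁ ≠ c₂) :
    5 ≤ ∑ a, W.wl a := by
  have h₀₁ : c₀ ≠ c₁ := fun h => W.swap.wl_ne_zero_of_degL_eq_one (by norm_num) hc₁.1 (h ▸ h₀)
  have h₀₂ : c₀ ≠ c₂ := fun h => W.swap.wl_ne_zero_of_degL_eq_one (by norm_num) hc₂.1 (h ▸ h₀)
  obtain ⟨ν₁, hν₁⟩ := W.swap.exists_adj_of_degL_pos (hc₁.1 ▸ one_pos)
  obtain ⟨ν₂, hν₂⟩ := W.swap.exists_adj_of_degL_pos (hc₂.1 ▸ one_pos)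
  obtain ⟨a, ha⟩ : ((univ.erase ν₁).erase ν₂).Nonempty := by
    rw [← card_pos]
    have := pred_card_le_card_erase (s := univ.erase ν₁) (a := ν₂)
    simp only [mem_univ, card_erase_of_mem, card_univ, Fintype.card_fin] at this
    omega
  obtain ⟨haν₂, haν₁⟩ : a ≠ ν₂ ∧ a ≠ ν₁ := by simpa using ha
  -- `a` is adjacent to neither pendant, so its only possible neighbour is `c₀`
  have hwa : 3 ≤ W.wl a := W.le_wl_of_forall_adj_wr_eq_zero fun c hac => by
    have h₁ : c ≠ c₁ := fun h => haν₁ (W.swap.eq_of_degL_eq_one hc₁.1 (h ▸ hac) hν₁)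
    have h₂ : c ≠ c₂ := fun h => haν₂ (W.swap.eq_of_degL_eq_one hc₂.1 (h ▸ hac) hν₂)
    obtain rfl : c = c₀ := by omega
    exact h₀
  rw [← add_sum_erase _ _ (mem_univ ν₁), W.wl_eq_two_of_adj_pendant hc₁ hν₁]
  have := single_le_sum (f := W.wl) (fun _ _ => Nat.zero_le _) (mem_of_mem_erase ha)
  omega

theorem three_add_card_pendant_le (W : SatPair 3) {c₀ : Fin 3} (h₀ : W.wr c₀ = 0) :
    3 + #{c | W.swap.IsPendant c} ≤ ∑ a, W.wl a := by
  set P : Finset (Fin 3) := {c | W.swap.IsPendant c}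
  have hP : #P ≤ 2 := by
    refine (card_le_card (t := univ.erase c₀) fun c hc => mem_erase.2 ⟨?_, mem_univ c⟩).trans
      (by simp)
    exact fun h => W.swap.wl_ne_zero_of_degL_eq_one (by norm_num) (mem_filter.1 hc).2.1 (h ▸ h₀)
  rcases P.eq_empty_or_nonempty with hP₀ | ⟨c₁, hc₁⟩
  · simpa [hP₀] using W.le_sum_wl_of_wr_eq_zero h₀
  obtain hP₁ | hP₁ : #P = 1 ∨ 1 < #P := by have := card_pos.2 ⟨c₁, hc₁⟩; omega
  · have := W.four_le_sum_wl_of_isPendant (mem_filter.1 hc₁).2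
    omega
  · obtain ⟨c₂, hc₂, h₂₁⟩ := exists_mem_ne hP₁ c₁
    have := W.five_le_sum_wl_of_two_pendants h₀ (mem_filter.1 hc₁).2 (mem_filter.1 hc₂).2 h₂₁.symm
    omega

theorem twelve_le_of_wr_eq_zero (W : SatPair 3) {c₀ : Fin 3} (h₀ : W.wr c₀ = 0) :
    12 ≤ ∑ a, W.wl a + ∑ c, W.wr c + W.numAdj := by
  have hL := W.three_add_card_pendant_le h₀
  have hR := card_nsmul_le_sum univ _ 3 fun c (_ : c ∈ univ) => W.swap.three_le_wl_add_degL c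
  rw [sum_add_distrib, sum_add_distrib, sum_boole] at hR
  change _ ≤ ∑ c, W.wr c + W.swap.numAdj + _ at hR
  simp only [card_univ, Fintype.card_fin, smul_eq_mul, Nat.cast_id, numAdj_swap] at hR
  omega

theorem two_mul_mul_sub_one_le (hn : 3 ≤ n) :
    2 * n * (n - 1) ≤ ((∑ a, W.wl a + ∑ c, W.wr c : ℕ) : ℤ) + (n - 2) * W.numAdj := by
  obtain rfl | h4 : n = 3 ∨ 4 ≤ n := by omega
  · by_cases hz : (∃ a, W.wl a = 0) ∨ ∃ c, W.wr c = 0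
    · suffices 12 ≤ ∑ a, W.wl a + ∑ c, W.wr c + W.numAdj by push_cast at this ⊢; linarith
      rcases hz with ⟨a, ha⟩ | ⟨c, hc⟩
      · have : 12 ≤ ∑ c, W.wr c + ∑ a, W.wl a + W.numAdj :=
          W.numAdj_swap ▸ W.swap.twelve_le_of_wr_eq_zero ha
        omega
      · exact W.twelve_le_of_wr_eq_zero hc
    · simp only [not_or, not_exists] at hz
      exact W.two_mul_mul_sub_one_le_of_forall_ne_zero hn (fun a => .inr (hz.1 a))
        (fun c => .inr (hz.2 c))
  · exact W.two_mul_mul_sub_one_le_of_forall_ne_zero hn (fun _ => .inl h4) (fun _ => .inl h4)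

end SatPair

end

theorem IsSatIn.exists_adj_adj_s9 {V : Type*} {G H : SimpleGraph V} (h : IsSatIn 3 G H) {u w : V}
    (huw : H.Adj u w) (hG : ¬ G.Adj u w) : ∃ v, G.Adj u v ∧ G.Adj w v := by
  have hK : ¬ (G ⊔ edge u w).CliqueFree 3 := h.2.2 u w huw hG
  obtain ⟨t, ht⟩ : ∃ t, (G ⊔ edge u w).IsNClique 3 t := by simpa [CliqueFree] using hK
  have hu := h.2.1.mem_of_sup_edge_isNClique ht
  have hw := h.2.1.mem_of_sup_edge_isNClique (edge_comm u w ▸ ht)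
  obtain ⟨v, hv⟩ : ((t.erase u).erase w).Nonempty := by
    rw [← card_pos, card_erase_of_mem (mem_erase.2 ⟨huw.ne.symm, hw⟩), card_erase_of_mem hu,
      ht.card_eq]
    norm_num
  obtain ⟨hvw, hvu, hv⟩ : v ≠ w ∧ v ≠ u ∧ v ∈ t := by simpa using hv
  have hadj (x : V) (hx : x ∈ t) (hxv : x ≠ v) (hx' : x = u ∨ x = w) : G.Adj x v := by
    have := ht.isClique hx hv hxv
    simp only [sup_adj, edge_adj] at this
    aesop
  exact ⟨v, hadj u hu hvu.symm (.inl rfl), hadj w hw hvw.symm (.inr rfl)⟩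

noncomputable section

variable {n : ℕ} {G : SimpleGraph (Fin 3 × Fin n)}

def partDegree (G : SimpleGraph (Fin 3 × Fin n)) (j : Fin 3) (u : Fin 3 × Fin n) : ℕ :=
  #{x | G.Adj u (j, x)}

def edgesBetween (G : SimpleGraph (Fin 3 × Fin n)) (i j : Fin 3) : ℕ :=
  ∑ a, partDegree G j (i, a)

theorem edgesBetween_comm (G : SimpleGraph (Fin 3 × Fin n)) (i j : Fin 3) :
    edgesBetween G i j = edgesBetween G j i := by
  simp only [edgesBetween, partDegree, card_filter]
  rw [sum_comm]
  simp only [adj_comm]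

theorem edgesBetween_self (hG : G ≤ multipartite 3 n) (i : Fin 3) : edgesBetween G i i = 0 :=
  sum_eq_zero fun _ _ => card_eq_zero.2 <| filter_false_of_mem fun _ _ h => hG h rfl

theorem degree_eq_sum_partDegree (u : Fin 3 × Fin n) : G.degree u = ∑ j, partDegree G j u := by
  rw [← card_neighborFinset_eq_degree, neighborFinset_eq_filter, card_filter,
    Fintype.sum_prod_type]
  simp only [partDegree, card_filter]

theorem card_edgeFinset_eq (hG : G ≤ multipartite 3 n) :
    #G.edgeFinset = edgesBetween G 0 1 + edgesBetween G 0 2 + edgesBetween G 1 2 := by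
  have h := G.sum_degrees_eq_twice_card_edges
  have hsum : ∑ u, G.degree u = ∑ i, ∑ j, edgesBetween G i j := by
    simp only [Fintype.sum_prod_type, degree_eq_sum_partDegree, edgesBetween]
    exact sum_congr rfl fun i _ => sum_comm
  simp only [hsum, Fin.sum_univ_three, edgesBetween_self hG, edgesBetween_comm G 1 0,
    edgesBetween_comm G 2 0, edgesBetween_comm G 2 1] at h
  omega

theorem exists_adj_adj_of_not_adj (hsat : IsSatIn 3 G (multipartite 3 n)) {i j k : Fin 3}
    (hij : i ≠ j) (hik : i ≠ k) (hjk : j ≠ k) {a c : Fin n} (h : ¬ G.Adj (i, a) (k, c)) :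
    ∃ x, G.Adj (i, a) (j, x) ∧ G.Adj (k, c) (j, x) := by
  obtain ⟨⟨l, x⟩, h₁, h₂⟩ := hsat.exists_adj_adj_s9 (u := (i, a)) (w := (k, c)) hik h
  have hil : i ≠ l := hsat.1 h₁
  have hkl : k ≠ l := hsat.1 h₂
  obtain rfl : l = j := by omega
  exact ⟨x, h₁, h₂⟩

theorem le_partDegree_add_sum (hsat : IsSatIn 3 G (multipartite 3 n)) {i j k : Fin 3}
    (hij : i ≠ j) (hik : i ≠ k) (hjk : j ≠ k) (a : Fin n) :
    n ≤ partDegree G j (i, a) + ∑ c ∈ {c | G.Adj (i, a) (k, c)}, partDegree G j (k, c) := by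
  calc n = #(univ : Finset (Fin n)) := by simp
    _ ≤ #(({x | G.Adj (i, a) (j, x)} : Finset (Fin n)) ∪
          ({c | G.Adj (i, a) (k, c)} : Finset (Fin n)).biUnion
            fun c => {x | G.Adj (k, c) (j, x)}) :=
        card_le_card fun x _ => by
          by_cases hx : G.Adj (i, a) (j, x)
          · simp only [mem_union, mem_filter, mem_univ, true_and]
            exact .inl hx
          · obtain ⟨c, h₁, h₂⟩ := exists_adj_adj_of_not_adj hsat hik hij hjk.symm hx
            simp only [mem_union, mem_biUnion, mem_filter, mem_univ, true_and]
            exact .inr ⟨c, h₁, h₂.symm⟩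
    _ ≤ _ := (card_union_le _ _).trans (Nat.add_le_add_left card_biUnion_le _)

theorem partDegree_add_partDegree_le (hG : G.CliqueFree 3) {u w : Fin 3 × Fin n}
    (h : G.Adj u w) (j : Fin 3) : partDegree G j u + partDegree G j w ≤ n := by
  rw [partDegree, partDegree, ← card_union_of_disjoint]
  · exact (card_le_univ _).trans (by simp)
  · exact disjoint_filter.2 fun x _ hu hw => hG {u, w, (j, x)} (is3Clique_triple_iff.2 ⟨h, hu, hw⟩)

theorem adj_of_partDegree_eq_zero (hsat : IsSatIn 3 G (multipartite 3 n)) {i j k : Fin 3}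
    (hij : i ≠ j) (hik : i ≠ k) (hjk : j ≠ k) {a : Fin n} (h : partDegree G j (i, a) = 0)
    (c : Fin n) : G.Adj (i, a) (k, c) := by
  by_contra hac
  obtain ⟨x, hx, -⟩ := exists_adj_adj_of_not_adj hsat hij hik hjk hac
  simp only [partDegree, card_eq_zero, filter_eq_empty_iff, mem_univ, true_implies] at h
  exact h hx

def satPair (hsat : IsSatIn 3 G (multipartite 3 n)) {i j k : Fin 3} (hij : i ≠ j) (hik : i ≠ k)
    (hjk : j ≠ k) : SatPair n where
  adj a c := G.Adj (i, a) (k, c)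
  wl a := partDegree G j (i, a)
  wr c := partDegree G j (k, c)
  le_wl_add_sum := le_partDegree_add_sum hsat hij hik hjk
  le_wr_add_sum c := by
    simpa only [adj_comm] using le_partDegree_add_sum hsat hjk.symm hik.symm hij.symm c
  wl_add_wr_le _ _ h := partDegree_add_partDegree_le hsat.2.1 h j
  adj_of_wl_eq_zero _ := adj_of_partDegree_eq_zero hsat hij hik hjk
  adj_of_wr_eq_zero _ h a := (adj_of_partDegree_eq_zero hsat hjk.symm hik.symm hij.symm h a).symm

theorem two_mul_le_edgesBetween_add (hsat : IsSatIn 3 G (multipartite 3 n)) (hn : 2 ≤ n)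
    {i j k : Fin 3} (hij : i ≠ j) (hik : i ≠ k) (hjk : j ≠ k) :
    2 * n ≤ edgesBetween G i j + edgesBetween G i k :=
  (satPair hsat hij hik hjk).two_mul_le_sum_wl_add_numAdj hn

theorem two_mul_mul_sub_one_le_edgesBetween (hsat : IsSatIn 3 G (multipartite 3 n)) (hn : 3 ≤ n)
    {i j k : Fin 3} (hij : i ≠ j) (hik : i ≠ k) (hjk : j ≠ k) :
    2 * n * (n - 1) ≤
      ((edgesBetween G i j + edgesBetween G k j : ℕ) : ℤ) + (n - 2) * edgesBetween G i k :=
  (satPair hsat hij hik hjk).two_mul_mul_sub_one_le hn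

end

/-- Every `K_3`-saturated subgraph of `K_3^n` has at least `6n − 6` edges. -/
theorem stmt_9 (n : ℕ) (hn : 2 ≤ n)
    (G : SimpleGraph (Fin 3 × Fin n))
    (hsat : IsSatIn 3 G (multipartite 3 n)) :
    6 * (n : ℤ) - 6 ≤ (G.edgeSet.ncard : ℤ) := by
  rw [← coe_edgeFinset, Set.ncard_coe_finset, card_edgeFinset_eq hsat.1]
  have h10 := edgesBetween_comm G 1 0
  have h20 := edgesBetween_comm G 2 0
  have h21 := edgesBetween_comm G 2 1
  rcases hn.eq_or_lt with rfl | hn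
  · have h₀ := two_mul_le_edgesBetween_add hsat le_rfl (i := 0) (j := 1) (k := 2) (by decide)
      (by decide) (by decide)
    have h₁ := two_mul_le_edgesBetween_add hsat le_rfl (i := 1) (j := 0) (k := 2) (by decide)
      (by decide) (by decide)
    have h₂ := two_mul_le_edgesBetween_add hsat le_rfl (i := 2) (j := 0) (k := 1) (by decide)
      (by decide) (by decide)
    omega
  · have h₀ := two_mul_mul_sub_one_le_edgesBetween hsat hn (i := 0) (j := 1) (k := 2) (by decide)
      (by decide) (by decide)
    have h₁ := two_mul_mul_sub_one_le_edgesBetween hsat hn (i := 0) (j := 2) (k := 1) (by decide)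
      (by decide) (by decide)
    have h₂ := two_mul_mul_sub_one_le_edgesBetween hsat hn (i := 1) (j := 0) (k := 2) (by decide)
      (by decide) (by decide)
    rw [h21] at h₀
    rw [h10, h20] at h₂
    refine le_of_mul_le_mul_left ?_ (by positivity : (0 : ℤ) < n)
    push_cast at h₀ h₁ h₂ ⊢
    linarith
end

section
/- Let k ≥ 3 and n ≥ 2, and let G be a K_3-saturated subgraph of K_k^n. Then every vertex of G has degree at least 2. -/
open SimpleGraph

/-!
Saturation says that every edge `vw` of `K_k^n` is either in `G` or closes a triangle `vxw` of `G`;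
either way `v` gets a `G`-neighbour `x` with `x = w` or `x ~ w`. Applied to any `w` outside the part
of `v`, this gives a neighbour `u`. Applied to a vertex `w ≠ u` in the part of `u`, it gives a
neighbour `x ≠ u`: either `x = w`, or `x ~ w`, and then `x` lies outside the part of `u`.
-/

variable {V : Type*}

lemma SimpleGraph.CliqueFree.exists_adj_adj_of_not_cliqueFree_sup_edge_s10 {G : SimpleGraph V}
    (h : G.CliqueFree 3) {v w : V} (hvw : ¬(G ⊔ edge v w).CliqueFree 3) :
    ∃ x, G.Adj v x ∧ G.Adj w x := by
  classical
  obtain ⟨t, ht⟩ := not_forall_not.1 hvw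
  have hv : v ∈ t := h.mem_of_sup_edge_isNClique ht
  have hw : w ∈ t := h.mem_of_sup_edge_isNClique (edge_comm v w ▸ ht)
  obtain ⟨x, hxt, hxv, hxw⟩ : ∃ x ∈ t, x ≠ v ∧ x ≠ w := by
    by_contra! hsub
    have : t ⊆ {v, w} := fun x hx =>
      Finset.mem_insert.2 <| (em (x = v)).imp id fun hxv => Finset.mem_singleton.2 (hsub x hx hxv)
    have := (Finset.card_le_card this).trans Finset.card_le_two
    rw [ht.card_eq] at this
    omega
  have adj_x : ∀ y ∈ t, y ≠ x → G.Adj y x := fun y hy hyx => by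
    rcases ht.isClique hy hxt hyx with hG | he
    · exact hG
    · obtain ⟨⟨-, hxw'⟩ | ⟨-, hxv'⟩, -⟩ := (edge_adj v w y x).1 he
      exacts [absurd hxw' hxw, absurd hxv' hxv]
  exact ⟨x, adj_x v hv hxv.symm, adj_x w hw hxw.symm⟩

lemma IsSatIn.exists_adj_eq_or_adj {J G : SimpleGraph V} (h : IsSatIn 3 J G) {v w : V}
    (hvw : G.Adj v w) : ∃ x, J.Adj v x ∧ (x = w ∨ J.Adj w x) := by
  by_cases hJ : J.Adj v w
  · exact ⟨w, hJ, .inl rfl⟩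
  · obtain ⟨x, hvx, hwx⟩ :=
      h.2.1.exists_adj_adj_of_not_cliqueFree_sup_edge_s10 (h.2.2 v w hvw hJ)
    exact ⟨x, hvx, .inr hwx⟩

/-- Every vertex of a `K_3`-saturated subgraph of `K_k^n` has degree at least `2`. -/
theorem stmt_10 (k n : ℕ) (hk : 3 ≤ k) (hn : 2 ≤ n)
    (G : SimpleGraph (Fin k × Fin n))
    (hsat : IsSatIn 3 G (multipartite k n)) :
    ∀ v, 2 ≤ (G.neighborSet v).ncard := by
  intro v
  have : Nontrivial (Fin k) := Fin.nontrivial_iff_two_le.2 (by omega)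
  have : Nontrivial (Fin n) := Fin.nontrivial_iff_two_le.2 hn
  obtain ⟨i, hi⟩ := exists_ne v.1
  obtain ⟨u, hvu, -⟩ := hsat.exists_adj_eq_or_adj (w := (i, v.2)) hi.symm
  obtain ⟨j, hj⟩ := exists_ne u.2
  have hwu : ((u.1, j) : Fin k × Fin n) ≠ u := fun h => hj (congrArg Prod.snd h)
  obtain ⟨x, hvx, hxw⟩ :=
    hsat.exists_adj_eq_or_adj (w := (u.1, j)) fun h => hsat.1 hvu h
  have hxu : x ≠ u := by
    rintro rfl
    rcases hxw with h | h
    exacts [hwu h.symm, hsat.1 h rfl]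
  exact (Set.one_lt_ncard_iff).2 ⟨u, x, hvu, hvx, hxu.symm⟩
end

section
/- Let t ≥ 4, k ≥ 2t − 4 and n ≥ 2. Let G_{k,n,t} be the subgraph of K_k^n whose edges are: all pairs {v_r^1, v_s^1} with 1 ≤ r < s ≤ 2t−4 except the matching pairs {v_1^1 v_2^1, v_3^1 v_4^1, ..., v_{2t−5}^1 v_{2t−4}^1}; all pairs {v_r^i, v_{r+1}^j} with i ≥ 2, j ≥ 2 and r ∈ {1, 3, ..., 2t−5}; all pairs {v_r^i, v_s^1} with i ≥ 2, r ≤ 2t−4, s ≤ 2t−4 and r ≠ s; and all pairs {v_r^i, v_s^1} with 1 ≤ i ≤ n, r > 2t−4 and s ≤ 2t−4. Then G_{k,n,t} is a K_t-saturated subgraph of K_k^n and its number of edges equals (t−2)n^2 + (2t−4)kn − 2(2t−4)n − C(2t−4, 2), where C(2t−4, 2) denotes the binomial coefficient (2t−4 choose 2). -/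
/-!
Write `m = t - 2`. The low parts `r < 2m` come in the `m` pairs `{2a, 2a + 1}` of the removed
matching, the other parts are high, and row `0` consists of the vertices `v_r^1`.

A clique meets the high parts in at most one vertex, since they are independent, so by
pigeonhole over the `m + 1` blocks (the `m` pairs and the high parts) a `K_t` has two vertices
in one pair. These are adjacent only if one of them lies off row `0`, and then every other
clique vertex lies on row `0` of a different pair, leaving room for at most `m - 1` of them.

For saturation, a non-edge `uw` of `K_k^n` is completed to a `K_t` by `m` row-`0` vertices, one
from each pair and avoiding the parts of `u` and `w`; when `u` and `w` are the two row-`0`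
vertices of one pair, that pair's vertex is replaced by a vertex off row `0` of another pair.

The edge count is the handshake lemma: high vertices have degree `2m`, low row-`0` vertices
`(k - 2) + (k - 1)(n - 1)`, and the other low vertices `(2m - 1) + (n - 1)`.
-/

open SimpleGraph

open Finset

theorem SimpleGraph.not_cliqueFree_sup_edge {V : Type*} {G : SimpleGraph V} {m : ℕ} {u w : V}
    (g : Fin m → V) (hg : Pairwise fun i j => G.Adj (g i) (g j)) (hu : ∀ i, G.Adj u (g i))
    (hw : ∀ i, G.Adj w (g i)) (huw : u ≠ w) :
    ¬ (G ⊔ fromEdgeSet {s(u, w)}).CliqueFree (m + 2) := by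
  classical
  have hg_inj : g.Injective := fun i j hij => by
    by_contra hne
    exact (hg hne).ne hij
  have hclique : G.IsNClique m (univ.image g) := by
    refine ⟨?_, by rw [card_image_of_injective _ hg_inj, card_fin]⟩
    rw [coe_image, coe_univ, Set.image_univ]
    rintro _ ⟨i, rfl⟩ _ ⟨j, rfl⟩ hne
    exact hg fun h => hne (congrArg g h)
  have hle : G ≤ G ⊔ fromEdgeSet {s(u, w)} := le_sup_left
  intro hfree
  refine hfree (insert u (insert w (univ.image g))) (((hclique.mono hle).insert ?_).insert ?_)
  · simpa using fun i => hle (hw i)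
  · simpa [huw] using fun i => hle (hu i)

theorem Fin.card_filter_prod_val_snd_eq_zero_or {k n : ℕ} (hn : n ≠ 0) (P Q : Fin k → Prop)
    [DecidablePred P] [DecidablePred Q] :
    #{w : Fin k × Fin n | P w.1 ∧ (w.2 : ℕ) = 0 ∨ Q w.1 ∧ (w.2 : ℕ) ≠ 0} =
      #{r | P r} + #{r | Q r} * (n - 1) := by
  have hzero : #{i : Fin n | (i : ℕ) = 0} = 1 :=
    card_eq_one.mpr ⟨⟨0, Nat.pos_of_ne_zero hn⟩, by ext; simp [Fin.ext_iff]⟩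
  have hnonzero : #{i : Fin n | (i : ℕ) ≠ 0} = n - 1 := by
    rw [filter_not, card_sdiff_of_subset (filter_subset _ _), hzero, card_univ, Fintype.card_fin]
  rw [filter_or, card_union_of_disjoint (disjoint_filter.mpr fun _ _ h h' => h'.2 h.2),
    ← univ_product_univ, filter_product P (fun i : Fin n => (i : ℕ) = 0),
    filter_product Q (fun i : Fin n => (i : ℕ) ≠ 0), card_product, card_product, hzero,
    hnonzero, mul_one]

theorem Fin.exists_div_two_partner {k : ℕ} (a : Fin k) (ha : 2 * ((a : ℕ) / 2) + 1 < k) :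
    ∃ p : Fin k, p ≠ a ∧ ∀ r : Fin k, (r : ℕ) / 2 = (a : ℕ) / 2 ↔ r = a ∨ r = p :=
  ⟨⟨a + 1 - 2 * (a % 2), by omega⟩, by simp only [ne_eq, Fin.ext_iff]; omega,
    fun r => by simp only [Fin.ext_iff]; omega⟩

/-- The graph `G_{k,n,t}` of the statement, written with `m = t - 2`. -/
def construction (m k n : ℕ) : SimpleGraph (Fin k × Fin n) :=
  SimpleGraph.fromRel fun u w =>
    ((u.1 : ℕ) < 2 * m ∧ (w.1 : ℕ) < 2 * m ∧ u.1 ≠ w.1 ∧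
      (u.2 : ℕ) = 0 ∧ (w.2 : ℕ) = 0 ∧ (u.1 : ℕ) / 2 ≠ (w.1 : ℕ) / 2) ∨
    ((u.1 : ℕ) < 2 * m ∧ (w.1 : ℕ) < 2 * m ∧ u.1 ≠ w.1 ∧
      (u.1 : ℕ) / 2 = (w.1 : ℕ) / 2 ∧ (u.2 : ℕ) ≠ 0 ∧ (w.2 : ℕ) ≠ 0) ∨
    ((u.1 : ℕ) < 2 * m ∧ (w.1 : ℕ) < 2 * m ∧ u.1 ≠ w.1 ∧
      (u.2 : ℕ) ≠ 0 ∧ (w.2 : ℕ) = 0) ∨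
    (2 * m ≤ (u.1 : ℕ) ∧ (w.1 : ℕ) < 2 * m ∧ (w.2 : ℕ) = 0)

namespace construction

variable {m k n : ℕ}

theorem adj_iff {u w : Fin k × Fin n} :
    (construction m k n).Adj u w ↔ (u.1 : ℕ) ≠ w.1 ∧
      ((u.1 : ℕ) < 2 * m ∧ (w.1 : ℕ) < 2 * m ∧
          ((u.2 : ℕ) = 0 → (w.2 : ℕ) = 0 → (u.1 : ℕ) / 2 ≠ (w.1 : ℕ) / 2) ∧
          ((u.2 : ℕ) ≠ 0 → (w.2 : ℕ) ≠ 0 → (u.1 : ℕ) / 2 = (w.1 : ℕ) / 2) ∨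
        2 * m ≤ (u.1 : ℕ) ∧ (w.1 : ℕ) < 2 * m ∧ (w.2 : ℕ) = 0 ∨
        (u.1 : ℕ) < 2 * m ∧ 2 * m ≤ (w.1 : ℕ) ∧ (u.2 : ℕ) = 0) := by
  simp only [construction, fromRel_adj, ne_eq, Prod.ext_iff, ← Fin.val_inj]
  omega

instance : DecidableRel (construction m k n).Adj := fun _ _ => decidable_of_iff _ adj_iff.symm

theorem le_multipartite : construction m k n ≤ multipartite k n := fun _ _ h =>
  Fin.val_ne_iff.mp (adj_iff.mp h).1

theorem cliqueFree : (construction m k n).CliqueFree (m + 2) := by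
  intro s hs
  let block : Fin k × Fin n → ℕ := fun x => if (x.1 : ℕ) < 2 * m then (x.1 : ℕ) / 2 else m
  obtain ⟨u, hu, v, hv, huv, hblock⟩ := exists_ne_map_eq_of_card_lt_of_maps_to
    (s := s) (t := range (m + 1)) (by simp [hs.card_eq]) (f := block)
    (fun x _ => by simp only [block, coe_range, Set.mem_Iio]; split_ifs <;> omega)
  have huv_adj := adj_iff.mp (hs.isClique hu hv huv)
  have hpair : (u.1 : ℕ) < 2 * m ∧ (v.1 : ℕ) < 2 * m ∧ (u.1 : ℕ) / 2 = (v.1 : ℕ) / 2 := by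
    simp only [block] at hblock
    split_ifs at hblock <;> omega
  have hrest : ∀ x ∈ (s.erase u).erase v,
      (x.1 : ℕ) < 2 * m ∧ (x.2 : ℕ) = 0 ∧ (x.1 : ℕ) / 2 ≠ (u.1 : ℕ) / 2 := by
    intro x hx
    simp only [mem_erase] at hx
    have hxu := adj_iff.mp (hs.isClique hx.2.2 hu hx.2.1)
    have hxv := adj_iff.mp (hs.isClique hx.2.2 hv hx.1)
    omega
  have hcard : #((s.erase u).erase v) = m := by
    rw [card_erase_of_mem (mem_erase.mpr ⟨huv.symm, hv⟩), card_erase_of_mem hu, hs.card_eq]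
    rfl
  obtain ⟨x, hx, y, hy, hxy, hxy_pair⟩ := exists_ne_map_eq_of_card_lt_of_maps_to
    (s := (s.erase u).erase v) (t := (range m).erase ((u.1 : ℕ) / 2))
    (f := fun x : Fin k × Fin n => (x.1 : ℕ) / 2)
    (by rw [hcard, card_erase_of_mem (mem_range.mpr (by omega)), card_range]; omega)
    (fun x hx => by
      simp only [coe_erase, coe_range, Set.mem_sdiff, Set.mem_Iio, Set.mem_singleton_iff]
      have := hrest x hx
      omega)
  have hxy_adj := adj_iff.mp (hs.isClique (mem_of_mem_erase (mem_of_mem_erase hx))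
    (mem_of_mem_erase (mem_of_mem_erase hy)) hxy)
  have := hrest x hx
  have := hrest y hy
  omega

theorem not_cliqueFree_sup_edge_of_not_adj (hm : 2 ≤ m) (hk : 2 * m ≤ k) (hn : 2 ≤ n)
    (u w : Fin k × Fin n) (huw : (multipartite k n).Adj u w)
    (hnadj : ¬ (construction m k n).Adj u w) :
    ¬ (construction m k n ⊔ fromEdgeSet {s(u, w)}).CliqueFree (m + 2) := by
  have huw' : (u.1 : ℕ) ≠ w.1 := Fin.val_ne_iff.mpr huw
  rw [adj_iff] at hnadj
  by_cases htop : (u.1 : ℕ) < 2 * m ∧ (u.2 : ℕ) = 0 ∧ (w.1 : ℕ) < 2 * m ∧ (w.2 : ℕ) = 0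
  · obtain ⟨c, hcm, hcp⟩ : ∃ c < m, c ≠ (u.1 : ℕ) / 2 :=
      ⟨if (u.1 : ℕ) / 2 = 0 then 1 else 0, by split_ifs <;> omega, by split_ifs <;> omega⟩
    refine not_cliqueFree_sup_edge (fun j => if (j : ℕ) = (u.1 : ℕ) / 2
      then (⟨2 * c, by omega⟩, ⟨1, by omega⟩) else (⟨2 * j + 1, by omega⟩, ⟨0, by omega⟩))
      ?_ ?_ ?_ huw.ne
    · intro i j hij
      have := Fin.val_ne_of_ne hij
      split_ifs <;> simp only [adj_iff, and_true] <;> omega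
    all_goals
      intro j
      split_ifs <;> simp only [adj_iff, and_true] <;> omega
  · -- Now `u.1`, `w.1` are not the two parts of one pair, so every pair has a part avoiding both.
    refine not_cliqueFree_sup_edge (fun j => (⟨if 2 * (j : ℕ) = u.1 ∨ 2 * (j : ℕ) = w.1
      then 2 * j + 1 else 2 * j, by split_ifs <;> omega⟩, ⟨0, by omega⟩)) ?_ ?_ ?_ huw.ne
    · intro i j hij
      have := Fin.val_ne_of_ne hij
      simp only [adj_iff, and_true]
      split_ifs <;> omega
    all_goals
      intro j
      simp only [adj_iff, and_true]
      split_ifs <;> omega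

theorem isSatIn (hm : 2 ≤ m) (hk : 2 * m ≤ k) (hn : 2 ≤ n) :
    IsSatIn (m + 2) (construction m k n) (multipartite k n) :=
  ⟨le_multipartite, cliqueFree, not_cliqueFree_sup_edge_of_not_adj hm hk hn⟩

theorem degree_of_high (hk : 2 * m ≤ k) (hn : n ≠ 0) {v : Fin k × Fin n}
    (hv : 2 * m ≤ (v.1 : ℕ)) : (construction m k n).degree v = 2 * m := by
  rw [← card_neighborFinset_eq_degree, neighborFinset_eq_filter,
    filter_congr (q := fun w : Fin k × Fin n => (w.1 : ℕ) < 2 * m ∧ (w.2 : ℕ) = 0 ∨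
      False ∧ (w.2 : ℕ) ≠ 0) (fun w _ => by rw [adj_iff, false_and, or_false]; omega),
    Fin.card_filter_prod_val_snd_eq_zero_or hn (fun r => (r : ℕ) < 2 * m) (fun _ => False),
    Fin.card_filter_val_lt]
  simp [hk]

theorem degree_of_low_of_snd_eq_zero (hk : 2 * m ≤ k) (hn : n ≠ 0) {v : Fin k × Fin n}
    (hv₁ : (v.1 : ℕ) < 2 * m) (hv₂ : (v.2 : ℕ) = 0) :
    (construction m k n).degree v = (k - 2) + (k - 1) * (n - 1) := by
  obtain ⟨p, hpv, hp⟩ := Fin.exists_div_two_partner v.1 (by omega)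
  rw [← card_neighborFinset_eq_degree, neighborFinset_eq_filter,
    filter_congr (q := fun w : Fin k × Fin n => (w.1 : ℕ) / 2 ≠ (v.1 : ℕ) / 2 ∧ (w.2 : ℕ) = 0 ∨
      w.1 ≠ v.1 ∧ (w.2 : ℕ) ≠ 0) (fun w _ => by simp only [adj_iff, ne_eq, Fin.ext_iff]; omega),
    Fin.card_filter_prod_val_snd_eq_zero_or hn (fun r => (r : ℕ) / 2 ≠ (v.1 : ℕ) / 2)
      (fun r => r ≠ v.1), filter_ne']
  have hpair :
      ({r | (r : ℕ) / 2 ≠ (v.1 : ℕ) / 2} : Finset (Fin k)) = (univ.erase v.1).erase p := by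
    ext r
    simp only [mem_filter, mem_univ, true_and, ne_eq, hp, mem_erase, not_or]
    tauto
  rw [hpair, card_erase_of_mem (by simpa using hpv), card_erase_of_mem (mem_univ _), card_univ,
    Fintype.card_fin]
  omega

theorem degree_of_low_of_snd_ne_zero (hk : 2 * m ≤ k) (hn : n ≠ 0) {v : Fin k × Fin n}
    (hv₁ : (v.1 : ℕ) < 2 * m) (hv₂ : (v.2 : ℕ) ≠ 0) :
    (construction m k n).degree v = (2 * m - 1) + (n - 1) := by
  obtain ⟨p, hpv, hp⟩ := Fin.exists_div_two_partner v.1 (by omega)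
  rw [← card_neighborFinset_eq_degree, neighborFinset_eq_filter,
    filter_congr (q := fun w : Fin k × Fin n => ((w.1 : ℕ) < 2 * m ∧ w.1 ≠ v.1) ∧ (w.2 : ℕ) = 0 ∨
      ((w.1 : ℕ) / 2 = (v.1 : ℕ) / 2 ∧ w.1 ≠ v.1) ∧ (w.2 : ℕ) ≠ 0)
      (fun w _ => by simp only [adj_iff, ne_eq, Fin.ext_iff]; omega),
    Fin.card_filter_prod_val_snd_eq_zero_or hn (fun r => (r : ℕ) < 2 * m ∧ r ≠ v.1)
      (fun r => (r : ℕ) / 2 = (v.1 : ℕ) / 2 ∧ r ≠ v.1), ← filter_filter, filter_ne']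
  have hpartner : ({r | (r : ℕ) / 2 = (v.1 : ℕ) / 2 ∧ r ≠ v.1} : Finset (Fin k)) = {p} := by
    ext r
    simp only [mem_filter, mem_univ, true_and, mem_singleton, hp]
    constructor
    · tauto
    · rintro rfl; exact ⟨Or.inr rfl, hpv⟩
  rw [hpartner, card_singleton, card_erase_of_mem (by simpa using hv₁), Fin.card_filter_val_lt]
  omega

theorem sum_degrees (hk : 2 * m ≤ k) (hn : n ≠ 0) :
    ∑ v, (construction m k n).degree v =
      (k - 2 * m) * n * (2 * m) +
        2 * m * ((k - 2) + (k - 1) * (n - 1) + (n - 1) * ((2 * m - 1) + (n - 1))) := by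
  have hrow : ∀ r : Fin k, ∑ i : Fin n, (construction m k n).degree (r, i) =
      if 2 * m ≤ (r : ℕ) then n * (2 * m)
      else (k - 2) + (k - 1) * (n - 1) + (n - 1) * ((2 * m - 1) + (n - 1)) := by
    intro r
    obtain ⟨n', rfl⟩ := Nat.exists_eq_succ_of_ne_zero hn
    rw [Fin.sum_univ_succ]
    split_ifs with hr
    · rw [sum_congr rfl fun i _ => degree_of_high (v := (r, i.succ)) hk hn hr,
        degree_of_high (v := (r, 0)) hk hn hr]
      simp only [sum_const, card_univ, Fintype.card_fin, smul_eq_mul, Nat.succ_eq_add_one]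
      ring
    · rw [not_le] at hr
      rw [degree_of_low_of_snd_eq_zero (v := (r, 0)) hk hn hr rfl,
        sum_congr rfl fun i _ =>
          degree_of_low_of_snd_ne_zero (v := (r, i.succ)) hk hn hr (by simp)]
      simp
  obtain ⟨l, rfl⟩ := Nat.exists_eq_add_of_le hk
  rw [Fintype.sum_prod_type, Fin.sum_univ_add]
  simp only [hrow, Fin.val_castAdd, fun x : Fin (2 * m) => not_le.mpr x.isLt, ↓reduceIte,
    Fin.val_natAdd, le_add_iff_nonneg_right, zero_le, sum_const, card_univ, Fintype.card_fin,
    smul_eq_mul, add_tsub_cancel_left]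
  ring

theorem ncard_edgeSet (hm : 0 < m) (hk : 2 * m ≤ k) (hn : n ≠ 0) :
    ((construction m k n).edgeSet.ncard : ℤ) =
      m * n ^ 2 + 2 * m * (k * n) - 2 * (2 * m) * n - ((2 * m).choose 2 : ℤ) := by
  have hdeg := sum_degrees hk hn
  rw [sum_degrees_eq_twice_card_edges] at hdeg
  have hchoose : (2 * m).choose 2 = m * (2 * m - 1) := by
    rw [Nat.choose_two_right, mul_assoc, Nat.mul_div_cancel_left _ two_pos]
  rw [← coe_edgeFinset, Set.ncard_coe_finset, hchoose]
  zify [hk, show 2 ≤ k by omega, show 1 ≤ k by omega, show 1 ≤ n by omega,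
    show 1 ≤ 2 * m by omega] at hdeg ⊢
  linarith

end construction

/-- Construction 3: the graph `G_{k,n,t}` (partite sets and vertices indexed from `0`
here, so `v_r^1` of the paper is the vertex `(r-1, 0)`, and the matching removed from
the clique on `S = {v_1^1, …, v_{2t-4}^1}` consists of the pairs `{2a, 2a+1}`) is a
`K_t`-saturated subgraph of `K_k^n` with
`(t−2)n² + (2t−4)kn − 2(2t−4)n − C(2t−4, 2)` edges. -/
theorem stmt_12 (t k n : ℕ) (ht : 4 ≤ t) (hk : 2 * t - 4 ≤ k) (hn : 2 ≤ n)
    (G : SimpleGraph (Fin k × Fin n))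
    (hG : G = SimpleGraph.fromRel (fun u w =>
      -- the clique on `S` minus the matching
      ((u.1 : ℕ) < 2 * t - 4 ∧ (w.1 : ℕ) < 2 * t - 4 ∧ u.1 ≠ w.1 ∧
        (u.2 : ℕ) = 0 ∧ (w.2 : ℕ) = 0 ∧ (u.1 : ℕ) / 2 ≠ (w.1 : ℕ) / 2) ∨
      -- `V_r − v_r^1` completely joined to `V_{r+1} − v_{r+1}^1` for matched pairs
      ((u.1 : ℕ) < 2 * t - 4 ∧ (w.1 : ℕ) < 2 * t - 4 ∧ u.1 ≠ w.1 ∧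
        (u.1 : ℕ) / 2 = (w.1 : ℕ) / 2 ∧ (u.2 : ℕ) ≠ 0 ∧ (w.2 : ℕ) ≠ 0) ∨
      -- `v_r^i` for `i ≥ 2`, `r ≤ 2t−4` joined to `v_s^1` for `s ≤ 2t−4`, `s ≠ r`
      ((u.1 : ℕ) < 2 * t - 4 ∧ (w.1 : ℕ) < 2 * t - 4 ∧ u.1 ≠ w.1 ∧
        (u.2 : ℕ) ≠ 0 ∧ (w.2 : ℕ) = 0) ∨
      -- all vertices outside the first `2t−4` parts joined to `S`
      (2 * t - 4 ≤ (u.1 : ℕ) ∧ (w.1 : ℕ) < 2 * t - 4 ∧ (w.2 : ℕ) = 0))) :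
    IsSatIn t G (multipartite k n) ∧
      (G.edgeSet.ncard : ℤ) =
        ((t : ℤ) - 2) * n ^ 2 + (2 * (t : ℤ) - 4) * (k * n) - 2 * (2 * (t : ℤ) - 4) * n -
          ((2 * t - 4).choose 2 : ℤ) := by
  obtain ⟨m, rfl⟩ : ∃ m, t = m + 2 := ⟨t - 2, by omega⟩
  rw [show 2 * (m + 2) - 4 = 2 * m by omega] at hk hG ⊢
  obtain rfl : G = construction m k n := hG
  refine ⟨construction.isSatIn (by omega) hk hn, ?_⟩
  rw [construction.ncard_edgeSet (by omega) hk (by omega)]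
  push_cast
  ring
end

section
/- For all t ≥ 3, k ≥ 2t − 3 and n ≥ 2, sat(K_t, K_k^n) ≤ min{(2t−4)kn + (t−2)n^2 − 2(2t−4)n − C(2t−4, 2), (2t−3)kn − (2t−3)n − (2t−3)(t−1)}, where C(2t−4, 2) denotes the binomial coefficient (2t−4 choose 2); that is, there exists a K_t-saturated subgraph of K_k^n with at most that many edges. -/
open SimpleGraph

/-!
Write `t = s + 3`. Both bounds come from one construction. Pick a graph `H` on part indices
`0, …, P - 1` and a graph `M` on part indices; in each of the first `P` parts choose one *core*
vertex. Core vertices are joined according to `H`, a core vertex is joined to every non-core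
vertex outside its part, and non-core vertices are joined according to `M`. A clique uses at
most two non-core vertices (`M` is triangle-free), so `K_t`-freeness reduces to bounds on the
cliques of `H`; a missing edge is completed to a `K_t` by an `(s + 1)`-clique of core vertices
(missing edge between non-core vertices) or by an `s`-clique of core vertices plus a non-core
vertex in a free part (missing edge between core vertices). The cocktail party graph
`H = K_{2s+2} - M`, with `M` its deleted perfect matching, gives the first bound; the complement
of the cycle `C_{2s+3}` with `M` empty gives the second. The edge counts come from the degree
sum, each degree being determined by whether the vertex is core and whether its part is among
the first `P`.
-/

open Finset

open scoped Classical

namespace MultipartiteSat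

variable {k n P s : ℕ} {H M : SimpleGraph ℕ}

lemma isNClique_sup_edge_insert_insert {V : Type*} {G : SimpleGraph V} {u w : V} {T : Finset V}
    {m : ℕ} (huw : u ≠ w) (hT : G.IsNClique m T) (hu : ∀ x ∈ T, G.Adj u x)
    (hw : ∀ x ∈ T, G.Adj w x) : (G ⊔ edge u w).IsNClique (m + 2) (insert u (insert w T)) := by
  refine ((hT.mono le_sup_left).insert fun x hx => Or.inl (hw x hx)).insert fun x hx => ?_
  rcases mem_insert.mp hx with rfl | hx
  · exact Or.inr ((edge_adj _ _ _ _).mpr ⟨Or.inl ⟨rfl, rfl⟩, huw⟩)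
  · exact Or.inl (hu x hx)

lemma card_filter_compl_adj {V : Type*} [DecidableEq V] (G : SimpleGraph V) [DecidableRel G.Adj]
    {S : Finset V} {a : V} (ha : a ∈ S) :
    #{x ∈ S | Gᶜ.Adj a x} = #S - 1 - #{x ∈ S | G.Adj a x} := by
  have hG : {x ∈ S | G.Adj a x} = {x ∈ S.erase a | G.Adj a x} := by
    ext x
    simp only [mem_filter, mem_erase]
    exact ⟨fun h => ⟨⟨h.2.ne.symm, h.1⟩, h.2⟩, fun h => ⟨h.1.2, h.2⟩⟩
  have hc : {x ∈ S | Gᶜ.Adj a x} = S.erase a \ {x ∈ S.erase a | G.Adj a x} := by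
    ext x
    simp only [mem_filter, mem_erase, mem_sdiff, compl_adj]
    tauto
  rw [hc, hG, card_sdiff_of_subset (filter_subset _ _), card_erase_of_mem ha]

lemma sum_eq_card_mul_add_card_mul {α : Type*} [Fintype α] (p : α → Prop) [DecidablePred p]
    {f : α → ℕ} {x y : ℕ} (hx : ∀ a, p a → f a = x) (hy : ∀ a, ¬p a → f a = y) :
    ∑ a, f a = #{a | p a} * x + #{a | ¬p a} * y := by
  rw [← sum_filter_add_sum_filter_not univ p,
    sum_congr rfl fun a ha => hx a (mem_filter.mp ha).2,
    sum_congr rfl fun a ha => hy a (mem_filter.mp ha).2, sum_const, sum_const, smul_eq_mul,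
    smul_eq_mul]

lemma card_filter_val_eq_zero (hn : 0 < n) : #{j : Fin n | (j : ℕ) = 0} = 1 :=
  card_eq_one.mpr ⟨⟨0, hn⟩, by ext j; simp [Fin.ext_iff]⟩

lemma card_filter_val_ne_zero (hn : 0 < n) : #{j : Fin n | ¬(j : ℕ) = 0} = n - 1 := by
  have := card_filter_add_card_filter_not (s := (univ : Finset (Fin n))) (fun j => (j : ℕ) = 0)
  rw [card_filter_val_eq_zero hn, card_univ, Fintype.card_fin] at this
  omega

lemma card_filter_val_not_lt (hPk : P ≤ k) : #{i : Fin k | ¬(i : ℕ) < P} = k - P := by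
  have := card_filter_add_card_filter_not (s := (univ : Finset (Fin k))) (fun i => (i : ℕ) < P)
  rw [Fin.card_filter_val_lt, card_univ, Fintype.card_fin] at this
  omega

lemma card_filter_fin_eq_add {p : Fin k → Prop} [DecidablePred p] (q : ℕ → Prop)
    [DecidablePred q] (hpq : ∀ i : Fin k, p i ↔ q i) (hPk : P ≤ k) :
    #{i | p i} = #{i ∈ range P | q i} + #{i ∈ Ico P k | q i} := by
  rw [filter_congr fun i _ => hpq i, card_filter, card_filter, card_filter,
    sum_range_add_sum_Ico _ hPk]
  exact Fin.sum_univ_eq_sum_range (fun i => if q i then 1 else 0) k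

lemma degree_eq_sum_card_row {α β : Type*} [Fintype α] [Fintype β] (G : SimpleGraph (α × β))
    (v : α × β) : G.degree v = ∑ j, #{i | G.Adj v (i, j)} := by
  rw [← card_neighborFinset_eq_degree, neighborFinset_eq_filter, card_filter,
    Fintype.sum_prod_type_right]
  simp only [card_filter]

def IsCore {k n : ℕ} (P : ℕ) (v : Fin k × Fin n) : Prop := (v.1 : ℕ) < P ∧ (v.2 : ℕ) = 0

def coreGraph (k n P : ℕ) (H M : SimpleGraph ℕ) : SimpleGraph (Fin k × Fin n) where
  Adj u w := u.1 ≠ w.1 ∧ (IsCore P u → IsCore P w → H.Adj u.1 w.1) ∧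
    (¬IsCore P u → ¬IsCore P w → M.Adj u.1 w.1)
  symm := ⟨fun _ _ h => ⟨h.1.symm, fun hw hu => (h.2.1 hu hw).symm,
    fun hw hu => (h.2.2 hu hw).symm⟩⟩
  loopless := ⟨fun _ h => h.1 rfl⟩

lemma coreGraph_adj {u w : Fin k × Fin n} :
    (coreGraph k n P H M).Adj u w ↔
      u.1 ≠ w.1 ∧ (IsCore P u → IsCore P w → H.Adj u.1 w.1) ∧
        (¬IsCore P u → ¬IsCore P w → M.Adj u.1 w.1) :=
  Iff.rfl

lemma coreGraph_le_multipartite : coreGraph k n P H M ≤ multipartite k n := fun _ _ h => h.1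

lemma coreGraph_adj_of_isCore_of_not_isCore {u w : Fin k × Fin n} (hu : IsCore P u)
    (hw : ¬IsCore P w) (huw : u.1 ≠ w.1) : (coreGraph k n P H M).Adj u w :=
  ⟨huw, fun _ hw' => absurd hw' hw, fun hu' => absurd hu hu'⟩

lemma card_add_card_le_of_isClique
    (hH : ∀ I ⊆ range P, H.IsClique (I : Set ℕ) → #I ≤ s + 1)
    (hHM : ∀ i j, M.Adj i j →
      ∀ I ⊆ range P, H.IsClique (I : Set ℕ) → i ∉ I → j ∉ I → #I ≤ s)
    (hM : M.CliqueFree 3) {I N : Finset ℕ} (hIP : I ⊆ range P) (hI : H.IsClique (I : Set ℕ))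
    (hN : M.IsClique (N : Set ℕ)) (hIN : Disjoint I N) : #I + #N ≤ s + 2 := by
  have hN2 : #N ≤ 2 := by
    by_contra! h
    obtain ⟨N', hN'N, hN'⟩ := exists_subset_card_eq (show 3 ≤ #N from h)
    exact hM N' ⟨hN.subset hN'N, hN'⟩
  rcases Nat.lt_or_ge #N 2 with h | h
  · have := hH I hIP hI
    omega
  · obtain ⟨i, j, hij, rfl⟩ := card_eq_two.mp (le_antisymm hN2 h)
    have hadj : M.Adj i j := hN (by simp) (by simp) hij
    have := hHM i j hadj I hIP hI (disjoint_right.mp hIN (by simp))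
      (disjoint_right.mp hIN (by simp))
    omega

theorem coreGraph_cliqueFree
    (hH : ∀ I ⊆ range P, H.IsClique (I : Set ℕ) → #I ≤ s + 1)
    (hHM : ∀ i j, M.Adj i j →
      ∀ I ⊆ range P, H.IsClique (I : Set ℕ) → i ∉ I → j ∉ I → #I ≤ s)
    (hM : M.CliqueFree 3) : (coreGraph k n P H M).CliqueFree (s + 3) := by
  intro S hS
  have hadj {x y} (hx : x ∈ S) (hy : y ∈ S) (hxy : x ≠ y) :=
    coreGraph_adj.mp (hS.isClique hx hy hxy)
  let part : Fin k × Fin n → ℕ := fun v => v.1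
  have hinj : Set.InjOn part S := fun x hx y hy hxy => by
    by_contra hne
    exact (hadj hx hy hne).1 (Fin.val_injective hxy)
  have hcard : #((S.filter (IsCore P)).image part) + #((S.filter (¬IsCore P ·)).image part) =
      s + 3 := by
    rw [card_image_of_injOn (hinj.mono (coe_subset.mpr (filter_subset _ _))),
      card_image_of_injOn (hinj.mono (coe_subset.mpr (filter_subset _ _))),
      card_filter_add_card_filter_not, hS.card_eq]
  set I := (S.filter (IsCore P)).image part
  set N := (S.filter (¬IsCore P ·)).image part
  have hIP : I ⊆ range P := by
    intro a ha
    obtain ⟨v, hv, rfl⟩ := mem_image.mp ha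
    exact mem_range.mpr (mem_filter.mp hv).2.1
  have hI : H.IsClique (I : Set ℕ) := by
    rintro _ ha _ hb hab
    obtain ⟨x, hx, rfl⟩ := mem_image.mp ha
    obtain ⟨y, hy, rfl⟩ := mem_image.mp hb
    rw [mem_filter] at hx hy
    exact (hadj hx.1 hy.1 (fun h => hab (h ▸ rfl))).2.1 hx.2 hy.2
  have hN : M.IsClique (N : Set ℕ) := by
    rintro _ ha _ hb hab
    obtain ⟨x, hx, rfl⟩ := mem_image.mp ha
    obtain ⟨y, hy, rfl⟩ := mem_image.mp hb
    rw [mem_filter] at hx hy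
    exact (hadj hx.1 hy.1 (fun h => hab (h ▸ rfl))).2.2 hx.2 hy.2
  have hIN : Disjoint I N := by
    refine disjoint_left.mpr fun a ha hb => ?_
    obtain ⟨x, hx, rfl⟩ := mem_image.mp ha
    obtain ⟨y, hy, hyx⟩ := mem_image.mp hb
    rw [mem_filter] at hx hy
    exact (hadj hx.1 hy.1 (by rintro rfl; exact hy.2 hx.2)).1 (Fin.val_injective hyx.symm)
  have := card_add_card_le_of_isClique hH hHM hM hIP hI hN hIN
  omega

def coreLift (k n : ℕ) (I : Finset ℕ) : Finset (Fin k × Fin n) :=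
  {v | (v.1 : ℕ) ∈ I ∧ (v.2 : ℕ) = 0}

lemma mem_coreLift {I : Finset ℕ} {v : Fin k × Fin n} :
    v ∈ coreLift k n I ↔ (v.1 : ℕ) ∈ I ∧ (v.2 : ℕ) = 0 := by
  simp [coreLift]

lemma card_coreLift {I : Finset ℕ} (hI : I ⊆ range k) (hn : 0 < n) :
    #(coreLift k n I) = #I := by
  refine card_nbij (fun v => (v.1 : ℕ)) (fun v hv => (mem_coreLift.mp hv).1) ?_ ?_
  · intro x hx y hy hxy
    rw [mem_coe, mem_coreLift] at hx hy
    exact Prod.ext (Fin.val_injective hxy) (Fin.val_injective (hx.2.trans hy.2.symm))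
  · intro a ha
    exact ⟨(⟨a, mem_range.mp (hI ha)⟩, ⟨0, hn⟩), mem_coreLift.mpr ⟨ha, rfl⟩, rfl⟩

lemma isCore_of_mem_coreLift {I : Finset ℕ} (hI : I ⊆ range P) {v : Fin k × Fin n}
    (hv : v ∈ coreLift k n I) : IsCore P v :=
  ⟨mem_range.mp (hI (mem_coreLift.mp hv).1), (mem_coreLift.mp hv).2⟩

lemma isNClique_coreLift {I : Finset ℕ} {m : ℕ} (hPk : P ≤ k) (hn : 0 < n)
    (hI : I ⊆ range P) (hIH : H.IsNClique m I) :
    (coreGraph k n P H M).IsNClique m (coreLift k n I) := by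
  refine ⟨fun x hx y hy hxy => ?_, ?_⟩
  · rw [mem_coe] at hx hy
    have hxy' : (x.1 : ℕ) ≠ y.1 := fun h => hxy (Prod.ext (Fin.val_injective h)
      (Fin.val_injective ((mem_coreLift.mp hx).2.trans (mem_coreLift.mp hy).2.symm)))
    have hH : H.Adj x.1 y.1 :=
      hIH.isClique (mem_coreLift.mp hx).1 (mem_coreLift.mp hy).1 hxy'
    exact ⟨fun h => hxy' (congrArg Fin.val h), fun _ _ => hH,
      fun h => absurd (isCore_of_mem_coreLift hI hx) h⟩
  · rw [card_coreLift (hI.trans (range_subset_range.mpr hPk)) hn, hIH.card_eq]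

lemma adj_of_mem_coreLift {I : Finset ℕ} (hI : I ⊆ range P) {v x : Fin k × Fin n}
    (hv : ¬IsCore P v) (hvI : (v.1 : ℕ) ∉ I) (hx : x ∈ coreLift k n I) :
    (coreGraph k n P H M).Adj v x := by
  refine (coreGraph_adj_of_isCore_of_not_isCore (isCore_of_mem_coreLift hI hx) hv ?_).symm
  intro h
  rw [← h] at hvI
  exact hvI (mem_coreLift.mp hx).1

lemma not_cliqueFree_sup_edge_of_isCore (hPk : P ≤ k) (hsk : s + 3 ≤ k) (hn : 2 ≤ n)
    (hHsat : ∀ a < P, ∀ b < P, a ≠ b → ¬H.Adj a b →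
      ∃ I ⊆ range P, H.IsNClique s I ∧ ∀ c ∈ I, H.Adj a c ∧ H.Adj b c)
    {u w : Fin k × Fin n} (hu : IsCore P u) (hw : IsCore P w) (huw : u.1 ≠ w.1)
    (hnadj : ¬(coreGraph k n P H M).Adj u w) :
    ¬(coreGraph k n P H M ⊔ edge u w).CliqueFree (s + 3) := by
  have hab : ¬H.Adj u.1 w.1 := fun h => hnadj ⟨huw, fun _ _ => h, fun h' => absurd hu h'⟩
  obtain ⟨I, hIP, hI, hIab⟩ := hHsat _ hu.1 _ hw.1 (fun h => huw (Fin.val_injective h)) hab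
  obtain ⟨f, hfk, hf⟩ : ∃ f ∈ range k, f ∉ insert (u.1 : ℕ) (insert (w.1 : ℕ) I) := by
    refine exists_mem_notMem_of_card_lt_card ?_
    calc #(insert (u.1 : ℕ) (insert (w.1 : ℕ) I)) ≤ #I + 2 :=
          (card_insert_le _ _).trans (Nat.succ_le_succ (card_insert_le _ _))
      _ < #(range k) := by rw [hI.card_eq, card_range]; omega
  simp only [mem_insert, not_or] at hf
  set z : Fin k × Fin n := (⟨f, mem_range.mp hfk⟩, ⟨1, hn⟩)
  have hz : ¬IsCore P z := fun h => absurd h.2 one_ne_zero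
  have hT : (coreGraph k n P H M).IsNClique (s + 1) (insert z (coreLift k n I)) :=
    (isNClique_coreLift hPk (by omega) hIP hI).insert fun _ => adj_of_mem_coreLift hIP hz hf.2.2
  have hadj {v : Fin k × Fin n} (hv : IsCore P v) (hvf : (v.1 : ℕ) ≠ f)
      (hvI : ∀ c ∈ I, H.Adj v.1 c) : ∀ x ∈ insert z (coreLift k n I),
        (coreGraph k n P H M).Adj v x := by
    intro x hx
    rcases mem_insert.mp hx with rfl | hx
    · exact coreGraph_adj_of_isCore_of_not_isCore hv hz fun h => hvf (congrArg Fin.val h)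
    · have hvx := hvI _ (mem_coreLift.mp hx).1
      exact ⟨fun h => hvx.ne (congrArg Fin.val h), fun _ _ => hvx,
        fun h => absurd hv h⟩
  have huw' : u ≠ w := fun h => huw (congrArg Prod.fst h)
  exact (isNClique_sup_edge_insert_insert huw' hT
    (hadj hu (Ne.symm hf.1) fun c hc => (hIab c hc).1)
    (hadj hw (Ne.symm hf.2.1) fun c hc => (hIab c hc).2)).not_cliqueFree

lemma not_cliqueFree_sup_edge_of_not_isCore (hPk : P ≤ k) (hn : 0 < n)
    (hMsat : ∀ i j, i ≠ j → ¬M.Adj i j →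
      ∃ I ⊆ range P, H.IsNClique (s + 1) I ∧ i ∉ I ∧ j ∉ I)
    {u w : Fin k × Fin n} (hu : ¬IsCore P u) (hw : ¬IsCore P w) (huw : u.1 ≠ w.1)
    (hnadj : ¬(coreGraph k n P H M).Adj u w) :
    ¬(coreGraph k n P H M ⊔ edge u w).CliqueFree (s + 3) := by
  have hij : ¬M.Adj u.1 w.1 := fun h => hnadj ⟨huw, fun h' => absurd h' hu, fun _ _ => h⟩
  obtain ⟨I, hIP, hI, hiI, hjI⟩ := hMsat _ _ (fun h => huw (Fin.val_injective h)) hij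
  exact (isNClique_sup_edge_insert_insert (fun h => huw (congrArg Prod.fst h))
    (isNClique_coreLift hPk hn hIP hI) (fun _ => adj_of_mem_coreLift hIP hu hiI)
    (fun _ => adj_of_mem_coreLift hIP hw hjI)).not_cliqueFree

theorem isSatIn_coreGraph (hPk : P ≤ k) (hsk : s + 3 ≤ k) (hn : 2 ≤ n)
    (hH : ∀ I ⊆ range P, H.IsClique (I : Set ℕ) → #I ≤ s + 1)
    (hHM : ∀ i j, M.Adj i j →
      ∀ I ⊆ range P, H.IsClique (I : Set ℕ) → i ∉ I → j ∉ I → #I ≤ s)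
    (hM : M.CliqueFree 3)
    (hHsat : ∀ a < P, ∀ b < P, a ≠ b → ¬H.Adj a b →
      ∃ I ⊆ range P, H.IsNClique s I ∧ ∀ c ∈ I, H.Adj a c ∧ H.Adj b c)
    (hMsat : ∀ i j, i ≠ j → ¬M.Adj i j →
      ∃ I ⊆ range P, H.IsNClique (s + 1) I ∧ i ∉ I ∧ j ∉ I) :
    IsSatIn (s + 3) (coreGraph k n P H M) (multipartite k n) := by
  refine ⟨coreGraph_le_multipartite, coreGraph_cliqueFree hH hHM hM, fun u w huw hnadj => ?_⟩
  by_cases hu : IsCore P u <;> by_cases hw : IsCore P w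
  · exact not_cliqueFree_sup_edge_of_isCore hPk hsk hn hHsat hu hw huw hnadj
  · exact absurd (coreGraph_adj_of_isCore_of_not_isCore hu hw huw) hnadj
  · exact absurd (coreGraph_adj_of_isCore_of_not_isCore hw hu (Ne.symm huw)).symm hnadj
  · exact not_cliqueFree_sup_edge_of_not_isCore hPk (by omega) hMsat hu hw huw hnadj

section RowCounts

variable {v : Fin k × Fin n} {j : Fin n}

lemma card_row_of_isCore_of_eq_zero [DecidableRel H.Adj] (hPk : P ≤ k) (hv : IsCore P v)
    (hj : (j : ℕ) = 0) :
    #{i | (coreGraph k n P H M).Adj v (i, j)} = #{i ∈ range P | H.Adj v.1 i} + (k - P) := by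
  rw [card_filter_fin_eq_add (fun i => i ≠ v.1 ∧ (i < P → H.Adj v.1 i)) (fun i => ?_) hPk]
  · congr 1
    · refine congrArg card (filter_congr fun i hi => ⟨fun h => h.2 (mem_range.mp hi),
        fun h => ⟨h.ne.symm, fun _ => h⟩⟩)
    · rw [filter_true_of_mem fun i hi => ?_, Nat.card_Ico]
      have := hv.1
      have := (mem_Ico.mp hi).1
      exact ⟨by omega, by omega⟩
  · simp [coreGraph_adj, IsCore, hv.1, hv.2, hj, Fin.ext_iff, eq_comm]

lemma card_row_of_isCore_of_ne_zero (hv : IsCore P v) (hj : (j : ℕ) ≠ 0) :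
    #{i | (coreGraph k n P H M).Adj v (i, j)} = k - 1 := by
  rw [filter_congr fun i _ => show _ ↔ v.1 ≠ i by
      simp [coreGraph_adj, IsCore, hv.1, hv.2, hj],
    filter_ne _ _, card_erase_of_mem (mem_univ _), card_univ, Fintype.card_fin]

lemma card_row_of_not_isCore_of_eq_zero (hPk : P ≤ k) (hMP : ∀ i j, M.Adj i j → j < P)
    (hv : ¬IsCore P v) (hj : (j : ℕ) = 0) :
    #{i | (coreGraph k n P H M).Adj v (i, j)} = #{i ∈ range P | i ≠ (v.1 : ℕ)} := by
  rw [card_filter_fin_eq_add (fun i => i < P ∧ i ≠ v.1) (fun i => ?_) hPk]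
  · rw [filter_false_of_mem fun i hi h => (mem_Ico.mp hi).1.not_gt h.1, card_empty, add_zero]
    exact congrArg card (filter_congr fun i hi => and_iff_right (mem_range.mp hi))
  · constructor
    · intro h
      by_cases hi : (i : ℕ) < P
      · exact ⟨hi, fun e => h.1 (Fin.val_injective e.symm)⟩
      · exact absurd (hMP _ _ (h.2.2 hv fun hw => hi hw.1)) hi
    · rintro ⟨hi, hne⟩
      exact (coreGraph_adj_of_isCore_of_not_isCore ⟨hi, hj⟩ hv
        fun e => hne (congrArg Fin.val e)).symm

lemma card_row_of_not_isCore_of_ne_zero [DecidableRel M.Adj] (hPk : P ≤ k)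
    (hMP : ∀ i j, M.Adj i j → j < P) (hv : ¬IsCore P v) (hj : (j : ℕ) ≠ 0) :
    #{i | (coreGraph k n P H M).Adj v (i, j)} = #{i ∈ range P | M.Adj v.1 i} := by
  rw [card_filter_fin_eq_add (fun i => M.Adj v.1 i) (fun i => ?_) hPk]
  · rw [filter_false_of_mem fun i hi h => (mem_Ico.mp hi).1.not_gt (hMP _ _ h), card_empty,
      add_zero]
  · have hw : ¬IsCore P (i, j) := fun h => hj h.2
    exact ⟨fun h => h.2.2 hv hw, fun h => ⟨fun e => h.ne (congrArg Fin.val e),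
      fun hv' => absurd hv' hv, fun _ _ => h⟩⟩

lemma degree_of_isCore [DecidableRel H.Adj] (hPk : P ≤ k) (hn : 0 < n) (hv : IsCore P v) :
    (coreGraph k n P H M).degree v =
      #{i ∈ range P | H.Adj v.1 i} + (k - P) + (n - 1) * (k - 1) := by
  rw [degree_eq_sum_card_row, sum_eq_card_mul_add_card_mul (fun j : Fin n => (j : ℕ) = 0)
    (fun j hj => card_row_of_isCore_of_eq_zero hPk hv hj)
    (fun j hj => card_row_of_isCore_of_ne_zero hv hj),
    card_filter_val_eq_zero hn, card_filter_val_ne_zero hn, one_mul]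

lemma degree_of_not_isCore [DecidableRel M.Adj] (hPk : P ≤ k) (hn : 0 < n)
    (hMP : ∀ i j, M.Adj i j → j < P) (hv : ¬IsCore P v) :
    (coreGraph k n P H M).degree v =
      #{i ∈ range P | i ≠ (v.1 : ℕ)} + (n - 1) * #{i ∈ range P | M.Adj v.1 i} := by
  rw [degree_eq_sum_card_row, sum_eq_card_mul_add_card_mul (fun j : Fin n => (j : ℕ) = 0)
    (fun j hj => card_row_of_not_isCore_of_eq_zero hPk hMP hv hj)
    (fun j hj => card_row_of_not_isCore_of_ne_zero hPk hMP hv hj),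
    card_filter_val_eq_zero hn, card_filter_val_ne_zero hn, one_mul]

end RowCounts

theorem two_mul_card_edgeFinset_coreGraph [DecidableRel H.Adj] [DecidableRel M.Adj]
    (hPk : P ≤ k) (hn : 0 < n) (hMP : ∀ i j, M.Adj i j → j < P) {g c : ℕ}
    (hg : ∀ a < P, #{i ∈ range P | H.Adj a i} = g)
    (hc : ∀ a < P, #{i ∈ range P | M.Adj a i} = c) :
    2 * #(coreGraph k n P H M).edgeFinset =
      P * (g + (k - P) + (n - 1) * (k - 1)) + (k - P) * P +
        (n - 1) * (P * (P - 1 + (n - 1) * c) + (k - P) * P) := by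
  have hcore (v : Fin k × Fin n) (hv : IsCore P v) :
      (coreGraph k n P H M).degree v = g + (k - P) + (n - 1) * (k - 1) := by
    rw [degree_of_isCore hPk hn hv, hg _ hv.1]
  have hlow (v : Fin k × Fin n) (hv1 : (v.1 : ℕ) < P) (hv2 : (v.2 : ℕ) ≠ 0) :
      (coreGraph k n P H M).degree v = P - 1 + (n - 1) * c := by
    rw [degree_of_not_isCore hPk hn hMP fun h => hv2 h.2, hc _ hv1, filter_ne' _ _,
      card_erase_of_mem (mem_range.mpr hv1), card_range]
  have hhigh (v : Fin k × Fin n) (hv : ¬(v.1 : ℕ) < P) :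
      (coreGraph k n P H M).degree v = P := by
    rw [degree_of_not_isCore hPk hn hMP fun h => hv h.1,
      filter_true_of_mem fun i hi => (lt_of_lt_of_le (mem_range.mp hi) (not_lt.mp hv)).ne,
      filter_false_of_mem fun i _ h => hv (hMP _ _ h.symm), card_range, card_empty, mul_zero,
      add_zero]
  rw [← sum_degrees_eq_twice_card_edges, Fintype.sum_prod_type_right,
    sum_eq_card_mul_add_card_mul (fun j : Fin n => (j : ℕ) = 0)
      (fun j hj => sum_eq_card_mul_add_card_mul (fun i : Fin k => (i : ℕ) < P)
        (fun i hi => hcore (i, j) ⟨hi, hj⟩) (fun i hi => hhigh (i, j) hi))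
      (fun j hj => sum_eq_card_mul_add_card_mul (fun i : Fin k => (i : ℕ) < P)
        (fun i hi => hlow (i, j) hi hj) (fun i hi => hhigh (i, j) hi)),
    card_filter_val_eq_zero hn, card_filter_val_ne_zero hn, Fin.card_filter_val_lt,
    min_eq_right hPk, card_filter_val_not_lt hPk, one_mul]

section CocktailParty

def antipodalMatching (s : ℕ) : SimpleGraph ℕ :=
  fromRel fun a b => a < s + 1 ∧ b = a + (s + 1)

lemma antipodalMatching_adj {a b : ℕ} : (antipodalMatching s).Adj a b ↔
    a < s + 1 ∧ b = a + (s + 1) ∨ b < s + 1 ∧ a = b + (s + 1) := by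
  rw [antipodalMatching, fromRel_adj]
  omega

lemma antipodalMatching_cliqueFree : (antipodalMatching s).CliqueFree 3 := by
  intro T hT
  obtain ⟨x, y, z, hxy, hxz, hyz, rfl⟩ := card_eq_three.mp hT.card_eq
  have h1 := hT.isClique (by simp) (by simp) hxy
  have h2 := hT.isClique (by simp) (by simp) hxz
  have h3 := hT.isClique (by simp) (by simp) hyz
  rw [antipodalMatching_adj] at h1 h2 h3
  omega

def antipodalFold (s c : ℕ) : ℕ := if c < s + 1 then c else c - (s + 1)

lemma injOn_antipodalFold {I : Finset ℕ} (hI : I ⊆ range (2 * s + 2))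
    (hcl : (antipodalMatching s)ᶜ.IsClique (I : Set ℕ)) : Set.InjOn (antipodalFold s) I := by
  intro x hx y hy hxy
  by_contra hne
  have hadj := hcl hx hy hne
  have := mem_range.mp (hI hx)
  have := mem_range.mp (hI hy)
  rw [compl_adj, antipodalMatching_adj] at hadj
  unfold antipodalFold at hxy
  split_ifs at hxy <;> omega

lemma card_le_of_isClique_compl_antipodalMatching {I : Finset ℕ} (hI : I ⊆ range (2 * s + 2))
    (hcl : (antipodalMatching s)ᶜ.IsClique (I : Set ℕ)) : #I ≤ s + 1 := by
  refine (card_le_card_of_injOn _ (fun c hc => ?_) (injOn_antipodalFold hI hcl)).trans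
    (card_range (s + 1)).le
  have := mem_range.mp (hI hc)
  rw [coe_range, Set.mem_Iio, antipodalFold]
  split_ifs <;> omega

lemma card_le_of_isClique_compl_antipodalMatching_of_adj {i j : ℕ}
    (hij : (antipodalMatching s).Adj i j) {I : Finset ℕ} (hI : I ⊆ range (2 * s + 2))
    (hcl : (antipodalMatching s)ᶜ.IsClique (I : Set ℕ)) (hiI : i ∉ I) (hjI : j ∉ I) :
    #I ≤ s := by
  have hi := antipodalMatching_adj.mp hij
  have hfold : antipodalFold s i ∈ range (s + 1) := by
    rw [mem_range, antipodalFold]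
    split_ifs <;> omega
  refine (card_le_card_of_injOn _ (fun c hc => ?_) (injOn_antipodalFold hI hcl)).trans
    (by rw [card_erase_of_mem hfold, card_range, Nat.add_sub_cancel])
  have := mem_range.mp (hI hc)
  have hci : c ≠ i := fun h => hiI (h ▸ hc)
  have hcj : c ≠ j := fun h => hjI (h ▸ hc)
  rw [mem_coe, mem_erase, mem_range, antipodalFold, antipodalFold]
  split_ifs <;> omega

lemma exists_isNClique_compl_antipodalMatching_of_adj {a b : ℕ}
    (hab : (antipodalMatching s).Adj a b) :
    ∃ I ⊆ range (2 * s + 2), (antipodalMatching s)ᶜ.IsNClique s I ∧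
      ∀ c ∈ I, (antipodalMatching s)ᶜ.Adj a c ∧ (antipodalMatching s)ᶜ.Adj b c := by
  have hab := antipodalMatching_adj.mp hab
  refine ⟨(range (s + 1)).erase (antipodalFold s a), fun c hc => ?_, ⟨?_, ?_⟩,
    fun c hc => ?_⟩
  · have := mem_range.mp (mem_of_mem_erase hc)
    exact mem_range.mpr (by omega)
  · intro x hx y hy hxy
    have := mem_range.mp (mem_of_mem_erase hx)
    have := mem_range.mp (mem_of_mem_erase hy)
    rw [compl_adj, antipodalMatching_adj]
    omega
  · rw [card_erase_of_mem, card_range, Nat.add_sub_cancel]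
    rw [mem_range, antipodalFold]
    split_ifs <;> omega
  · rw [mem_erase, mem_range, antipodalFold] at hc
    simp only [compl_adj, antipodalMatching_adj]
    split_ifs at hc <;> omega

lemma exists_isNClique_compl_antipodalMatching_of_not_adj {i j : ℕ}
    (hnadj : ¬(antipodalMatching s).Adj i j) :
    ∃ I ⊆ range (2 * s + 2),
      (antipodalMatching s)ᶜ.IsNClique (s + 1) I ∧ i ∉ I ∧ j ∉ I := by
  rw [antipodalMatching_adj] at hnadj
  set pick : ℕ → ℕ := fun c => if c = i ∨ c = j then c + (s + 1) else c
  have hpick : Set.InjOn pick (range (s + 1)) := by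
    intro x hx y hy hxy
    rw [coe_range, Set.mem_Iio] at hx hy
    simp only [pick] at hxy
    split_ifs at hxy <;> omega
  refine ⟨(range (s + 1)).image pick, fun c hc => ?_, ⟨?_, ?_⟩, ?_, ?_⟩
  · obtain ⟨x, hx, rfl⟩ := mem_image.mp hc
    have := mem_range.mp hx
    rw [mem_range]
    simp only [pick]
    split_ifs <;> omega
  · simp only [coe_image, coe_range]
    rintro _ ⟨x, hx, rfl⟩ _ ⟨y, hy, rfl⟩ hxy
    rw [Set.mem_Iio] at hx hy
    simp only [pick, compl_adj, antipodalMatching_adj] at hxy ⊢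
    split_ifs at hxy ⊢ <;> omega
  · rw [card_image_of_injOn hpick, card_range]
  all_goals
    intro hc
    obtain ⟨x, hx, hxc⟩ := mem_image.mp hc
    have := mem_range.mp hx
    simp only [pick] at hxc
    split_ifs at hxc <;> omega

lemma card_filter_antipodalMatching_adj {a : ℕ} (ha : a < 2 * s + 2) :
    #{x ∈ range (2 * s + 2) | (antipodalMatching s).Adj a x} = 1 := by
  refine card_eq_one.mpr ⟨antipodalFold s a + if a < s + 1 then s + 1 else 0, ?_⟩
  ext x
  simp only [mem_filter, mem_range, antipodalMatching_adj, mem_singleton, antipodalFold]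
  split_ifs <;> omega

lemma card_filter_compl_antipodalMatching_adj {a : ℕ} (ha : a < 2 * s + 2) :
    #{x ∈ range (2 * s + 2) | (antipodalMatching s)ᶜ.Adj a x} = 2 * s := by
  rw [card_filter_compl_adj _ (mem_range.mpr ha), card_filter_antipodalMatching_adj ha,
    card_range]
  omega

def matchingCoreGraph (s k n : ℕ) : SimpleGraph (Fin k × Fin n) :=
  coreGraph k n (2 * s + 2) (antipodalMatching s)ᶜ (antipodalMatching s)

theorem isSatIn_matchingCoreGraph {k n : ℕ} (hk : 2 * s + 3 ≤ k) (hn : 2 ≤ n) :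
    IsSatIn (s + 3) (matchingCoreGraph s k n) (multipartite k n) :=
  isSatIn_coreGraph (by omega) (by omega) hn
    (fun _ hI hcl => card_le_of_isClique_compl_antipodalMatching hI hcl)
    (fun _ _ hij _ hI hcl hiI hjI =>
      card_le_of_isClique_compl_antipodalMatching_of_adj hij hI hcl hiI hjI)
    antipodalMatching_cliqueFree
    (fun _ _ _ _ hab hnadj =>
      exists_isNClique_compl_antipodalMatching_of_adj (not_not.mp fun h => hnadj ⟨hab, h⟩))
    (fun _ _ _ hnadj => exists_isNClique_compl_antipodalMatching_of_not_adj hnadj)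

theorem card_edgeFinset_matchingCoreGraph {k n : ℕ} (hk : 2 * s + 2 ≤ k) (hn : 1 ≤ n) :
    (#(matchingCoreGraph s k n).edgeFinset : ℤ) =
      (s + 1) * (2 * k * n + n ^ 2 - 4 * n - (2 * s + 1)) := by
  have h : 2 * #(matchingCoreGraph s k n).edgeFinset = _ :=
    two_mul_card_edgeFinset_coreGraph hk hn
      (fun _ _ h => by have := antipodalMatching_adj.mp h; omega)
      (fun _ ha => card_filter_compl_antipodalMatching_adj ha)
      (fun _ ha => card_filter_antipodalMatching_adj ha)
  zify [hk, hn, (by omega : 1 ≤ k), (by omega : 1 ≤ 2 * s + 2)] at h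
  linarith

end CocktailParty

section OddCycle

-- `(c + d) % m`, written so that `omega` can reason about it; correct only when `c + d < 2 * m`.
def modAdd (m c d : ℕ) : ℕ := if c + d < m then c + d else c + d - m

lemma modAdd_cases (m c d : ℕ) :
    modAdd m c d = c + d ∧ c + d < m ∨ modAdd m c d + m = c + d ∧ m ≤ c + d := by
  unfold modAdd
  split_ifs <;> omega

def oddCycle (s : ℕ) : SimpleGraph ℕ :=
  fromRel fun a b => b = a + 1 ∧ b < 2 * s + 3 ∨ a = 2 * s + 2 ∧ b = 0

lemma oddCycle_adj {a b : ℕ} : (oddCycle s).Adj a b ↔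
    b = a + 1 ∧ b < 2 * s + 3 ∨ a = b + 1 ∧ a < 2 * s + 3 ∨
      a = 2 * s + 2 ∧ b = 0 ∨ b = 2 * s + 2 ∧ a = 0 := by
  rw [oddCycle, fromRel_adj]
  omega

-- An independent set of the cycle is disjoint from its rotation by one step.
lemma card_le_of_isClique_compl_oddCycle {I : Finset ℕ} (hI : I ⊆ range (2 * s + 3))
    (hcl : (oddCycle s)ᶜ.IsClique (I : Set ℕ)) : #I ≤ s + 1 := by
  have hsucc {c : ℕ} (hc : c ∈ I) : modAdd (2 * s + 3) c 1 < 2 * s + 3 ∧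
      (oddCycle s).Adj c (modAdd (2 * s + 3) c 1) := by
    have := mem_range.mp (hI hc)
    have := modAdd_cases (2 * s + 3) c 1
    rw [oddCycle_adj]
    omega
  have hinj : Set.InjOn (modAdd (2 * s + 3) · 1) I := by
    intro x hx y hy hxy
    have := mem_range.mp (hI hx)
    have := mem_range.mp (hI hy)
    have := modAdd_cases (2 * s + 3) x 1
    have := modAdd_cases (2 * s + 3) y 1
    dsimp only at hxy
    omega
  have hdisj : Disjoint I (I.image (modAdd (2 * s + 3) · 1)) := by
    refine disjoint_left.mpr fun c hc hc' => ?_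
    obtain ⟨d, hd, rfl⟩ := mem_image.mp hc'
    exact (hcl hd hc (hsucc hd).2.ne).2 (hsucc hd).2
  have hsub : I ∪ I.image (modAdd (2 * s + 3) · 1) ⊆ range (2 * s + 3) := by
    refine union_subset hI fun c hc => ?_
    obtain ⟨d, hd, rfl⟩ := mem_image.mp hc
    exact mem_range.mpr (hsucc hd).1
  have := card_le_card hsub
  rw [card_union_of_disjoint hdisj, card_image_of_injOn hinj, card_range] at this
  omega

def alternatingArc (s r m : ℕ) : Finset ℕ :=
  (range m).image fun l => modAdd (2 * s + 3) r (2 * l)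

lemma mem_alternatingArc {r m c : ℕ} :
    c ∈ alternatingArc s r m ↔ ∃ l < m, modAdd (2 * s + 3) r (2 * l) = c := by
  simp [alternatingArc]

lemma alternatingArc_subset {r m : ℕ} (hr : r < 2 * s + 3) (hm : m ≤ s + 1) :
    alternatingArc s r m ⊆ range (2 * s + 3) := by
  intro c hc
  obtain ⟨l, hl, rfl⟩ := mem_alternatingArc.mp hc
  have := modAdd_cases (2 * s + 3) r (2 * l)
  rw [mem_range]
  omega

lemma isNClique_alternatingArc {r m : ℕ} (hr : r < 2 * s + 3) (hm : m ≤ s + 1) :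
    (oddCycle s)ᶜ.IsNClique m (alternatingArc s r m) := by
  refine ⟨?_, ?_⟩
  · intro x hx y hy hxy
    obtain ⟨l, hl, rfl⟩ := mem_alternatingArc.mp hx
    obtain ⟨l', hl', rfl⟩ := mem_alternatingArc.mp hy
    have := modAdd_cases (2 * s + 3) r (2 * l)
    have := modAdd_cases (2 * s + 3) r (2 * l')
    rw [compl_adj, oddCycle_adj]
    omega
  · rw [alternatingArc, card_image_of_injOn, card_range]
    intro l hl l' hl' h
    rw [coe_range, Set.mem_Iio] at hl hl'
    have := modAdd_cases (2 * s + 3) r (2 * l)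
    have := modAdd_cases (2 * s + 3) r (2 * l')
    dsimp only at h
    omega

lemma exists_isNClique_compl_oddCycle_of_adj {a b : ℕ} (hab : (oddCycle s).Adj a b) :
    ∃ I ⊆ range (2 * s + 3), (oddCycle s)ᶜ.IsNClique s I ∧
      ∀ c ∈ I, (oddCycle s)ᶜ.Adj a c ∧ (oddCycle s)ᶜ.Adj b c := by
  wlog h : b = modAdd (2 * s + 3) a 1 generalizing a b
  · have ha₁ := modAdd_cases (2 * s + 3) a 1
    have hb₁ := modAdd_cases (2 * s + 3) b 1
    obtain ⟨I, hI, hcl, hc⟩ := this hab.symm (by rw [oddCycle_adj] at hab; omega)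
    exact ⟨I, hI, hcl, fun c hc' => (hc c hc').symm⟩
  have ha : a < 2 * s + 3 := by
    rw [oddCycle_adj] at hab
    omega
  have h₃ := modAdd_cases (2 * s + 3) a 3
  have hr : modAdd (2 * s + 3) a 3 < 2 * s + 3 := by omega
  -- the vertices `a + 3, a + 5, …, a + 2s + 1` avoid `a - 1, a, a + 1, a + 2`
  refine ⟨_, alternatingArc_subset hr (by omega), isNClique_alternatingArc hr (by omega),
    fun c hc => ?_⟩
  obtain ⟨l, hl, rfl⟩ := mem_alternatingArc.mp hc
  have := modAdd_cases (2 * s + 3) a 1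
  have := modAdd_cases (2 * s + 3) (modAdd (2 * s + 3) a 3) (2 * l)
  simp only [compl_adj, oddCycle_adj]
  omega

lemma exists_isNClique_compl_oddCycle_avoiding (i j : ℕ) :
    ∃ I ⊆ range (2 * s + 3), (oddCycle s)ᶜ.IsNClique (s + 1) I ∧ i ∉ I ∧ j ∉ I := by
  have after {x : ℕ} (hx : x < 2 * s + 3) : modAdd (2 * s + 3) x 1 < 2 * s + 3 ∧
      x ∉ alternatingArc s (modAdd (2 * s + 3) x 1) (s + 1) := by
    have := modAdd_cases (2 * s + 3) x 1
    refine ⟨by omega, fun hx' => ?_⟩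
    obtain ⟨l, hl, hxl⟩ := mem_alternatingArc.mp hx'
    have := modAdd_cases (2 * s + 3) (modAdd (2 * s + 3) x 1) (2 * l)
    omega
  have outside {r x : ℕ} (hr : r < 2 * s + 3) (hx : ¬x < 2 * s + 3) :
      x ∉ alternatingArc s r (s + 1) := fun h =>
    hx (mem_range.mp (alternatingArc_subset hr le_rfl h))
  suffices
      ∃ r < 2 * s + 3, i ∉ alternatingArc s r (s + 1) ∧ j ∉ alternatingArc s r (s + 1) by
    obtain ⟨r, hr, hi, hj⟩ := this
    exact ⟨_, alternatingArc_subset hr le_rfl, isNClique_alternatingArc hr le_rfl, hi, hj⟩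
  by_cases hiP : i < 2 * s + 3
  · by_cases hj : j ∈ alternatingArc s (modAdd (2 * s + 3) i 1) (s + 1)
    · -- `j` lies at odd distance after `i`, so `i` lies at even distance after `j`
      obtain ⟨l₀, hl₀, hj⟩ := mem_alternatingArc.mp hj
      have := modAdd_cases (2 * s + 3) i 1
      have := modAdd_cases (2 * s + 3) (modAdd (2 * s + 3) i 1) (2 * l₀)
      have hjP : j < 2 * s + 3 := by omega
      refine ⟨_, (after hjP).1, fun hi => ?_, (after hjP).2⟩
      obtain ⟨l, hl, hi⟩ := mem_alternatingArc.mp hi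
      have := modAdd_cases (2 * s + 3) j 1
      have := modAdd_cases (2 * s + 3) (modAdd (2 * s + 3) j 1) (2 * l)
      omega
    · exact ⟨_, (after hiP).1, (after hiP).2, hj⟩
  · by_cases hjP : j < 2 * s + 3
    · exact ⟨_, (after hjP).1, outside (after hjP).1 hiP, (after hjP).2⟩
    · exact ⟨0, by omega, outside (by omega) hiP, outside (by omega) hjP⟩

lemma card_filter_oddCycle_adj {a : ℕ} (ha : a < 2 * s + 3) :
    #{x ∈ range (2 * s + 3) | (oddCycle s).Adj a x} = 2 := by
  have h₁ := modAdd_cases (2 * s + 3) a 1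
  have h₂ := modAdd_cases (2 * s + 3) a (2 * s + 2)
  refine card_eq_two.mpr ⟨modAdd (2 * s + 3) a 1, modAdd (2 * s + 3) a (2 * s + 2),
    by omega, ?_⟩
  ext x
  simp only [mem_filter, mem_range, oddCycle_adj, mem_insert, mem_singleton]
  omega

lemma card_filter_compl_oddCycle_adj {a : ℕ} (ha : a < 2 * s + 3) :
    #{x ∈ range (2 * s + 3) | (oddCycle s)ᶜ.Adj a x} = 2 * s := by
  rw [card_filter_compl_adj _ (mem_range.mpr ha), card_filter_oddCycle_adj ha, card_range]
  omega

def oddCycleCoreGraph (s k n : ℕ) : SimpleGraph (Fin k × Fin n) :=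
  coreGraph k n (2 * s + 3) (oddCycle s)ᶜ ⊥

theorem isSatIn_oddCycleCoreGraph {k n : ℕ} (hk : 2 * s + 3 ≤ k) (hn : 2 ≤ n) :
    IsSatIn (s + 3) (oddCycleCoreGraph s k n) (multipartite k n) :=
  isSatIn_coreGraph (M := ⊥) hk (by omega) hn
    (fun _ hI hcl => card_le_of_isClique_compl_oddCycle hI hcl)
    (fun _ _ h => h.elim) (cliqueFree_bot (by omega))
    (fun _ _ _ _ hab hnadj =>
      exists_isNClique_compl_oddCycle_of_adj (not_not.mp fun h => hnadj ⟨hab, h⟩))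
    (fun i j _ _ => exists_isNClique_compl_oddCycle_avoiding i j)

theorem card_edgeFinset_oddCycleCoreGraph {k n : ℕ} (hk : 2 * s + 3 ≤ k) (hn : 1 ≤ n) :
    (#(oddCycleCoreGraph s k n).edgeFinset : ℤ) = (2 * s + 3) * (k * n - n - (s + 2)) := by
  have h : 2 * #(oddCycleCoreGraph s k n).edgeFinset = _ :=
    two_mul_card_edgeFinset_coreGraph (M := ⊥) (c := 0) hk hn (fun _ _ h => h.elim)
      (fun _ ha => card_filter_compl_oddCycle_adj ha) (fun _ _ => by simp)
  zify [hk, hn, (by omega : 1 ≤ k), (by omega : 1 ≤ 2 * s + 3)] at h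
  linarith

end OddCycle

end MultipartiteSat

open MultipartiteSat

/-- For `t ≥ 3` and `k ≥ 2t − 3`, `K_k^n` has a `K_t`-saturated subgraph with at most
`min{(2t−4)kn + (t−2)n² − 2(2t−4)n − C(2t−4,2), (2t−3)kn − (2t−3)n − (2t−3)(t−1)}`
edges, i.e. `sat(K_t, K_k^n)` is at most this quantity. -/
theorem stmt_14 (t k n : ℕ) (ht : 3 ≤ t) (hk : 2 * t - 3 ≤ k) (hn : 2 ≤ n) :
    ∃ J : SimpleGraph (Fin k × Fin n), IsSatIn t J (multipartite k n) ∧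
      (J.edgeSet.ncard : ℤ) ≤
        min ((2 * (t : ℤ) - 4) * (k * n) + ((t : ℤ) - 2) * n ^ 2 -
              2 * (2 * (t : ℤ) - 4) * n - ((2 * t - 4).choose 2 : ℤ))
          ((2 * (t : ℤ) - 3) * (k * n) - (2 * (t : ℤ) - 3) * n -
              (2 * (t : ℤ) - 3) * ((t : ℤ) - 1)) := by
  obtain ⟨s, rfl⟩ : ∃ s, t = s + 3 := ⟨t - 3, by omega⟩
  have hk' : 2 * s + 3 ≤ k := by omega
  have hchoose : (2 * (s + 3) - 4).choose 2 = (s + 1) * (2 * s + 1) := by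
    rw [show 2 * (s + 3) - 4 = 2 * s + 2 by omega, Nat.choose_two_right,
      show 2 * s + 2 - 1 = 2 * s + 1 by omega]
    exact Nat.div_eq_of_eq_mul_left two_pos (by ring)
  have hncard (J : SimpleGraph (Fin k × Fin n)) : J.edgeSet.ncard = #J.edgeFinset := by
    rw [← coe_edgeFinset, Set.ncard_coe_finset]
  have hA := card_edgeFinset_matchingCoreGraph (s := s) (k := k) (n := n) (by omega) (by omega)
  have hB := card_edgeFinset_oddCycleCoreGraph (s := s) (k := k) (n := n) hk' (by omega)
  rw [hchoose]
  push_cast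
  rcases le_total (#(matchingCoreGraph s k n).edgeFinset : ℤ)
    #(oddCycleCoreGraph s k n).edgeFinset with h | h
  · refine ⟨_, isSatIn_matchingCoreGraph hk' hn, ?_⟩
    rw [hncard]
    exact le_min (by linarith) (by linarith)
  · refine ⟨_, isSatIn_oddCycleCoreGraph hk' hn, ?_⟩
    rw [hncard]
    exact le_min (by linarith) (by linarith)
end

section
/- Let t ≥ 4. For every real ε > 0 there exists N such that for all k ≥ t and all n ≥ 2 with nk ≥ N, sat(K_t, K_k^n) ≤ (3(t−2) + ε)·nk; that is, sat(K_t, K_k^n) ≤ 3(t−2)nk + o(nk). -/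
open SimpleGraph

/-!
Place `3(t-2)` special vertices in `t-2` layers of three, and join two vertices of different
parts unless both are non-special or both lie in the same layer. Counting the non-special
vertices as one more layer, two vertices are adjacent exactly when they differ both in part and
in layer, so a clique has at most `t-1` vertices; and every edge meets a special vertex, so there
are at most `3(t-2)nk` edges.

A missing edge `uw` between different parts joins two vertices of a common layer `c`, and adding
it creates a `K_t` as soon as the other `t-2` layers have representatives in distinct parts,
avoiding the parts of `u` and `w`. If each layer occupies a window of three consecutive parts,
the windows starting at distinct places, such representatives are found by taking in the window
starting at `x` the `x`-th part other than the two excluded ones (`skipTwo`): it lies in that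
window and increases strictly with `x`. A special representative of layer `c` is then swapped for a
non-special vertex of the same part. Two placements of windows suffice: overlapping windows
`{r, r+1, r+2}` in rows `0, 1, 2` when `n ≥ 4`, and disjoint windows in row `0` when
`k ≥ 3(t-2)`; the condition `nk ≥ 9t` forces one of the two.
-/

open Finset Function

section CrossGraph

variable {V ι Λ : Type*} {π : V → ι} {ℓ : V → Λ}

def crossGraph (π : V → ι) (ℓ : V → Λ) : SimpleGraph V where
  Adj x y := π x ≠ π y ∧ ℓ x ≠ ℓ y
  symm := ⟨fun _ _ h => ⟨h.1.symm, h.2.symm⟩⟩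
  loopless := ⟨fun _ h => h.1 rfl⟩

@[simp]
theorem crossGraph_adj {x y : V} : (crossGraph π ℓ).Adj x y ↔ π x ≠ π y ∧ ℓ x ≠ ℓ y := Iff.rfl

theorem crossGraph_cliqueFree [Fintype Λ] {n : ℕ} (hn : Fintype.card Λ < n) :
    (crossGraph π ℓ).CliqueFree n := by
  intro s hs
  have : #s ≤ #(univ : Finset Λ) :=
    card_le_card_of_injOn ℓ (fun _ _ => mem_coe.2 (mem_univ _)) fun _ hx _ hy hxy =>
      by_contra fun hne => (crossGraph_adj.1 (hs.isClique hx hy hne)).2 hxy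
  rw [hs.card_eq, card_univ] at this
  omega

theorem crossGraph_isNClique_image {α : Type*} [Fintype α] [DecidableEq V] {f : α → V}
    (hπ : Injective (π ∘ f)) (hℓ : Injective (ℓ ∘ f)) :
    (crossGraph π ℓ).IsNClique (Fintype.card α) (univ.image f) := by
  refine ⟨?_, card_image_of_injective _ hπ.of_comp⟩
  simp only [coe_image, coe_univ, Set.image_univ]
  rintro _ ⟨a, rfl⟩ _ ⟨b, rfl⟩ hab
  have hab : a ≠ b := fun h => hab (h ▸ rfl)
  exact crossGraph_adj.2 ⟨hπ.ne hab, hℓ.ne hab⟩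

theorem SimpleGraph.IsNClique.not_cliqueFree_sup_edge [DecidableEq V] {G : SimpleGraph V}
    {s : Finset V} {n : ℕ} (hs : G.IsNClique n s) {u w : V} (huw : u ≠ w)
    (hu : ∀ x ∈ s, G.Adj u x) (hw : ∀ x ∈ s, G.Adj w x) :
    ¬ (G ⊔ edge u w).CliqueFree (n + 2) := by
  have hws := (hs.mono (le_sup_left (b := edge u w))).insert fun x hx => Or.inl (hw x hx)
  refine fun h => h (insert u (insert w s)) (hws.insert fun x hx => ?_)
  rcases mem_insert.1 hx with rfl | hx
  · exact Or.inr ((edge_adj ..).2 ⟨Or.inl ⟨rfl, rfl⟩, huw⟩)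
  · exact Or.inl (hu x hx)

theorem isSatIn_crossGraph {α : Type*} [Fintype α] [Fintype Λ] {G : SimpleGraph V}
    (hG : ∀ u w, G.Adj u w ↔ π u ≠ π w) (hΛ : Fintype.card Λ ≤ Fintype.card α + 1)
    (htr : ∀ (c : Λ) (i j : ι), i ≠ j → ∃ f : α → V, Injective (π ∘ f) ∧ Injective (ℓ ∘ f) ∧
      ∀ a, π (f a) ≠ i ∧ π (f a) ≠ j ∧ ℓ (f a) ≠ c) :
    IsSatIn (Fintype.card α + 2) (crossGraph π ℓ) G := by
  classical
  refine ⟨fun u w h => (hG u w).2 (crossGraph_adj.1 h).1, crossGraph_cliqueFree (by omega),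
    fun u w huw hnadj => ?_⟩
  have hπ := (hG u w).1 huw
  have hℓ : ℓ u = ℓ w := not_not.1 fun h => hnadj (crossGraph_adj.2 ⟨hπ, h⟩)
  obtain ⟨f, hfπ, hfℓ, hf⟩ := htr (ℓ u) (π u) (π w) hπ
  refine (crossGraph_isNClique_image hfπ hfℓ).not_cliqueFree_sup_edge (ne_of_apply_ne π hπ)
    ?_ ?_ <;> simp only [mem_image, mem_univ, true_and] <;> rintro _ ⟨a, rfl⟩
  · exact crossGraph_adj.2 ⟨(hf a).1.symm, (hf a).2.2.symm⟩
  · exact crossGraph_adj.2 ⟨(hf a).2.1.symm, hℓ ▸ (hf a).2.2.symm⟩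

theorem SimpleGraph.ncard_edgeSet_le_of_forall_adj [Fintype V] [DecidableEq V]
    (G : SimpleGraph V) (S : Finset V) (hS : ∀ x y, G.Adj x y → x ∈ S ∨ y ∈ S) :
    G.edgeSet.ncard ≤ #S * Fintype.card V := by
  have hsub : G.edgeSet ⊆ ((S ×ˢ univ).image fun p : V × V => s(p.1, p.2) : Finset (Sym2 V)) := by
    intro e he
    induction e using Sym2.ind with
    | h x y =>
      simp only [coe_image, coe_product, coe_univ, Set.mem_image, Set.mem_prod, Set.mem_univ,
        and_true, Prod.exists]
      rcases hS x y he with hx | hy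
      · exact ⟨x, y, hx, rfl⟩
      · exact ⟨y, x, hy, Sym2.eq_swap⟩
  calc G.edgeSet.ncard ≤ #((S ×ˢ univ).image fun p : V × V => s(p.1, p.2)) := by
        rw [← Set.ncard_coe_finset]; exact Set.ncard_le_ncard hsub
    _ ≤ #(S ×ˢ univ) := card_image_le
    _ = #S * Fintype.card V := by rw [card_product, card_univ]

end CrossGraph

section HomeLayer

variable {V ι L β : Type*} {π : V → ι} {home : L × β → V}

noncomputable def homeLayer (home : L × β → V) (x : V) : Option L :=
  (partialInv home x).map Prod.fst

theorem homeLayer_apply (hhome : Injective home) (p : L × β) :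
    homeLayer home (home p) = some p.1 := by
  simp [homeLayer, partialInv_left hhome]

theorem homeLayer_of_notMem_range {x : V} (hx : x ∉ Set.range home) : homeLayer home x = none := by
  classical
  simp only [homeLayer, partialInv, Option.map_eq_none_iff, dite_eq_right_iff, reduceCtorEq]
  exact fun h => hx h

theorem isSatIn_crossGraph_homeLayer [Fintype L] {G : SimpleGraph V}
    (hG : ∀ u w, G.Adj u w ↔ π u ≠ π w) (hhome : Injective home)
    (htr : ∀ i j : ι, i ≠ j → ∃ σ : L → β, Injective (fun r => π (home (r, σ r))) ∧
      ∀ r, π (home (r, σ r)) ≠ i ∧ π (home (r, σ r)) ≠ j)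
    (hfree : ∀ q : ι, ∃ x, π x = q ∧ x ∉ Set.range home) :
    IsSatIn (Fintype.card L + 2) (crossGraph π (homeLayer home)) G := by
  classical
  choose free hfreeπ hfree using hfree
  refine isSatIn_crossGraph hG (Fintype.card_option).le fun c i j hij => ?_
  obtain ⟨σ, hσinj, hσ⟩ := htr i j hij
  -- layer `c` is represented by a vertex outside the range of `home`, in the same part
  let f : L → V := fun r => if c = some r then free (π (home (r, σ r))) else home (r, σ r)
  have hfπ : ∀ r, π (f r) = π (home (r, σ r)) := fun r => by
    simp only [f]; split_ifs <;> simp [hfreeπ]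
  have hfℓ : ∀ r, homeLayer home (f r) = if c = some r then none else some r := fun r => by
    simp only [f]; split_ifs
    · exact homeLayer_of_notMem_range (hfree _)
    · exact homeLayer_apply hhome _
  refine ⟨f, fun r r' h => hσinj (by simpa [hfπ] using h), fun r r' h => ?_, fun r => ?_⟩
  · simp only [comp_apply, hfℓ] at h
    split_ifs at h <;> simp_all
  · rw [hfπ, hfℓ]
    exact ⟨(hσ r).1, (hσ r).2, by split_ifs with hc <;> simp [hc, eq_comm]⟩

theorem ncard_edgeSet_crossGraph_homeLayer_le [Fintype V] [Fintype L] [Fintype β]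
    (home : L × β → V) :
    (crossGraph π (homeLayer home)).edgeSet.ncard ≤
      Fintype.card L * Fintype.card β * Fintype.card V := by
  classical
  calc (crossGraph π (homeLayer home)).edgeSet.ncard
        ≤ #(univ.image home) * Fintype.card V := by
        refine ncard_edgeSet_le_of_forall_adj _ _ fun x y h => ?_
        by_contra! hxy
        simp only [mem_image, mem_univ, true_and] at hxy
        exact (crossGraph_adj.1 h).2 <| by
          rw [homeLayer_of_notMem_range hxy.1, homeLayer_of_notMem_range hxy.2]
    _ ≤ Fintype.card L * Fintype.card β * Fintype.card V := by
        rw [← Fintype.card_prod]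
        exact Nat.mul_le_mul_right _ card_image_le

end HomeLayer

section Windows

/-- For `a < b`, `skipTwo a b x` is the `x`-th natural number (counting from `0`) other than
`a` and `b`. -/
def skipTwo (a b x : ℕ) : ℕ := x + (if a ≤ x then 1 else 0) + (if b ≤ x + 1 then 1 else 0)

theorem skipTwo_strictMono (a b : ℕ) : StrictMono (skipTwo a b) := fun x y h => by
  unfold skipTwo; split_ifs <;> omega

theorem skipTwo_ne {a b : ℕ} (hab : a < b) (x : ℕ) : skipTwo a b x ≠ a ∧ skipTwo a b x ≠ b := by
  unfold skipTwo; split_ifs <;> omega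

theorem skipTwo_lt_add_three (a b x : ℕ) : skipTwo a b x < x + 3 := by
  unfold skipTwo; split_ifs <;> omega

theorem le_skipTwo (a b x : ℕ) : x ≤ skipTwo a b x := by
  unfold skipTwo; omega

theorem exists_injective_window_pick {L : Type*} {q : L → ℕ} (hq : Injective q) {i j : ℕ}
    (hij : i ≠ j) :
    ∃ σ : L → Fin 3, Injective (fun r => q r + σ r) ∧ ∀ r, q r + σ r ≠ i ∧ q r + σ r ≠ j := by
  set a := min i j
  set b := max i j
  have hab : a < b := by omega
  have hσ : ∀ r, skipTwo a b (q r) - q r < 3 := fun r => by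
    have := skipTwo_lt_add_three a b (q r); omega
  have hpick : ∀ r, q r + (⟨_, hσ r⟩ : Fin 3) = skipTwo a b (q r) := fun r => by
    have := le_skipTwo a b (q r); simp only; omega
  refine ⟨fun r => ⟨_, hσ r⟩, ?_, fun r => ?_⟩
  · intro r r' h
    simp only [hpick] at h
    exact hq ((skipTwo_strictMono a b).injective h)
  · have := skipTwo_ne hab (q r)
    rw [hpick]; omega

variable {m k n : ℕ} {q : Fin m → ℕ} {row : Fin 3 → Fin n}

def windowHome (q : Fin m → ℕ) (hq : ∀ r, q r + 2 < k) (row : Fin 3 → Fin n) :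
    Fin m × Fin 3 → Fin k × Fin n :=
  fun p => (⟨q p.1 + p.2, by have := hq p.1; omega⟩, row p.2)

theorem isSatIn_windowHome (hq : ∀ r, q r + 2 < k) (hqinj : Injective q)
    (hinj : Injective (windowHome q hq row)) (hfree : ∃ j₀, ∀ s, row s ≠ j₀) :
    IsSatIn (m + 2) (crossGraph Prod.fst (homeLayer (windowHome q hq row))) (multipartite k n) := by
  obtain ⟨j₀, hj₀⟩ := hfree
  have htr (i j : Fin k) (hij : i ≠ j) : ∃ σ : Fin m → Fin 3,
      Injective (fun r => (windowHome q hq row (r, σ r)).1) ∧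
      ∀ r, (windowHome q hq row (r, σ r)).1 ≠ i ∧ (windowHome q hq row (r, σ r)).1 ≠ j := by
    obtain ⟨σ, hσinj, hσ⟩ := exists_injective_window_pick hqinj (Fin.val_injective.ne hij)
    exact ⟨σ, fun r r' h => hσinj (congrArg Fin.val h),
      fun r => ⟨fun h => (hσ r).1 (congrArg Fin.val h), fun h => (hσ r).2 (congrArg Fin.val h)⟩⟩
  simpa using isSatIn_crossGraph_homeLayer (G := multipartite k n) (fun _ _ => Iff.rfl) hinj htr
    fun i => ⟨(i, j₀), rfl, fun ⟨p, hp⟩ => hj₀ p.2 (congrArg Prod.snd hp)⟩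

theorem exists_isSatIn_multipartite (hk : m + 2 ≤ k) (hn : 2 ≤ n) (hregime : 4 ≤ n ∨ 3 * m ≤ k) :
    ∃ J : SimpleGraph (Fin k × Fin n), IsSatIn (m + 2) J (multipartite k n) ∧
      J.edgeSet.ncard ≤ 3 * m * (n * k) := by
  have hcard (q hq row) := ncard_edgeSet_crossGraph_homeLayer_le (π := Prod.fst)
    (windowHome (k := k) (m := m) (n := n) q hq row)
  simp only [Fintype.card_fin, Fintype.card_prod] at hcard
  rcases hregime with hn4 | hk3
  · -- the windows `{r, r + 1, r + 2}` overlap; layer `r` meets its `s`-th part in row `s`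
    refine ⟨_, isSatIn_windowHome (q := Fin.val) (row := Fin.castLE (by omega)) (by omega)
      Fin.val_injective ?_ ⟨⟨3, hn4⟩, fun s => by simp [Fin.ext_iff]; omega⟩, ?_⟩
    · rintro ⟨r, s⟩ ⟨r', s'⟩ h
      simp only [windowHome, Prod.mk.injEq, Fin.ext_iff, Fin.val_castLE] at h
      simp only [Prod.mk.injEq, Fin.ext_iff]
      omega
    · exact (hcard _ _ _).trans_eq (by ring)
  · -- the windows `{3r, 3r + 1, 3r + 2}` are disjoint and all special vertices lie in row `0`
    refine ⟨_, isSatIn_windowHome (q := fun r => 3 * r) (row := fun _ => ⟨0, by omega⟩)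
      (by omega) (fun r r' h => by ext; simpa using h) ?_ ⟨⟨1, hn⟩, fun s => by simp⟩, ?_⟩
    · rintro ⟨r, s⟩ ⟨r', s'⟩ h
      simp only [windowHome, Prod.mk.injEq, Fin.ext_iff, and_true] at h
      simp only [Prod.mk.injEq, Fin.ext_iff]
      omega
    · exact (hcard _ _ _).trans_eq (by ring)

end Windows

/-- For `t ≥ 4` and `k ≥ t`, `sat(K_t, K_k^n) ≤ 3(t−2)nk + o(nk)`: for every `ε > 0`
there is `N` such that whenever `nk ≥ N`, some `K_t`-saturated subgraph of `K_k^n`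
has at most `(3(t−2) + ε)·nk` edges. -/
theorem stmt_15 (t : ℕ) (ht : 4 ≤ t) :
    ∀ ε : ℝ, 0 < ε → ∃ N : ℕ, ∀ k n : ℕ, t ≤ k → 2 ≤ n → N ≤ n * k →
      ∃ J : SimpleGraph (Fin k × Fin n), IsSatIn t J (multipartite k n) ∧
        (J.edgeSet.ncard : ℝ) ≤ (3 * ((t : ℝ) - 2) + ε) * (n * k) := by
  intro ε hε
  refine ⟨9 * t, fun k n hk hn hN => ?_⟩
  have hregime : 4 ≤ n ∨ 3 * (t - 2) ≤ k := by
    by_contra! h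
    have : n * k ≤ 3 * k := Nat.mul_le_mul_right k (by omega)
    omega
  obtain ⟨J, hsat, hcard⟩ := exists_isSatIn_multipartite (by omega) hn hregime
  rw [Nat.sub_add_cancel (by omega : 2 ≤ t)] at hsat
  refine ⟨J, hsat, ?_⟩
  calc (J.edgeSet.ncard : ℝ) ≤ ((3 * (t - 2) * (n * k) : ℕ) : ℝ) := by exact_mod_cast hcard
    _ = 3 * ((t : ℝ) - 2) * (n * k) := by push_cast [Nat.cast_sub (by omega : 2 ≤ t)]; ring
    _ ≤ (3 * ((t : ℝ) - 2) + ε) * (n * k) := by gcongr; linarith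
end

section
/- Let t ≥ 6 be even. For every real ε > 0 there exists N such that for all k ≥ 3(t−2) and all n ≥ 2 with nk ≥ N, sat(K_t, K_k^n) ≤ ((t^2 + t − 6)/2 + ε)·nk; that is, sat(K_t, K_k^n) ≤ (1/2)(t^2 + t − 6)nk + o(nk). -/
/-!
The hubs are one vertex in each of the first `3m` parts, `m = t - 2`, coloured by the residue of
their part modulo `m`. Joining hubs of distinct colours, and every hub to every non-hub in another
part, gives a graph whose cliques have at most one non-hub and at most one hub per colour, so it
is `K_t`-free, and whose edges all meet one of the `3m` hubs, so it has at most `3(t - 2)nk` edges.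
Adding a missing edge `uw` creates a `K_t`: since each colour occurs in three parts, a hub of every
colour avoids the parts of `u` and `w`, and these hubs complete the clique (when `u`, `w` are hubs
of the same colour, a non-hub in a part of that colour replaces the missing hub).
-/

open SimpleGraph

open Finset

namespace SimpleGraph

variable {V : Type*} {G : SimpleGraph V}

theorem IsVertexCover.ncard_edgeSet_le [Fintype V] {c : Finset V} (hc : G.IsVertexCover c) :
    G.edgeSet.ncard ≤ #c * Fintype.card V := by
  classical
  have hsub : G.edgeSet ⊆ ((c ×ˢ univ).image fun p => s(p.1, p.2) : Finset (Sym2 V)) := by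
    intro e he
    induction e using Sym2.ind with
    | _ a b =>
      simp only [coe_image, coe_product, coe_univ, Set.mem_image, Set.mem_prod, Set.mem_univ,
        and_true, Prod.exists]
      rcases hc he with ha | hb
      · exact ⟨a, b, ha, rfl⟩
      · exact ⟨b, a, hb, Sym2.eq_swap⟩
  calc G.edgeSet.ncard ≤ #((c ×ˢ univ).image fun p => s(p.1, p.2)) := by
        rw [← Set.ncard_coe_finset]; exact Set.ncard_le_ncard hsub
    _ ≤ #c * Fintype.card V := by
        simpa using card_image_le (s := c ×ˢ univ) (f := fun p : V × V => s(p.1, p.2))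

theorem IsVertexCover.cliqueFree_add_two {m : ℕ} {c : Set V} (hc : G.IsVertexCover c)
    (col : V → Fin m) (hcol : ∀ u w, u ∈ c → w ∈ c → G.Adj u w → col u ≠ col w) :
    G.CliqueFree (m + 2) := by
  classical
  rintro s ⟨hs, hcard⟩
  have hout : #(s.filter (· ∉ c)) ≤ 1 := by
    refine card_le_one.mpr fun a ha b hb => by_contra fun hab => ?_
    simp only [mem_filter] at ha hb
    rcases hc (hs ha.1 hb.1 hab) with h | h
    exacts [ha.2 h, hb.2 h]
  have hin : #(s.filter (· ∈ c)) ≤ m := by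
    simpa using card_le_card_of_injOn col (fun _ _ => mem_coe.2 (mem_univ _))
      fun a ha b hb hab => by_contra fun hne => by
        simp only [coe_filter, Set.mem_ofPred_eq] at ha hb
        exact hcol a b ha.2 hb.2 (hs ha.1 hb.1 hne) hab
  have := card_filter_add_card_filter_not (s := s) (· ∈ c)
  omega

end SimpleGraph

namespace MultipartiteSaturation

variable {m k n : ℕ}

def IsHub (m : ℕ) (v : Fin k × Fin n) : Prop :=
  (v.1 : ℕ) < 3 * m ∧ (v.2 : ℕ) = 0

def hubGraph (m k n : ℕ) : SimpleGraph (Fin k × Fin n) where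
  Adj u w := u.1 ≠ w.1 ∧ (IsHub m u ∨ IsHub m w) ∧
    (IsHub m u → IsHub m w → (u.1 : ℕ) % m ≠ (w.1 : ℕ) % m)
  symm := ⟨fun _ _ h => ⟨h.1.symm, h.2.1.symm, fun hw hu => (h.2.2 hu hw).symm⟩⟩
  loopless := ⟨fun _ h => h.1 rfl⟩

theorem hubGraph_le_multipartite : hubGraph m k n ≤ multipartite k n := fun _ _ h => h.1

theorem isVertexCover_hubGraph : (hubGraph m k n).IsVertexCover {v | IsHub m v} :=
  fun _ _ h => h.2.1

theorem cliqueFree_hubGraph (hm : 0 < m) : (hubGraph m k n).CliqueFree (m + 2) :=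
  isVertexCover_hubGraph.cliqueFree_add_two (fun v => ⟨(v.1 : ℕ) % m, Nat.mod_lt _ hm⟩)
    fun _ _ hu hw h => Fin.ne_of_val_ne (h.2.2 hu hw)

theorem ncard_edgeSet_hubGraph_le : (hubGraph m k n).edgeSet.ncard ≤ 3 * m * (k * n) := by
  classical
  set hubs : Finset (Fin k × Fin n) := univ.filter (IsHub m)
  have hcover : (hubGraph m k n).IsVertexCover hubs := by simpa [hubs] using isVertexCover_hubGraph
  have hcard : #hubs ≤ 3 * m := by
    simpa using card_le_card_of_injOn (fun v => (v.1 : ℕ)) (t := range (3 * m))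
      (fun v hv => by simp_all [hubs, IsHub])
      fun a ha b hb hab => by
        simp only [hubs, coe_filter, mem_univ, true_and, Set.mem_ofPred_eq, IsHub] at ha hb
        exact Prod.ext (Fin.ext hab) (Fin.ext (ha.2.trans hb.2.symm))
  calc (hubGraph m k n).edgeSet.ncard ≤ #hubs * Fintype.card (Fin k × Fin n) :=
        hcover.ncard_edgeSet_le
    _ ≤ 3 * m * (k * n) := by simpa using Nat.mul_le_mul_right _ hcard

theorem exists_part_avoiding (hk : 3 * m ≤ k) (i : Fin m) (a b : Fin k) :
    ∃ p : Fin k, (p : ℕ) < 3 * m ∧ (p : ℕ) % m = i ∧ p ≠ a ∧ p ≠ b := by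
  obtain ⟨q, hq, ha, hb⟩ : ∃ q < 3, q * m + i ≠ a ∧ q * m + i ≠ b := by
    by_contra! h
    have := h 0; have := h 1; have := h 2
    omega
  have hlt : q * m + i < 3 * m := by nlinarith [i.2]
  exact ⟨⟨q * m + i, by omega⟩, hlt, by simp [Nat.mod_eq_of_lt i.2],
    Fin.ne_of_val_ne ha, Fin.ne_of_val_ne hb⟩

theorem hubGraph_adj_hub (hn : 0 < n) {x : Fin k × Fin n} {p : Fin k} (hp : (p : ℕ) < 3 * m)
    (hxp : x.1 ≠ p) (hres : IsHub m x → (x.1 : ℕ) % m ≠ p % m) :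
    (hubGraph m k n).Adj x (p, ⟨0, hn⟩) :=
  ⟨hxp, Or.inr ⟨hp, rfl⟩, fun hx _ => hres hx⟩

theorem isNClique_hubs (hn : 0 < n) {pick : Fin m → Fin k} (hlt : ∀ i, (pick i : ℕ) < 3 * m)
    (hmod : ∀ i, (pick i : ℕ) % m = i) (R : Finset (Fin m)) :
    (hubGraph m k n).IsNClique #R (R.image fun i => (pick i, ⟨0, hn⟩)) := by
  have hres : ∀ {i j}, i ≠ j → ((pick i : ℕ) % m) ≠ (pick j : ℕ) % m := fun hij h =>
    hij (Fin.ext (by rw [← hmod, h, hmod]))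
  refine ⟨?_, card_image_of_injective _ fun i j h => by_contra fun hij => hres hij ?_⟩
  · simp only [coe_image, isClique_iff, Set.Pairwise, Set.mem_image, mem_coe]
    rintro _ ⟨i, -, rfl⟩ _ ⟨j, -, rfl⟩ hne
    have hij : i ≠ j := fun h => hne (h ▸ rfl)
    exact hubGraph_adj_hub hn (hlt j) (fun h => hres hij (h ▸ rfl)) fun _ => hres hij
  · simp only [Prod.mk.injEq] at h
    rw [h.1]

theorem not_adj_hubGraph_cases {u w : Fin k × Fin n} (huw : u.1 ≠ w.1)
    (h : ¬ (hubGraph m k n).Adj u w) :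
    (¬ IsHub m u ∧ ¬ IsHub m w) ∨ (IsHub m u ∧ IsHub m w ∧ (u.1 : ℕ) % m = (w.1 : ℕ) % m) := by
  simp only [hubGraph, not_and_or, not_or, Classical.not_imp, not_not] at h
  tauto

theorem not_cliqueFree_hubGraph_sup (hm : 0 < m) (hk : 3 * m ≤ k) (hn : 2 ≤ n)
    {u w : Fin k × Fin n} (huw : u.1 ≠ w.1) (hnadj : ¬ (hubGraph m k n).Adj u w) :
    ¬ (hubGraph m k n ⊔ fromEdgeSet {s(u, w)}).CliqueFree (m + 2) := by
  set J := hubGraph m k n ⊔ fromEdgeSet {s(u, w)}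
  have hJ : hubGraph m k n ≤ J := le_sup_left
  have hJuw : J.Adj u w := Or.inr ⟨rfl, fun h => huw (congrArg Prod.fst h)⟩
  choose pick hlt hmod hu hw using fun i => exists_part_avoiding hk i u.1 w.1
  have hn0 : 0 < n := by omega
  have hubs := fun R => (isNClique_hubs hn0 hlt hmod R).mono hJ
  rcases not_adj_hubGraph_cases huw hnadj with ⟨hu', hw'⟩ | ⟨hu', hw', hres⟩
  · have hwC : ∀ b ∈ univ.image fun i => (pick i, ⟨0, hn0⟩), J.Adj w b := by
      simp only [mem_image]
      rintro _ ⟨i, -, rfl⟩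
      exact hJ (hubGraph_adj_hub hn0 (hlt i) (hw i).symm (absurd · hw'))
    have huC : ∀ b ∈ insert w (univ.image fun i => (pick i, ⟨0, hn0⟩)), J.Adj u b := by
      simp only [mem_insert, mem_image]
      rintro _ (rfl | ⟨i, -, rfl⟩)
      exacts [hJuw, hJ (hubGraph_adj_hub hn0 (hlt i) (hu i).symm (absurd · hu'))]
    simpa using (((hubs univ).insert hwC).insert huC).not_cliqueFree
  · set i₀ : Fin m := ⟨(u.1 : ℕ) % m, Nat.mod_lt _ hm⟩
    set v : Fin k × Fin n := (pick i₀, ⟨1, hn⟩)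
    have hv' : ¬ IsHub m v := fun h => one_ne_zero h.2
    have hresC : ∀ {j}, j ≠ i₀ → (pick j : ℕ) % m ≠ i₀ := fun {j} hj h =>
      hj (Fin.ext (by rw [← hmod j, h]))
    have hvC : ∀ b ∈ (univ.erase i₀).image fun i => (pick i, ⟨0, hn0⟩), J.Adj v b := by
      simp only [mem_image, mem_erase]
      rintro _ ⟨j, ⟨hj, -⟩, rfl⟩
      refine hJ (hubGraph_adj_hub hn0 (hlt j) (fun h => hresC hj ?_) (absurd · hv'))
      rw [← h, hmod]
    have hwC : ∀ b ∈ insert v ((univ.erase i₀).image fun i => (pick i, ⟨0, hn0⟩)),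
        J.Adj w b := by
      simp only [mem_insert, mem_image, mem_erase]
      rintro _ (rfl | ⟨j, ⟨hj, -⟩, rfl⟩)
      · exact hJ ⟨(hw i₀).symm, Or.inl hw', fun _ h => absurd h hv'⟩
      · exact hJ (hubGraph_adj_hub hn0 (hlt j) (hw j).symm
          fun _ h => hresC hj (h.symm.trans hres.symm))
    have huC : ∀ b ∈ insert w (insert v ((univ.erase i₀).image fun i => (pick i, ⟨0, hn0⟩))),
        J.Adj u b := by
      simp only [mem_insert, mem_image, mem_erase]
      rintro _ (rfl | rfl | ⟨j, ⟨hj, -⟩, rfl⟩)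
      · exact hJuw
      · exact hJ ⟨(hu i₀).symm, Or.inl hu', fun _ h => absurd h hv'⟩
      · exact hJ (hubGraph_adj_hub hn0 (hlt j) (hu j).symm fun _ h => hresC hj h.symm)
    have := ((((hubs (univ.erase i₀)).insert hvC).insert hwC).insert huC).not_cliqueFree
    rwa [card_erase_of_mem (mem_univ _), card_univ, Fintype.card_fin,
      show m - 1 + 1 + 1 + 1 = m + 2 by omega] at this

theorem isSatIn_hubGraph (hm : 0 < m) (hk : 3 * m ≤ k) (hn : 2 ≤ n) :
    IsSatIn (m + 2) (hubGraph m k n) (multipartite k n) :=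
  ⟨hubGraph_le_multipartite, cliqueFree_hubGraph hm,
    fun _ _ huw hnadj => not_cliqueFree_hubGraph_sup hm hk hn huw hnadj⟩

end MultipartiteSaturation

open MultipartiteSaturation in
theorem stmt_16_general (t : ℕ) (ht : 6 ≤ t) :
    ∀ ε : ℝ, 0 < ε → ∃ N : ℕ, ∀ k n : ℕ, 3 * (t - 2) ≤ k → 2 ≤ n → N ≤ n * k →
      ∃ J : SimpleGraph (Fin k × Fin n), IsSatIn t J (multipartite k n) ∧
        (J.edgeSet.ncard : ℝ) ≤ (((t : ℝ) ^ 2 + t - 6) / 2 + ε) * (n * k) := by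
  intro ε hε
  obtain ⟨m, rfl⟩ : ∃ m, t = m + 2 := ⟨t - 2, by omega⟩
  refine ⟨0, fun k n hk hn _ =>
    ⟨hubGraph m k n, isSatIn_hubGraph (by omega) (by simpa using hk) hn, ?_⟩⟩
  have hedges : ((hubGraph m k n).edgeSet.ncard : ℝ) ≤ 3 * m * (n * k) := by
    exact_mod_cast ncard_edgeSet_hubGraph_le.trans_eq (by ring)
  -- the slack is `(t - 2)(t - 3)/2 = m(m - 1)/2`
  have hcoeff : (3 * m : ℝ) ≤ (((m + 2 : ℕ) : ℝ) ^ 2 + (m + 2 : ℕ) - 6) / 2 + ε := by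
    push_cast
    have hm : (1 : ℝ) ≤ m := by exact_mod_cast (by omega : 1 ≤ m)
    nlinarith [mul_nonneg (by positivity : (0 : ℝ) ≤ m) (sub_nonneg.2 hm)]
  exact hedges.trans (mul_le_mul_of_nonneg_right hcoeff (by positivity))

/-- For even `t ≥ 6` and `k ≥ 3(t−2)`, `sat(K_t, K_k^n) ≤ ½(t² + t − 6)nk + o(nk)`:
for every `ε > 0` there is `N` such that whenever `nk ≥ N`, some `K_t`-saturated
subgraph of `K_k^n` has at most `((t² + t − 6)/2 + ε)·nk` edges. -/
theorem stmt_16 (t : ℕ) (ht : 6 ≤ t) (heven : Even t) :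
    ∀ ε : ℝ, 0 < ε → ∃ N : ℕ, ∀ k n : ℕ, 3 * (t - 2) ≤ k → 2 ≤ n → N ≤ n * k →
      ∃ J : SimpleGraph (Fin k × Fin n), IsSatIn t J (multipartite k n) ∧
        (J.edgeSet.ncard : ℝ) ≤ (((t : ℝ) ^ 2 + t - 6) / 2 + ε) * (n * k) :=
  stmt_16_general t ht
end

section
/- For all k ≥ t ≥ 4 and n ≥ 2, there exists a K_t-saturated subgraph J of K_k^n and a set S of at most C(t, 2) = t(t−1)/2 vertices such that every edge of J has at least one endpoint in S; consequently sat(K_t, K_k^n) ≤ (t(t−1)/2)·kn. -/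
/-!
The saturated subgraph is a *dominator graph*: a set `D` of at most `t(t-1)/2` vertices carries a
colouring with `t - 2` colours, and an edge of `K_k^n` is kept iff it meets `D` and does not join
two vertices of `D` of the same colour. So `D` covers every edge, and a clique has at most one
vertex outside `D` and at most one vertex of each colour, hence at most `t - 1` vertices.

A missing edge `uw` creates a `K_t` once `u` and `w` have `t - 2` common neighbours forming a
clique. If `u, w ∉ D`, these are one vertex of each colour, in distinct parts avoiding those of
`u` and `w`; if `u, w ∈ D` share a colour `c`, one vertex of every other colour and one vertex
outside `D`. For `n ≤ 2`, `D` is the union of the parts `i ≤ t - 2`, part `i` coloured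
`min i (t - 3)`. For `n ≥ 3`, colour `c` is the diagonal `(c, 0), (c+1, 1), (c+2, 2)`: given two
parts, the `c`-th part avoiding both always carries colour `c`, and `|D| = 3(t - 2)`.
-/

open SimpleGraph

open Finset

namespace SimpleGraph

variable {V : Type*}

theorem not_cliqueFree_sup_edge_s17 {H : SimpleGraph V} {u w : V} {C : Finset V} (huw : u ≠ w)
    (hu : u ∉ C) (hw : w ∉ C) (hCu : H.IsClique (insert u (C : Set V)))
    (hCw : H.IsClique (insert w (C : Set V))) : ¬ (H ⊔ edge u w).CliqueFree (#C + 2) := by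
  classical
  refine fun h => h (insert u (insert w C)) ⟨?_, ?_⟩
  · rw [coe_insert, coe_insert, isClique_sup_edge_of_ne_iff huw,
      Set.insert_sdiff_self_of_notMem (by simpa [huw] using hu), Set.insert_comm,
      Set.insert_sdiff_self_of_notMem (by simpa [huw.symm] using hw)]
    exact ⟨hCw, hCu⟩
  · rw [card_insert_of_notMem (by simp [huw, hu]), card_insert_of_notMem hw]

theorem IsVertexCover.ncard_edgeSet_le_s17 [Fintype V] {H : SimpleGraph V} {S : Finset V}
    (hS : H.IsVertexCover S) : H.edgeSet.ncard ≤ #S * Fintype.card V := by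
  classical
  have hsub : H.edgeSet ⊆ ((S ×ˢ univ).image fun p : V × V => s(p.1, p.2) : Finset (Sym2 V)) := by
    intro e he
    induction e using Sym2.ind with
    | h x y =>
      rcases hS he with hx | hy
      · exact mem_image.2 ⟨(x, y), mem_product.2 ⟨hx, mem_univ _⟩, rfl⟩
      · exact mem_image.2 ⟨(y, x), mem_product.2 ⟨hy, mem_univ _⟩, Sym2.eq_swap⟩
  calc H.edgeSet.ncard ≤ #((S ×ˢ univ).image fun p : V × V => s(p.1, p.2)) := by
        rw [← Set.ncard_coe_finset]; exact Set.ncard_le_ncard hsub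
    _ ≤ #(S ×ˢ univ) := card_image_le
    _ = #S * Fintype.card V := by rw [card_product, card_univ]

variable (G : SimpleGraph V) (D : Finset V) (g : V → ℕ)

def dominatorGraph : SimpleGraph V where
  Adj u w := G.Adj u w ∧ (u ∈ D ∨ w ∈ D) ∧ ¬(u ∈ D ∧ w ∈ D ∧ g u = g w)
  symm := ⟨fun _ _ ⟨h, hD, hg⟩ => ⟨h.symm, hD.symm, fun ⟨hw, hu, he⟩ => hg ⟨hu, hw, he.symm⟩⟩⟩
  loopless := ⟨fun _ h => G.loopless.irrefl _ h.1⟩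

variable {G D g}

@[simp]
theorem dominatorGraph_adj {u w : V} : (dominatorGraph G D g).Adj u w ↔
    G.Adj u w ∧ (u ∈ D ∨ w ∈ D) ∧ ¬(u ∈ D ∧ w ∈ D ∧ g u = g w) := Iff.rfl

theorem dominatorGraph_le : dominatorGraph G D g ≤ G := fun _ _ h => h.1

theorem isVertexCover_dominatorGraph : (dominatorGraph G D g).IsVertexCover D :=
  fun _ _ h => h.2.1

theorem cliqueFree_dominatorGraph {c : ℕ} (hg : ∀ v ∈ D, g v < c) :
    (dominatorGraph G D g).CliqueFree (c + 2) := by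
  classical
  rintro K ⟨hK, hcard⟩
  have hout : #(K.filter (· ∉ D)) ≤ 1 := card_le_one.2 fun x hx y hy => by
    rw [mem_filter] at hx hy
    by_contra hxy
    exact (hK hx.1 hy.1 hxy).2.1.elim hx.2 hy.2
  have hin : #(K.filter (· ∈ D)) ≤ c := by
    refine (card_le_card_of_injOn g (t := range c) (fun x hx => ?_) fun x hx y hy hxy => ?_).trans
      (card_range c).le
    · exact mem_range.2 (hg x (mem_filter.1 hx).2)
    · rw [coe_filter] at hx hy
      by_contra hne
      exact (hK hx.1 hy.1 hne).2.2 ⟨hx.2, hy.2, hxy⟩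
  have := card_filter_add_card_filter_not (s := K) (· ∈ D)
  omega

theorem isClique_dominatorGraph {s : Set V} {v : V} (hv : v ∉ D) (hsD : s \ {v} ⊆ D)
    (hinj : Set.InjOn g (s \ {v})) (hG : G.IsClique s) : (dominatorGraph G D g).IsClique s := by
  intro x hx y hy hxy
  have hxD : x ∈ D → x ∈ s \ {v} := fun h => ⟨hx, by rintro rfl; exact hv h⟩
  have hyD : y ∈ D → y ∈ s \ {v} := fun h => ⟨hy, by rintro rfl; exact hv h⟩
  refine ⟨hG hx hy hxy, ?_, fun ⟨hx', hy', he⟩ => hxy (hinj (hxD hx') (hyD hy') he)⟩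
  by_cases hxv : x = v
  · exact .inr (hsD ⟨hy, hxv ▸ hxy.symm⟩)
  · exact .inl (hsD ⟨hx, hxv⟩)

theorem not_cliqueFree_sup_edge_of_notMem {u w : V} (huw : G.Adj u w) (hu : u ∉ D) (hw : w ∉ D)
    {C : Finset V} (hCD : C ⊆ D) (hinj : Set.InjOn g C) (hCu : G.IsClique (insert u (C : Set V)))
    (hCw : G.IsClique (insert w (C : Set V))) :
    ¬ (dominatorGraph G D g ⊔ edge u w).CliqueFree (#C + 2) := by
  have hJ : ∀ x ∉ D, G.IsClique (insert x (C : Set V)) →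
      (dominatorGraph G D g).IsClique (insert x (C : Set V)) := fun x hx hxC => by
    have hsdiff : insert x (C : Set V) \ {x} = C :=
      Set.insert_sdiff_self_of_notMem fun h => hx (hCD h)
    exact isClique_dominatorGraph hx (by rw [hsdiff]; exact hCD) (by rwa [hsdiff]) hxC
  exact not_cliqueFree_sup_edge_s17 (G.ne_of_adj huw) (fun h => hu (hCD h)) (fun h => hw (hCD h))
    (hJ u hu hCu) (hJ w hw hCw)

theorem not_cliqueFree_sup_edge_of_colour_eq {u w v : V} (huw : G.Adj u w) (hu : u ∈ D)
    (hw : w ∈ D) (hguw : g u = g w) (hv : v ∉ D) {C : Finset V} (hCD : C ⊆ D)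
    (hinj : Set.InjOn g C) (hgC : g u ∉ g '' C)
    (hCu : G.IsClique (insert u (insert v (C : Set V))))
    (hCw : G.IsClique (insert w (insert v (C : Set V)))) :
    ¬ (dominatorGraph G D g ⊔ edge u w).CliqueFree (#C + 3) := by
  classical
  have hvC : v ∉ C := fun h => hv (hCD h)
  have hxC : ∀ x ∈ D, g x = g u → x ∉ insert v C := fun x hx hxg h => by
    rcases mem_insert.1 h with rfl | h
    · exact hv hx
    · exact hgC ⟨x, h, hxg⟩
  have hJ : ∀ x ∈ D, g x = g u → G.IsClique (insert x (insert v (C : Set V))) →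
      (dominatorGraph G D g).IsClique (insert x (insert v (C : Set V))) := by
    intro x hx hxg hxvC
    have hxC' : x ∉ (C : Set V) := fun h => hxC x hx hxg (mem_insert_of_mem h)
    have hsdiff : insert x (insert v (C : Set V)) \ {v} = insert x (C : Set V) := by
      rw [Set.insert_sdiff_of_notMem _ (by simpa using ne_of_mem_of_not_mem hx hv),
        Set.insert_sdiff_self_of_notMem (by simpa using hvC)]
    refine isClique_dominatorGraph hv ?_ ?_ hxvC <;> rw [hsdiff]
    · exact Set.insert_subset hx hCD
    · exact (Set.injOn_insert hxC').2 ⟨hinj, hxg ▸ hgC⟩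
  have := not_cliqueFree_sup_edge_s17 (G.ne_of_adj huw) (hxC u hu rfl) (hxC w hw hguw.symm)
    (by rw [coe_insert]; exact hJ u hu rfl hCu) (by rw [coe_insert]; exact hJ w hw hguw.symm hCw)
  rwa [card_insert_of_notMem hvC] at this

theorem isSatIn_dominatorGraph {t : ℕ} (ht : 3 ≤ t) (hg : ∀ v ∈ D, g v < t - 2)
    (hout : ∀ u w, G.Adj u w → u ∉ D → w ∉ D → ∃ C : Finset V, #C = t - 2 ∧ C ⊆ D ∧
      Set.InjOn g C ∧ G.IsClique (insert u (C : Set V)) ∧ G.IsClique (insert w (C : Set V)))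
    (hin : ∀ u w, G.Adj u w → u ∈ D → w ∈ D → g u = g w → ∃ v ∉ D, ∃ C : Finset V,
      #C = t - 3 ∧ C ⊆ D ∧ Set.InjOn g C ∧ g u ∉ g '' C ∧
      G.IsClique (insert u (insert v (C : Set V))) ∧ G.IsClique (insert w (insert v (C : Set V)))) :
    IsSatIn t (dominatorGraph G D g) G := by
  refine ⟨dominatorGraph_le, ?_, fun u w huw hnadj => ?_⟩
  · simpa [show t - 2 + 2 = t by omega] using cliqueFree_dominatorGraph (G := G) hg
  have hsame : (u ∉ D ∧ w ∉ D) ∨ (u ∈ D ∧ w ∈ D ∧ g u = g w) := by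
    simp only [dominatorGraph_adj, not_and] at hnadj
    tauto
  rcases hsame with ⟨hu, hw⟩ | ⟨hu, hw, hguw⟩
  · obtain ⟨C, hcard, hCD, hinj, hCu, hCw⟩ := hout u w huw hu hw
    rw [show t = #C + 2 by omega]
    exact not_cliqueFree_sup_edge_of_notMem huw hu hw hCD hinj hCu hCw
  · obtain ⟨v, hv, C, hcard, hCD, hinj, hgC, hCu, hCw⟩ := hin u w huw hu hw hguw
    rw [show t = #C + 3 by omega]
    exact not_cliqueFree_sup_edge_of_colour_eq huw hu hw hguw hv hCD hinj hgC hCu hCw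

end SimpleGraph

section Multipartite

variable {k n : ℕ} {D : Finset (Fin k × Fin n)} {g : Fin k × Fin n → ℕ}

def HasColourIn (D : Finset (Fin k × Fin n)) (g : Fin k × Fin n → ℕ) (m p : ℕ) : Prop :=
  ∃ x ∈ D, g x = m ∧ (x.1 : ℕ) = p

def IsRainbowTransversal (D : Finset (Fin k × Fin n)) (g : Fin k × Fin n → ℕ) (M : Finset ℕ)
    (F : Set ℕ) (σ : ℕ → ℕ) : Prop :=
  Set.InjOn σ M ∧ ∀ m ∈ M, σ m ∉ F ∧ HasColourIn D g m (σ m)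

theorem IsRainbowTransversal.exists_clique {M : Finset ℕ} {F : Set ℕ} {σ : ℕ → ℕ}
    (h : IsRainbowTransversal D g M F σ) :
    ∃ C : Finset (Fin k × Fin n), #C = #M ∧ C ⊆ D ∧ Set.InjOn g C ∧ (∀ x ∈ C, g x ∈ M) ∧
      ∀ s : Set (Fin k × Fin n), (multipartite k n).IsClique s → (∀ y ∈ s, (y.1 : ℕ) ∈ F) →
        (multipartite k n).IsClique (s ∪ ↑C) := by
  classical
  obtain ⟨hσ, hM⟩ := h
  obtain ⟨C, hCD, hinj, himg⟩ := exists_subset_injOn_image_eq_of_surjOn (f := g)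
    (({x ∈ D | (x.1 : ℕ) = σ (g x)} : Finset _) : Set _) M fun m hm => by
      obtain ⟨-, x, hx, rfl, hxp⟩ := hM m hm
      exact ⟨x, by simp [hx, hxp], rfl⟩
  have hgM : ∀ x ∈ C, g x ∈ M := fun x hx => himg ▸ mem_image_of_mem g hx
  have hpart : ∀ x ∈ C, (x.1 : ℕ) = σ (g x) := fun x hx => (mem_filter.1 (hCD hx)).2
  refine ⟨C, by rw [← himg, card_image_of_injOn hinj], fun x hx => (mem_filter.1 (hCD hx)).1,
    hinj, hgM, fun s hs hsF => ?_⟩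
  rw [isClique_iff, Set.pairwise_union]
  refine ⟨hs, fun x hx y hy hxy hxy₁ => ?_, fun y hy x hx _ => ?_⟩
  · refine hxy (hinj hx hy (hσ (hgM x hx) (hgM y hy) ?_))
    rw [← hpart x hx, ← hpart y hy, hxy₁]
  · have : (y.1 : ℕ) ≠ x.1 := fun h => (hM _ (hgM x hx)).1 (hpart x hx ▸ h ▸ hsF y hy)
    exact ⟨fun h => this (congrArg Fin.val h), fun h => this (congrArg Fin.val h.symm)⟩

theorem isSatIn_dominatorGraph_multipartite {t : ℕ} (ht : 3 ≤ t) (hg : ∀ v ∈ D, g v < t - 2)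
    (hout : ∀ u w : Fin k × Fin n, u ∉ D → w ∉ D → (u.1 : ℕ) < w.1 →
      ∃ σ, IsRainbowTransversal D g (range (t - 2)) {(u.1 : ℕ), (w.1 : ℕ)} σ)
    (hin : ∀ u w : Fin k × Fin n, u ∈ D → w ∈ D → (u.1 : ℕ) < w.1 → g u = g w →
      ∃ v ∉ D, v.1 ≠ u.1 ∧ v.1 ≠ w.1 ∧ ∃ σ,
        IsRainbowTransversal D g ((range (t - 2)).erase (g u))
          {(u.1 : ℕ), (w.1 : ℕ), (v.1 : ℕ)} σ) :
    IsSatIn t (dominatorGraph (multipartite k n) D g) (multipartite k n) := by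
  refine isSatIn_dominatorGraph ht hg (fun u w huw hu hw => ?_) (fun u w huw hu hw hguw => ?_)
  · wlog hlt : (u.1 : ℕ) < w.1 generalizing u w
    · obtain ⟨C, h₁, h₂, h₃, h₄, h₅⟩ :=
        this w u huw.symm hw hu (lt_of_le_of_ne (not_lt.1 hlt) (Fin.val_ne_of_ne huw.symm))
      exact ⟨C, h₁, h₂, h₃, h₅, h₄⟩
    obtain ⟨σ, hσ⟩ := hout u w hu hw hlt
    obtain ⟨C, hcard, hCD, hinj, -, hcl⟩ := IsRainbowTransversal.exists_clique hσ
    refine ⟨C, by simpa using hcard, hCD, hinj, ?_, ?_⟩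
    · simpa using hcl {u} (isClique_singleton u) (by simp)
    · simpa using hcl {w} (isClique_singleton w) (by simp)
  · wlog hlt : (u.1 : ℕ) < w.1 generalizing u w
    · obtain ⟨v, hv, C, h₁, h₂, h₃, h₄, h₅, h₆⟩ := this w u huw.symm hw hu hguw.symm
        (lt_of_le_of_ne (not_lt.1 hlt) (Fin.val_ne_of_ne huw.symm))
      exact ⟨v, hv, C, h₁, h₂, h₃, hguw ▸ h₄, h₆, h₅⟩
    obtain ⟨v, hv, hvu, hvw, σ, hσ⟩ := hin u w hu hw hlt hguw
    obtain ⟨C, hcard, hCD, hinj, hgM, hcl⟩ := IsRainbowTransversal.exists_clique hσ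
    refine ⟨v, hv, C, ?_, hCD, hinj, fun ⟨x, hx, hgx⟩ => by simpa [hgx] using hgM x hx, ?_, ?_⟩
    · rw [hcard, card_erase_of_mem (mem_range.2 (hg u hu)), card_range]; omega
    · simpa only [Set.insert_union, Set.singleton_union] using
        hcl {u, v} (isClique_pair.2 fun _ => hvu.symm) (by simp)
    · simpa only [Set.insert_union, Set.singleton_union] using
        hcl {w, v} (isClique_pair.2 fun _ => hvw.symm) (by simp)

end Multipartite

section PartConstruction

variable {k n : ℕ} (t : ℕ)

def partDominators : Finset (Fin k × Fin n) := {v | (v.1 : ℕ) ≤ t - 2}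

def partColouring (v : Fin k × Fin n) : ℕ := min (v.1 : ℕ) (t - 3)

variable {t}

theorem mem_partDominators {v : Fin k × Fin n} : v ∈ partDominators t ↔ (v.1 : ℕ) ≤ t - 2 := by
  simp [partDominators]

theorem isRainbowTransversal_part (hk : t ≤ k) (s : Fin n) {M : Finset ℕ} {F : Set ℕ}
    (h : ∀ m ∈ M, m + 3 ≤ t ∧ m ∉ F) :
    IsRainbowTransversal (partDominators t : Finset (Fin k × Fin n)) (partColouring t) M F id :=
  ⟨Set.injOn_id _, fun m hm => by
    obtain ⟨h₁, h₂⟩ := h m hm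
    exact ⟨h₂, (⟨m, by omega⟩, s), mem_partDominators.2 (show m ≤ t - 2 by omega),
      show min m (t - 3) = m by omega, rfl⟩⟩

theorem isSatIn_partDominators (ht : 3 ≤ t) (hk : t ≤ k) :
    IsSatIn t (dominatorGraph (multipartite k n) (partDominators t) (partColouring t))
      (multipartite k n) := by
  refine isSatIn_dominatorGraph_multipartite ht (fun v _ => by simp only [partColouring]; omega)
    (fun u w hu hw _ => ⟨id, isRainbowTransversal_part hk u.2 fun m hm => ?_⟩)
    (fun u w hu hw hlt hguw => ?_)
  · rw [mem_partDominators] at hu hw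
    rw [mem_range] at hm
    simp only [Set.mem_insert_iff, Set.mem_singleton_iff]
    omega
  · rw [mem_partDominators] at hu hw
    simp only [partColouring] at hguw
    refine ⟨(⟨t - 1, by omega⟩, u.2), mem_partDominators.not.2 (show ¬t - 1 ≤ t - 2 by omega),
      Fin.ne_of_val_ne (show t - 1 ≠ u.1 by omega), Fin.ne_of_val_ne (show t - 1 ≠ w.1 by omega),
      id, isRainbowTransversal_part hk u.2 fun m hm => ?_⟩
    simp only [partColouring, mem_erase, mem_range, Set.mem_insert_iff, Set.mem_singleton_iff]
      at hm ⊢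
    omega

theorem card_partDominators_le (ht : 2 ≤ t) :
    #(partDominators t : Finset (Fin k × Fin n)) ≤ (t - 1) * n := by
  calc #(partDominators t : Finset (Fin k × Fin n))
      ≤ #(range (t - 1) ×ˢ (univ : Finset (Fin n))) :=
        card_le_card_of_injOn (fun v => ((v.1 : ℕ), v.2))
          (fun v hv => mem_product.2 ⟨mem_range.2
            (show (v.1 : ℕ) < t - 1 by have := mem_partDominators.1 hv; omega), mem_univ _⟩)
          (fun v _ w _ h => by
            simp only [Prod.mk.injEq] at h
            exact Prod.ext (Fin.ext h.1) h.2)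
    _ = (t - 1) * n := by simp

end PartConstruction

section DiagonalConstruction

variable {k n : ℕ} (t : ℕ)

def diagonalDominators : Finset (Fin k × Fin n) :=
  {v | (v.2 : ℕ) ≤ 2 ∧ (v.2 : ℕ) ≤ v.1 ∧ (v.1 : ℕ) ≤ v.2 + (t - 3)}

def diagonalColouring (v : Fin k × Fin n) : ℕ := (v.1 : ℕ) - v.2

variable {t}

theorem mem_diagonalDominators {v : Fin k × Fin n} : v ∈ diagonalDominators t ↔
    (v.2 : ℕ) ≤ 2 ∧ (v.2 : ℕ) ≤ v.1 ∧ (v.1 : ℕ) ≤ v.2 + (t - 3) := by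
  simp [diagonalDominators]

theorem isRainbowTransversal_diagonal (hk : t ≤ k) (hn : 3 ≤ n) {M : Finset ℕ} {F : Set ℕ}
    {σ : ℕ → ℕ} (hσ : Set.InjOn σ M)
    (h : ∀ m ∈ M, m + 3 ≤ t ∧ m ≤ σ m ∧ σ m ≤ m + 2 ∧ σ m ∉ F) :
    IsRainbowTransversal (diagonalDominators t : Finset (Fin k × Fin n)) diagonalColouring M F σ :=
  ⟨hσ, fun m hm => by
    obtain ⟨h₁, h₂, h₃, h₄⟩ := h m hm
    exact ⟨h₄, (⟨σ m, by omega⟩, ⟨σ m - m, by omega⟩), mem_diagonalDominators.2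
      (show σ m - m ≤ 2 ∧ σ m - m ≤ σ m ∧ σ m ≤ σ m - m + (t - 3) by omega),
      show σ m - (σ m - m) = m by omega, rfl⟩⟩

theorem exists_isRainbowTransversal_diagonal (hk : t ≤ k) (hn : 3 ≤ n) {a b : ℕ} (hab : a < b) :
    ∃ σ, IsRainbowTransversal (diagonalDominators t : Finset (Fin k × Fin n)) diagonalColouring
      (range (t - 2)) {a, b} σ := by
  -- colour `m` goes to the `m`-th part other than `a` and `b`
  refine ⟨fun m => if m < a then m else if m + 1 < b then m + 1 else m + 2,
    isRainbowTransversal_diagonal hk hn (fun m₁ _ m₂ _ h => ?_) fun m hm => ?_⟩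
  · split_ifs at h <;> omega
  · simp only [mem_range, Set.mem_insert_iff, Set.mem_singleton_iff] at hm ⊢
    split_ifs <;> omega

theorem exists_isRainbowTransversal_diagonal_of_colour_eq (ht : 3 ≤ t) (hk : t ≤ k)
    (hn : 3 ≤ n) {u w : Fin k × Fin n} (hu : u ∈ diagonalDominators t)
    (hw : w ∈ diagonalDominators t) (hlt : (u.1 : ℕ) < w.1)
    (hguw : diagonalColouring u = diagonalColouring w) :
    ∃ v ∉ (diagonalDominators t : Finset (Fin k × Fin n)), v.1 ≠ u.1 ∧ v.1 ≠ w.1 ∧ ∃ σ,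
      IsRainbowTransversal (diagonalDominators t : Finset (Fin k × Fin n)) diagonalColouring
        ((range (t - 2)).erase (diagonalColouring u)) {(u.1 : ℕ), (w.1 : ℕ), (v.1 : ℕ)} σ := by
  rw [mem_diagonalDominators] at hu hw
  simp only [diagonalColouring] at hguw ⊢
  rcases (show (u.2 : ℕ) = 0 ∨ (u.2 : ℕ) = 1 by omega) with hu₂ | hu₂
  · -- the last part is free, unless `w` lies in it and then part `t - 2` is free
    set p := if (w.1 : ℕ) + 1 < t then t - 1 else t - 2 with hp
    refine ⟨(⟨p, by split_ifs at hp <;> omega⟩, ⟨0, by omega⟩),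
      mem_diagonalDominators.not.2
        (show ¬(0 ≤ 2 ∧ 0 ≤ p ∧ p ≤ 0 + (t - 3)) by split_ifs at hp <;> omega),
      Fin.ne_of_val_ne (show p ≠ u.1 by split_ifs at hp <;> omega),
      Fin.ne_of_val_ne (show p ≠ w.1 by split_ifs at hp <;> omega),
      fun m => if m < w.1 then m else m + 1,
      isRainbowTransversal_diagonal hk hn (fun m₁ _ m₂ _ h => ?_) fun m hm => ?_⟩
    · split_ifs at h <;> omega
    · simp only [mem_erase, mem_range, Set.mem_insert_iff, Set.mem_singleton_iff] at hm ⊢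
      split_ifs at hp <;> split <;> omega
  · refine ⟨(⟨0, by omega⟩, ⟨1, by omega⟩),
      mem_diagonalDominators.not.2 (show ¬(1 ≤ 2 ∧ 1 ≤ 0 ∧ 0 ≤ 1 + (t - 3)) by omega),
      Fin.ne_of_val_ne (show (0 : ℕ) ≠ u.1 by omega),
      Fin.ne_of_val_ne (show (0 : ℕ) ≠ w.1 by omega),
      fun m => if m < u.1 then m + 1 else m + 2,
      isRainbowTransversal_diagonal hk hn (fun m₁ _ m₂ _ h => ?_) fun m hm => ?_⟩
    · split_ifs at h <;> omega
    · simp only [mem_erase, mem_range, Set.mem_insert_iff, Set.mem_singleton_iff] at hm ⊢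
      split <;> omega

theorem isSatIn_diagonalDominators (ht : 3 ≤ t) (hk : t ≤ k) (hn : 3 ≤ n) :
    IsSatIn t (dominatorGraph (multipartite k n) (diagonalDominators t) diagonalColouring)
      (multipartite k n) :=
  isSatIn_dominatorGraph_multipartite ht
    (fun v hv => by have := mem_diagonalDominators.1 hv; simp only [diagonalColouring]; omega)
    (fun _ _ _ _ hlt => exists_isRainbowTransversal_diagonal hk hn hlt)
    (fun _ _ hu hw hlt hguw =>
      exists_isRainbowTransversal_diagonal_of_colour_eq ht hk hn hu hw hlt hguw)

theorem card_diagonalDominators_le (ht : 3 ≤ t) :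
    #(diagonalDominators t : Finset (Fin k × Fin n)) ≤ (t - 2) * 3 := by
  calc #(diagonalDominators t : Finset (Fin k × Fin n)) ≤ #(range (t - 2) ×ˢ range 3) :=
        card_le_card_of_injOn (fun v => (diagonalColouring v, (v.2 : ℕ)))
          (fun v hv => by
            have := mem_diagonalDominators.1 hv
            exact mem_product.2 ⟨mem_range.2 (show (v.1 : ℕ) - v.2 < t - 2 by omega),
              mem_range.2 (show (v.2 : ℕ) < 3 by omega)⟩)
          (fun v hv w hw h => by
            have := mem_diagonalDominators.1 hv
            have := mem_diagonalDominators.1 hw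
            simp only [diagonalColouring, Prod.mk.injEq] at h
            exact Prod.ext (Fin.ext (by omega)) (Fin.ext h.2))
    _ = (t - 2) * 3 := by simp

end DiagonalConstruction

theorem stmt_17_general (t k n : ℕ) (ht : 4 ≤ t) (hk : t ≤ k) :
    ∃ (J : SimpleGraph (Fin k × Fin n)) (S : Finset (Fin k × Fin n)),
      IsSatIn t J (multipartite k n) ∧
      S.card ≤ t * (t - 1) / 2 ∧
      (∀ u w, J.Adj u w → u ∈ S ∨ w ∈ S) ∧
      J.edgeSet.ncard ≤ t * (t - 1) / 2 * (k * n) := by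
  obtain ⟨D, g, hsat, hD⟩ : ∃ (D : Finset (Fin k × Fin n)) (g : Fin k × Fin n → ℕ),
      IsSatIn t (dominatorGraph (multipartite k n) D g) (multipartite k n) ∧
        #D ≤ t * (t - 1) / 2 := by
    rcases le_or_gt n 2 with hn | hn
    · refine ⟨_, _, isSatIn_partDominators (by omega) hk,
        (card_partDominators_le (by omega)).trans ((Nat.le_div_iff_mul_le two_pos).2 ?_)⟩
      calc (t - 1) * n * 2 = (t - 1) * (2 * n) := by ring
        _ ≤ (t - 1) * t := Nat.mul_le_mul_left _ (by omega)
        _ = t * (t - 1) := by ring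
    · refine ⟨_, _, isSatIn_diagonalDominators (by omega) hk hn,
        (card_diagonalDominators_le (by omega)).trans ((Nat.le_div_iff_mul_le two_pos).2 ?_)⟩
      obtain ⟨s, rfl⟩ : ∃ s, t = s + 4 := ⟨t - 4, by omega⟩
      simp only [show s + 4 - 2 = s + 2 by omega, show s + 4 - 1 = s + 3 by omega]
      nlinarith
  refine ⟨_, D, hsat, hD, fun _ _ h => isVertexCover_dominatorGraph h, ?_⟩
  calc _ ≤ #D * Fintype.card (Fin k × Fin n) :=
        IsVertexCover.ncard_edgeSet_le_s17 isVertexCover_dominatorGraph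
    _ ≤ t * (t - 1) / 2 * (k * n) := by simpa using Nat.mul_le_mul_right _ hD

/-- For `k ≥ t ≥ 4`, `K_k^n` has a `K_t`-saturated subgraph `J` together with a set `S`
of at most `C(t,2) = t(t−1)/2` vertices covering every edge of `J`; consequently
`sat(K_t, K_k^n) ≤ (t(t−1)/2)·kn`. -/
theorem stmt_17 (t k n : ℕ) (ht : 4 ≤ t) (hk : t ≤ k) (hn : 2 ≤ n) :
    ∃ (J : SimpleGraph (Fin k × Fin n)) (S : Finset (Fin k × Fin n)),
      IsSatIn t J (multipartite k n) ∧
      S.card ≤ t * (t - 1) / 2 ∧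
      (∀ u w, J.Adj u w → u ∈ S ∨ w ∈ S) ∧
      J.edgeSet.ncard ≤ t * (t - 1) / 2 * (k * n) :=
  stmt_17_general t k n ht hk
end
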